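/- arXiv:2105.13629 — 10 statements merged into one kernel-verified Lean document; each statement's English description precedes it below -/
import Mathlib

section
/- Let N ≥ 1 be an integer, let 1 < p < q and θ > q be real numbers, let C₁, C₂ > 0, let V : ℝ^N → ℝ be continuous, let F : ℝ → ℝ be continuous with F(0) = 0 and F(s) ≥ C₁ s^θ − C₂ for all s ≥ 0, and let v : ℝ^N → ℝ be a continuously differentiable function with compact support such that v ≥ 0 everywhere and v is not identically zero. Then the function t ↦ (t^p/p) ∫_{ℝ^N} (‖∇v(x)‖^p + V(x)|v(x)|^p) dx + (t^q/q) ∫_{ℝ^N} (‖∇v(x)‖^q + V(x)|v(x)|^q) dx − ∫_{ℝ^N} F(t·v(x)) dx tends to −∞ as t → +∞. -/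
open Filter MeasureTheory
open scoped Topology

/-!
Along the ray `t ↦ t v` the first two terms grow like `t ^ p` and `t ^ q`, while the growth
condition on `F` gives `∫ F (t v) ≥ C₁ t ^ θ ∫ v ^ θ - C₂ |tsupport v|` with `∫ v ^ θ > 0`
(as `v ≥ 0`, `v ≠ 0` is continuous). Since `θ > q > p`, the term `-C₁ t ^ θ ∫ v ^ θ` wins.
-/

theorem tendsto_mul_rpow_sub_mul_rpow_atBot {a c p θ : ℝ} (hθ : 0 < θ) (hpθ : p < θ)
    (hc : 0 < c) : Tendsto (fun t : ℝ => a * t ^ p - c * t ^ θ) atTop atBot := by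
  have hfactor : ∀ᶠ t : ℝ in atTop, t ^ θ * (a * t ^ (p - θ) - c) = a * t ^ p - c * t ^ θ := by
    filter_upwards [eventually_gt_atTop 0] with t ht
    rw [mul_sub, mul_left_comm, ← Real.rpow_add ht, add_sub_cancel, mul_comm c]
  have hlower : Tendsto (fun t : ℝ => a * t ^ (p - θ) - c) atTop (𝓝 (-c)) := by
    simpa [neg_sub] using
      ((tendsto_rpow_neg_atTop (sub_pos.2 hpθ)).const_mul a).sub_const c
  exact ((tendsto_rpow_atTop hθ).atTop_mul_neg (neg_neg_of_pos hc) hlower).congr' hfactor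

section

variable {X : Type*} [TopologicalSpace X] [MeasurableSpace X] [OpensMeasurableSpace X]
  {μ : Measure X} [IsFiniteMeasureOnCompacts μ] {v : X → ℝ} {θ : ℝ}

theorem Continuous.integrable_rpow_of_hasCompactSupport (hθ : 0 < θ) (hv : Continuous v)
    (hvs : HasCompactSupport v) : Integrable (fun x => v x ^ θ) μ :=
  (hv.rpow_const fun _ => Or.inr hθ.le).integrable_of_hasCompactSupport
    (hvs.comp_left (g := (· ^ θ)) (Real.zero_rpow hθ.ne'))

theorem integral_rpow_pos [μ.IsOpenPosMeasure] (hθ : 0 < θ) (hv : Continuous v)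
    (hvs : HasCompactSupport v) (hv0 : ∀ x, 0 ≤ v x) (hvne : v ≠ 0) :
    0 < ∫ x, v x ^ θ ∂μ := by
  rw [integral_pos_iff_support_of_nonneg (fun x => Real.rpow_nonneg (hv0 x) θ)
    (hv.integrable_rpow_of_hasCompactSupport hθ hvs)]
  have hsupp : Function.support v ⊆ Function.support fun x => v x ^ θ := fun x hx =>
    (Real.rpow_pos_of_pos ((hv0 x).lt_of_ne' hx) θ).ne'
  have hne : (Function.support v).Nonempty := Function.support_nonempty_iff.2 hvne
  exact (hv.isOpen_support.measure_pos μ hne).trans_le (measure_mono hsupp)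

theorem le_integral_comp_mul_of_rpow_le {F : ℝ → ℝ} {C₁ C₂ t : ℝ} (hθ : 0 < θ)
    (hF : Continuous F) (hF0 : F 0 = 0) (hFlb : ∀ s, 0 ≤ s → C₁ * s ^ θ - C₂ ≤ F s)
    (hv : Continuous v) (hvs : HasCompactSupport v) (hv0 : ∀ x, 0 ≤ v x) (ht : 0 ≤ t) :
    C₁ * t ^ θ * (∫ x, v x ^ θ ∂μ) - C₂ * μ.real (tsupport v) ≤ ∫ x, F (t * v x) ∂μ := by
  set K := tsupport v
  have hK : MeasurableSet K := (isClosed_tsupport v).measurableSet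
  have hvθ := hv.integrable_rpow_of_hasCompactSupport (μ := μ) hθ hvs
  have hFtv : Integrable (fun x => F (t * v x)) μ :=
    (hF.comp (continuous_const.mul hv)).integrable_of_hasCompactSupport
      (hvs.comp_left (g := fun s => F (t * s)) (by simp [hF0]))
  calc C₁ * t ^ θ * (∫ x, v x ^ θ ∂μ) - C₂ * μ.real K
      = ∫ x in K, (C₁ * t ^ θ * v x ^ θ - C₂) ∂μ := by
        rw [integral_sub (hvθ.const_mul _).integrableOn
          (integrableOn_const hvs.measure_lt_top.ne), setIntegral_const, integral_const_mul,
          setIntegral_eq_integral_of_forall_compl_eq_zero, smul_eq_mul, mul_comm C₂]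
        intro x hx
        rw [image_eq_zero_of_notMem_tsupport hx, Real.zero_rpow hθ.ne']
    _ ≤ ∫ x in K, F (t * v x) ∂μ := by
        refine setIntegral_mono_on ((hvθ.const_mul _).integrableOn.sub
          (integrableOn_const hvs.measure_lt_top.ne)) hFtv.integrableOn hK fun x _ => ?_
        rw [mul_assoc, ← Real.mul_rpow ht (hv0 x)]
        exact hFlb _ (mul_nonneg ht (hv0 x))
    _ = ∫ x, F (t * v x) ∂μ := by
        refine setIntegral_eq_integral_of_forall_compl_eq_zero fun x hx => ?_
        rw [image_eq_zero_of_notMem_tsupport hx, mul_zero, hF0]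

end

theorem stmt3_general (N : ℕ) (p q θ C₁ C₂ : ℝ)
    (hp : 1 < p) (hpq : p < q) (hθ : q < θ) (hC₁ : 0 < C₁)
    (V : EuclideanSpace ℝ (Fin N) → ℝ)
    (F : ℝ → ℝ) (hF : Continuous F) (hF0 : F 0 = 0)
    (hFlb : ∀ s : ℝ, 0 ≤ s → C₁ * s ^ θ - C₂ ≤ F s)
    (v : EuclideanSpace ℝ (Fin N) → ℝ) (hv : ContDiff ℝ 1 v)
    (hvsupp : HasCompactSupport v) (hv0 : ∀ x, 0 ≤ v x) (hvne : v ≠ 0) :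
    Tendsto (fun t : ℝ =>
        (t ^ p / p) * (∫ x : EuclideanSpace ℝ (Fin N), (‖fderiv ℝ v x‖ ^ p + V x * |v x| ^ p))
      + (t ^ q / q) * (∫ x : EuclideanSpace ℝ (Fin N), (‖fderiv ℝ v x‖ ^ q + V x * |v x| ^ q))
      - ∫ x : EuclideanSpace ℝ (Fin N), F (t * v x)) atTop atBot := by
  generalize (∫ x, (‖fderiv ℝ v x‖ ^ p + V x * |v x| ^ p)) = Ip
  generalize (∫ x, (‖fderiv ℝ v x‖ ^ q + V x * |v x| ^ q)) = Iq
  have hθ0 : 0 < θ := by linarith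
  set c := ∫ x, v x ^ θ
  have hc : 0 < c := integral_rpow_pos hθ0 hv.continuous hvsupp hv0 hvne
  have hdom : Tendsto (fun t : ℝ => (Ip / p * t ^ p - C₁ * c / 2 * t ^ θ)
      + (Iq / q * t ^ q - C₁ * c / 2 * t ^ θ) + C₂ * volume.real (tsupport v)) atTop atBot :=
    tendsto_atBot_add_const_right _ _
      ((tendsto_mul_rpow_sub_mul_rpow_atBot hθ0 (by linarith) (by positivity)).atBot_add_atBot
        (tendsto_mul_rpow_sub_mul_rpow_atBot hθ0 hθ (by positivity)))
  refine tendsto_atBot_mono' _ ?_ hdom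
  filter_upwards [eventually_ge_atTop 0] with t ht
  have hF_lower := le_integral_comp_mul_of_rpow_le (μ := volume) hθ0 hF hF0 hFlb
    hv.continuous hvsupp hv0 ht
  linear_combination hF_lower

theorem stmt3 (N : ℕ) (hN : 1 ≤ N) (p q θ C₁ C₂ : ℝ)
    (hp : 1 < p) (hpq : p < q) (hθ : q < θ) (hC₁ : 0 < C₁) (hC₂ : 0 < C₂)
    (V : EuclideanSpace ℝ (Fin N) → ℝ) (hV : Continuous V)
    (F : ℝ → ℝ) (hF : Continuous F) (hF0 : F 0 = 0)
    (hFlb : ∀ s : ℝ, 0 ≤ s → C₁ * s ^ θ - C₂ ≤ F s)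
    (v : EuclideanSpace ℝ (Fin N) → ℝ) (hv : ContDiff ℝ 1 v)
    (hvsupp : HasCompactSupport v) (hv0 : ∀ x, 0 ≤ v x) (hvne : v ≠ 0) :
    Tendsto (fun t : ℝ =>
        (t ^ p / p) * (∫ x : EuclideanSpace ℝ (Fin N), (‖fderiv ℝ v x‖ ^ p + V x * |v x| ^ p))
      + (t ^ q / q) * (∫ x : EuclideanSpace ℝ (Fin N), (‖fderiv ℝ v x‖ ^ q + V x * |v x| ^ q))
      - ∫ x : EuclideanSpace ℝ (Fin N), F (t * v x)) atTop atBot :=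
  stmt3_general N p q θ C₁ C₂ hp hpq hθ hC₁ V F hF hF0 hFlb v hv hvsupp hv0 hvne
end

section
/- Let 1 < p < q < N with q* = Nq/(N−q), let r ∈ (q, q*), let V₀ > 0 and let V : ℝ^N → ℝ be continuous with V(x) ≥ V₀ for all x. Let f : ℝ → ℝ be continuous with lim_{t → 0} f(t)/|t|^{p-1} = 0 and lim_{|t| → ∞} f(t)/|t|^{r-1} = 0, and set F(t) = ∫₀^t f(τ) dτ. For a continuously differentiable compactly supported u : ℝ^N → ℝ and t ∈ {p, q} set ‖u‖_{V,t}^t = ∫_{ℝ^N} ‖∇u(x)‖^t dx + ∫_{ℝ^N} V(x)|u(x)|^t dx and I(u) = (1/p)‖u‖_{V,p}^p + (1/q)‖u‖_{V,q}^q − ∫_{ℝ^N} F(u(x)) dx. Then there exist α > 0 and ρ > 0 such that every continuously differentiable compactly supported u : ℝ^N → ℝ with ‖u‖_{V,p} + ‖u‖_{V,q} = ρ satisfies I(u) ≥ α. -/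
open Filter MeasureTheory
open scoped Topology

/-- `‖u‖_{V,t}^t = ∫ ‖∇u‖^t dx + ∫ V |u|^t dx`. -/
noncomputable def pNormPow (N : ℕ) (V : EuclideanSpace ℝ (Fin N) → ℝ) (t : ℝ)
    (u : EuclideanSpace ℝ (Fin N) → ℝ) : ℝ :=
  (∫ x : EuclideanSpace ℝ (Fin N), ‖fderiv ℝ u x‖ ^ t)
    + ∫ x : EuclideanSpace ℝ (Fin N), V x * |u x| ^ t

/-- `‖u‖_{V,t}`. -/
noncomputable def vNorm (N : ℕ) (V : EuclideanSpace ℝ (Fin N) → ℝ) (t : ℝ)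
    (u : EuclideanSpace ℝ (Fin N) → ℝ) : ℝ :=
  (pNormPow N V t u) ^ (1 / t)

/-!
The growth conditions on `f` give, for every `ε > 0`, a constant `C` with
`F(t) ≤ ε |t|^p + C |t|^r`. With `ε = V₀ / (2p)` the `p`-part of `∫ F(u)` is absorbed by half of
`(1/p) ‖u‖_{V,p}^p`, since `V ≥ V₀`. For the `r`-part, Hölder interpolation between `L^q` and
`L^{q*}` combined with the Gagliardo–Nirenberg–Sobolev inequality gives
`∫ |u|^r ≤ K ‖u‖_{V,q}^r`, which is at most `(1/(2q)) ‖u‖_{V,q}^q` as soon as `‖u‖_{V,q} ≤ ρ` with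
`ρ` small. What is left is `(1/(2p)) a^p + (1/(2q)) b^q` with `a + b = ρ ≤ 1`, and one of `a`, `b`
is at least `ρ/2`, so this is at least `(1/(2q)) (ρ/2)^q`.
-/

open scoped ENNReal

namespace Real

variable {f : ℝ → ℝ} {a b ε : ℝ}

lemma eq_zero_of_tendsto_div_abs_rpow (ha : 0 < a) (hf : ContinuousAt f 0)
    (h0 : Tendsto (fun t => f t / |t| ^ a) (𝓝[≠] 0) (𝓝 0)) : f 0 = 0 := by
  have habs : Tendsto (fun t : ℝ => |t| ^ a) (𝓝[≠] 0) (𝓝 0) := by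
    have := ((continuous_abs.rpow_const fun _ => Or.inr ha.le).tendsto 0).mono_left
      (nhdsWithin_le_nhds (s := {0}ᶜ))
    simpa [zero_rpow ha.ne'] using this
  have hf' : Tendsto f (𝓝[≠] 0) (𝓝 0) := by
    refine (zero_mul (0 : ℝ) ▸ h0.mul habs).congr' ?_
    filter_upwards [self_mem_nhdsWithin] with t ht
    exact div_mul_cancel₀ _ (rpow_pos_of_pos (abs_pos.mpr ht) a).ne'
  exact tendsto_nhds_unique (hf.tendsto.mono_left nhdsWithin_le_nhds) hf'

lemma exists_abs_le_mul_rpow_of_tendsto_nhdsNE (ha : 0 < a) (hf : ContinuousAt f 0)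
    (h0 : Tendsto (fun t => f t / |t| ^ a) (𝓝[≠] 0) (𝓝 0)) (hε : 0 < ε) :
    ∃ δ > 0, ∀ t, |t| < δ → |f t| ≤ ε * |t| ^ a := by
  obtain ⟨δ, hδ, hsmall⟩ := Metric.tendsto_nhdsWithin_nhds.mp h0 ε hε
  refine ⟨δ, hδ, fun t ht => ?_⟩
  rcases eq_or_ne t 0 with rfl | ht0
  · simp [eq_zero_of_tendsto_div_abs_rpow ha hf h0, zero_rpow ha.ne']
  have hpos : 0 < |t| ^ a := rpow_pos_of_pos (abs_pos.mpr ht0) a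
  have := hsmall ht0 (by simpa using ht)
  rw [dist_zero_right, norm_div, norm_of_nonneg hpos.le, div_lt_iff₀ hpos] at this
  exact this.le

lemma exists_abs_le_rpow_of_tendsto_cocompact
    (hinf : Tendsto (fun t => f t / |t| ^ b) (cocompact ℝ) (𝓝 0)) :
    ∃ R, ∀ t, R ≤ |t| → |f t| ≤ |t| ^ b := by
  rw [← Metric.cobounded_eq_cocompact, ← comap_norm_atTop] at hinf
  obtain ⟨R, hR⟩ := ((atTop_basis.comap fun x : ℝ => ‖x‖).tendsto_iff Metric.nhds_basis_ball).mp
    hinf 1 one_pos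
  refine ⟨max R 1, fun t ht => ?_⟩
  have ht0 : 0 < |t| := by linarith [le_max_right R 1]
  have hpos : 0 < |t| ^ b := rpow_pos_of_pos ht0 b
  have := hR.2 (x := t) (le_trans (le_max_left _ _) ht)
  rw [Metric.mem_ball, dist_zero_right, norm_div, norm_of_nonneg hpos.le, div_lt_iff₀ hpos,
    one_mul] at this
  exact this.le

lemma exists_abs_le_mul_rpow_add_mul_rpow (ha : 0 < a) (hb : 0 ≤ b) (hf : Continuous f)
    (h0 : Tendsto (fun t => f t / |t| ^ a) (𝓝[≠] 0) (𝓝 0))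
    (hinf : Tendsto (fun t => f t / |t| ^ b) (cocompact ℝ) (𝓝 0)) (hε : 0 < ε) :
    ∃ C ≥ 0, ∀ t, |f t| ≤ ε * |t| ^ a + C * |t| ^ b := by
  obtain ⟨δ, hδ, hnear⟩ := exists_abs_le_mul_rpow_of_tendsto_nhdsNE ha hf.continuousAt h0 hε
  obtain ⟨R, hfar⟩ := exists_abs_le_rpow_of_tendsto_cocompact hinf
  obtain ⟨B, hB⟩ := (isCompact_Icc (a := -R) (b := R)).exists_bound_of_continuousOn
    hf.continuousOn
  have hδb : 0 < δ ^ b := rpow_pos_of_pos hδ b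
  refine ⟨max 1 (B / δ ^ b), by positivity, fun t => ?_⟩
  have hεa : 0 ≤ ε * |t| ^ a := by positivity
  suffices |f t| ≤ max 1 (B / δ ^ b) * |t| ^ b ∨ |f t| ≤ ε * |t| ^ a by
    have hCb : 0 ≤ max 1 (B / δ ^ b) * |t| ^ b := by positivity
    rcases this with h | h <;> linarith
  rcases lt_or_ge |t| δ with hsmall | hδt
  · exact Or.inr (hnear t hsmall)
  left
  rcases le_or_gt R |t| with hlarge | htR
  · exact (hfar t hlarge).trans (le_mul_of_one_le_left (by positivity) (le_max_left _ _))
  · have hBt : |f t| ≤ B := hB t (abs_le.mp htR.le)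
    calc |f t| ≤ B / δ ^ b * δ ^ b := by rwa [div_mul_cancel₀ _ hδb.ne']
      _ ≤ max 1 (B / δ ^ b) * |t| ^ b := by
        have : 0 ≤ B / δ ^ b := div_nonneg ((abs_nonneg _).trans hBt) hδb.le
        gcongr
        exact le_max_right _ _

lemma intervalIntegral_le_mul_rpow_add_mul_rpow {C : ℝ} (hε : 0 ≤ ε) (hC : 0 ≤ C) (ha : 0 ≤ a)
    (hb : 0 ≤ b) (hf : ∀ t, |f t| ≤ ε * |t| ^ a + C * |t| ^ b) (t : ℝ) :
    ∫ τ in (0 : ℝ)..t, f τ ≤ ε * |t| ^ (a + 1) + C * |t| ^ (b + 1) := by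
  have hbound : ∀ τ ∈ Set.uIoc 0 t, ‖f τ‖ ≤ ε * |t| ^ a + C * |t| ^ b := fun τ hτ => by
    have hτt : |τ| ≤ |t| := by simpa using Set.abs_sub_left_of_mem_uIcc (Set.uIoc_subset_uIcc hτ)
    exact (hf τ).trans (by gcongr)
  calc ∫ τ in (0 : ℝ)..t, f τ ≤ ‖∫ τ in (0 : ℝ)..t, f τ‖ := le_abs_self _
    _ ≤ (ε * |t| ^ a + C * |t| ^ b) * |t - 0| :=
      intervalIntegral.norm_integral_le_of_norm_le_const hbound
    _ = ε * |t| ^ (a + 1) + C * |t| ^ (b + 1) := by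
      rw [rpow_add_one' (abs_nonneg t) (by positivity),
        rpow_add_one' (abs_nonneg t) (by positivity), sub_zero]
      ring

lemma exists_intervalIntegral_le_mul_rpow_add_mul_rpow {p r : ℝ} (hp : 1 < p) (hr : 1 < r)
    (hf : Continuous f) (h0 : Tendsto (fun t => f t / |t| ^ (p - 1)) (𝓝[≠] 0) (𝓝 0))
    (hinf : Tendsto (fun t => f t / |t| ^ (r - 1)) (cocompact ℝ) (𝓝 0)) (hε : 0 < ε) :
    ∃ C ≥ 0, ∀ t, ∫ τ in (0 : ℝ)..t, f τ ≤ ε * |t| ^ p + C * |t| ^ r := by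
  obtain ⟨C, hC, hfC⟩ := exists_abs_le_mul_rpow_add_mul_rpow (sub_pos.mpr hp)
    (sub_nonneg.mpr hr.le) hf h0 hinf hε
  refine ⟨C, hC, fun t => ?_⟩
  simpa using intervalIntegral_le_mul_rpow_add_mul_rpow hε.le hC (sub_nonneg.mpr hp.le)
    (sub_nonneg.mpr hr.le) hfC t

lemma exists_pos_le_one_mul_rpow_le (c : ℝ) {s d : ℝ} (hs : 0 < s) (hd : 0 < d) :
    ∃ ρ > 0, ρ ≤ 1 ∧ c * ρ ^ s ≤ d := by
  have hlim : Tendsto (fun ρ : ℝ => c * ρ ^ s) (𝓝[>] 0) (𝓝 0) := by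
    have := ((continuousAt_rpow_const 0 s (Or.inr hs.le)).tendsto.const_mul c).mono_left
      (nhdsWithin_le_nhds (s := Set.Ioi 0))
    simpa [zero_rpow hs.ne'] using this
  obtain ⟨ρ, ⟨hρ₀, hρ₁⟩, hρ⟩ := (Filter.Eventually.and (Ioc_mem_nhdsGT one_pos)
    (hlim.eventually (eventually_le_nhds hd))).exists
  exact ⟨ρ, hρ₀, hρ₁, hρ⟩

lemma half_rpow_le_rpow_add_rpow {a b p q : ℝ} (ha : 0 ≤ a) (hb : 0 ≤ b) (hp : 0 < p)
    (hpq : p ≤ q) (hab : a + b ≤ 2) : ((a + b) / 2) ^ q ≤ a ^ p + b ^ q := by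
  have hm : 0 ≤ (a + b) / 2 := by positivity
  rcases le_total ((a + b) / 2) b with hbig | hsmall
  · linarith [rpow_le_rpow hm hbig (hp.le.trans hpq), rpow_nonneg ha p]
  · have : ((a + b) / 2) ^ q ≤ ((a + b) / 2) ^ p :=
      rpow_le_rpow_of_exponent_ge' hm (by linarith) hp.le hpq
    linarith [rpow_le_rpow hm (by linarith : (a + b) / 2 ≤ a) hp.le, rpow_nonneg hb q]

lemma rpow_le_rpow_sub_mul_rpow {b ρ q r : ℝ} (hb : 0 ≤ b) (hbρ : b ≤ ρ) (hq : 0 ≤ q)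
    (hqr : q ≤ r) : b ^ r ≤ ρ ^ (r - q) * b ^ q := by
  calc b ^ r = b ^ (r - q) * b ^ q := by
        rw [← rpow_add_of_nonneg hb (sub_nonneg.mpr hqr) hq, sub_add_cancel]
    _ ≤ ρ ^ (r - q) * b ^ q := by gcongr

lemma half_rpow_add_le_of_add_le_one {a b p q r c : ℝ} (ha : 0 ≤ a) (hb : 0 ≤ b) (hp : 0 < p)
    (hpq : p ≤ q) (hqr : q ≤ r) (hab : a + b ≤ 1) (hc : 0 ≤ c)
    (hcab : c * (a + b) ^ (r - q) ≤ 1 / (2 * q)) :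
    1 / (2 * q) * ((a + b) / 2) ^ q + 1 / (2 * p) * a ^ p + c * b ^ r ≤
      1 / p * a ^ p + 1 / q * b ^ q := by
  have hq : 0 < q := hp.trans_le hpq
  have hsplit := mul_le_mul_of_nonneg_left (half_rpow_le_rpow_add_rpow ha hb hp hpq (by linarith))
    (by positivity : 0 ≤ 1 / (2 * q))
  have hbr : c * b ^ r ≤ 1 / (2 * q) * b ^ q :=
    calc c * b ^ r ≤ c * (a + b) ^ (r - q) * b ^ q := by
          rw [mul_assoc]
          gcongr
          exact rpow_le_rpow_sub_mul_rpow hb (by linarith) hq.le hqr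
      _ ≤ 1 / (2 * q) * b ^ q := by gcongr
  have hap : 1 / (2 * q) * a ^ p ≤ 1 / (2 * p) * a ^ p := by gcongr
  have hp2 : 1 / p * a ^ p = 2 * (1 / (2 * p) * a ^ p) := by field_simp
  have hq2 : 1 / q * b ^ q = 2 * (1 / (2 * q) * b ^ q) := by field_simp
  nlinarith

end Real

section Interpolation

variable {α G : Type*} [MeasurableSpace α] {μ : Measure α} [NormedAddCommGroup G]

lemma ofReal_integral_norm_rpow_eq_lintegral {g : α → G} {t : ℝ} (ht : 0 ≤ t)
    (hg : Integrable (fun x => ‖g x‖ ^ t) μ) :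
    ENNReal.ofReal (∫ x, ‖g x‖ ^ t ∂μ) = ∫⁻ x, ‖g x‖ₑ ^ t ∂μ := by
  rw [ofReal_integral_eq_lintegral_ofReal hg (.of_forall fun x => by positivity)]
  simp_rw [← ENNReal.ofReal_rpow_of_nonneg (norm_nonneg _) ht, ofReal_norm]

lemma lintegral_rpow_le_interpolate {g : α → ℝ≥0∞} (hg : AEMeasurable g μ) {q s θ : ℝ}
    (hq : 0 ≤ q) (hs : 0 ≤ s) (hθ₀ : 0 < θ) (hθ₁ : θ < 1) :
    ∫⁻ x, g x ^ ((1 - θ) * q + θ * s) ∂μ ≤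
      (∫⁻ x, g x ^ q ∂μ) ^ (1 - θ) * (∫⁻ x, g x ^ s ∂μ) ^ θ := by
  have hconj : (1 - θ)⁻¹.HolderConjugate θ⁻¹ :=
    Real.holderConjugate_iff.mpr ⟨one_lt_inv₀ (by linarith) |>.mpr (by linarith), by simp⟩
  have key := ENNReal.lintegral_mul_le_Lp_mul_Lq μ hconj (hg.pow_const ((1 - θ) * q))
    (hg.pow_const (θ * s))
  have hq' : (1 - θ) * q * (1 - θ)⁻¹ = q := by field_simp [show 1 - θ ≠ 0 by linarith]
  have hs' : θ * s * θ⁻¹ = s := by field_simp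
  simp only [Pi.mul_apply, ← ENNReal.rpow_mul, one_div, inv_inv, hq', hs'] at key
  rwa [← lintegral_congr fun x => ENNReal.rpow_add_of_nonneg (x := g x) _ _
    (by nlinarith) (by positivity)] at key

lemma integral_norm_rpow_le_interpolate {u : α → G} (hu : AEStronglyMeasurable u μ) {q s θ : ℝ}
    (hq : 0 ≤ q) (hs : 0 ≤ s) (hθ₀ : 0 < θ) (hθ₁ : θ < 1)
    (huq : Integrable (fun x => ‖u x‖ ^ q) μ) (hus : Integrable (fun x => ‖u x‖ ^ s) μ) :
    ∫ x, ‖u x‖ ^ ((1 - θ) * q + θ * s) ∂μ ≤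
      (∫ x, ‖u x‖ ^ q ∂μ) ^ (1 - θ) * (∫ x, ‖u x‖ ^ s ∂μ) ^ θ := by
  have hr : 0 ≤ (1 - θ) * q + θ * s := by nlinarith
  rw [integral_eq_lintegral_of_nonneg_ae (.of_forall fun x => by positivity)
    (hu.norm.aemeasurable.pow_const _).aestronglyMeasurable]
  refine ENNReal.toReal_le_of_le_ofReal (by positivity) ?_
  rw [ENNReal.ofReal_mul (by positivity),
    ← ENNReal.ofReal_rpow_of_nonneg (integral_nonneg fun x => by positivity) (by linarith),
    ← ENNReal.ofReal_rpow_of_nonneg (integral_nonneg fun x => by positivity) hθ₀.le,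
    ofReal_integral_norm_rpow_eq_lintegral hq huq, ofReal_integral_norm_rpow_eq_lintegral hs hus]
  simp_rw [← ENNReal.ofReal_rpow_of_nonneg (norm_nonneg _) hr, ofReal_norm]
  exact lintegral_rpow_le_interpolate hu.enorm hq hs hθ₀ hθ₁

end Interpolation

section CompactSupport

variable {X : Type*} [TopologicalSpace X] [MeasurableSpace X] [OpensMeasurableSpace X]
  {μ : Measure X} [IsFiniteMeasureOnCompacts μ]

lemma Continuous.integrable_norm_rpow_of_hasCompactSupport {G : Type*} [NormedAddCommGroup G]
    {g : X → G} (hg : Continuous g) (h2g : HasCompactSupport g) {t : ℝ}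
    (ht : 0 < t) : Integrable (fun x => ‖g x‖ ^ t) μ := by
  simpa [ht.le] using (hg.memLp_of_hasCompactSupport (p := .ofReal t) h2g).integrable_norm_rpow
    (by simpa using ht) ENNReal.ofReal_ne_top

lemma integral_comp_le_mul_integral_rpow_add_mul_integral_rpow {G : ℝ → ℝ} (hG : Continuous G) (hG0 : G 0 = 0) {u : X → ℝ} (hu : Continuous u)
    (h2u : HasCompactSupport u) {ε C p r : ℝ} (hp : 0 < p) (hr : 0 < r)
    (hGle : ∀ t, G t ≤ ε * |t| ^ p + C * |t| ^ r) :
    ∫ x, G (u x) ∂μ ≤ ε * ∫ x, |u x| ^ p ∂μ + C * ∫ x, |u x| ^ r ∂μ := by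
  have hup : Integrable (fun x => |u x| ^ p) μ := by
    simpa using hu.integrable_norm_rpow_of_hasCompactSupport h2u hp
  have hur : Integrable (fun x => |u x| ^ r) μ := by
    simpa using hu.integrable_norm_rpow_of_hasCompactSupport h2u hr
  rw [← integral_const_mul, ← integral_const_mul, ← integral_add (hup.const_mul ε)
    (hur.const_mul C)]
  exact integral_mono ((hG.comp hu).integrable_of_hasCompactSupport (h2u.comp_left hG0))
    ((hup.const_mul ε).add (hur.const_mul C)) fun x => hGle (u x)

end CompactSupport

section Sobolev

variable {E F : Type*} [NormedAddCommGroup E] [NormedSpace ℝ E] [MeasurableSpace E] [BorelSpace E]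
  [FiniteDimensional ℝ E] (μ : Measure E) [μ.IsAddHaarMeasure]
  [NormedAddCommGroup F] [InnerProductSpace ℝ F]

lemma integral_norm_rpow_le_integral_norm_fderiv_rpow {u : E → F} (hu : ContDiff ℝ 1 u)
    (h2u : HasCompactSupport u) {q qs : ℝ} (hq : 1 ≤ q) (hqn : q < Module.finrank ℝ E)
    (hqs : qs⁻¹ = q⁻¹ - (Module.finrank ℝ E : ℝ)⁻¹) :
    ∫ x, ‖u x‖ ^ qs ∂μ ≤ (eLpNormLESNormFDerivOfEqInnerConst μ q : ℝ) ^ qs *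
      (∫ x, ‖fderiv ℝ u x‖ ^ q ∂μ) ^ (qs / q) := by
  have hq0 : 0 < q := by linarith
  have hqs0 : 0 < qs := inv_pos.mp (hqs ▸ sub_pos.mpr (inv_strictAnti₀ hq0 hqn))
  have hn : 0 < Module.finrank ℝ E := by exact_mod_cast hq0.trans hqn
  have hsob := eLpNorm_le_eLpNorm_fderiv_of_eq_inner μ hu h2u (p := q.toNNReal)
    (p' := qs.toNNReal) (by simpa using hq) hn (by simpa [hq0.le, hqs0.le] using hqs)
  have hfd : MemLp (fderiv ℝ u) q.toNNReal μ :=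
    (hu.continuous_fderiv one_ne_zero).memLp_of_hasCompactSupport (h2u.fderiv (𝕜 := ℝ))
  have hlp := ENNReal.toReal_mono (ENNReal.mul_ne_top ENNReal.coe_ne_top hfd.eLpNorm_ne_top) hsob
  rw [ENNReal.toReal_mul, toReal_eLpNorm hu.continuous.aestronglyMeasurable,
    toReal_eLpNorm hfd.aestronglyMeasurable, ENNReal.coe_toReal,
    lpNorm_nnreal_eq_integral_norm_rpow (by simpa using hqs0) hu.continuous.aestronglyMeasurable,
    lpNorm_nnreal_eq_integral_norm_rpow (by simpa using hq0) hfd.aestronglyMeasurable,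
    Real.coe_toNNReal _ hq0.le, Real.coe_toNNReal _ hqs0.le] at hlp
  have hI : 0 ≤ ∫ x, ‖u x‖ ^ qs ∂μ := integral_nonneg fun x => by positivity
  have hJ : 0 ≤ ∫ x, ‖fderiv ℝ u x‖ ^ q ∂μ := integral_nonneg fun x => by positivity
  calc ∫ x, ‖u x‖ ^ qs ∂μ = ((∫ x, ‖u x‖ ^ qs ∂μ) ^ qs⁻¹) ^ qs := by
        rw [Real.rpow_inv_rpow hI hqs0.ne']
    _ ≤ (_ * (∫ x, ‖fderiv ℝ u x‖ ^ q ∂μ) ^ q⁻¹) ^ qs := by gcongr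
    _ = _ := by
      rw [Real.mul_rpow (by positivity) (by positivity), ← Real.rpow_mul hJ, inv_mul_eq_div]

lemma integral_norm_rpow_le_gagliardoNirenberg {u : E → F} (hu : ContDiff ℝ 1 u)
    (h2u : HasCompactSupport u) {q qs θ : ℝ} (hq : 1 ≤ q) (hqn : q < Module.finrank ℝ E)
    (hqs : qs⁻¹ = q⁻¹ - (Module.finrank ℝ E : ℝ)⁻¹) (hθ₀ : 0 < θ) (hθ₁ : θ < 1) :
    ∫ x, ‖u x‖ ^ ((1 - θ) * q + θ * qs) ∂μ ≤ (∫ x, ‖u x‖ ^ q ∂μ) ^ (1 - θ) *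
      ((eLpNormLESNormFDerivOfEqInnerConst μ q : ℝ) ^ qs *
        (∫ x, ‖fderiv ℝ u x‖ ^ q ∂μ) ^ (qs / q)) ^ θ := by
  have hq0 : 0 < q := by linarith
  have hqs0 : 0 < qs := inv_pos.mp (hqs ▸ sub_pos.mpr (inv_strictAnti₀ hq0 hqn))
  refine (integral_norm_rpow_le_interpolate hu.continuous.aestronglyMeasurable hq0.le hqs0.le
    hθ₀ hθ₁ (hu.continuous.integrable_norm_rpow_of_hasCompactSupport h2u hq0)
    (hu.continuous.integrable_norm_rpow_of_hasCompactSupport h2u hqs0)).trans ?_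
  gcongr
  exact integral_norm_rpow_le_integral_norm_fderiv_rpow μ hu h2u hq hqn hqs

end Sobolev

section EnergyFunctional

variable {N : ℕ} {V : EuclideanSpace ℝ (Fin N) → ℝ} {u : EuclideanSpace ℝ (Fin N) → ℝ} {t : ℝ}

lemma pNormPow_nonneg (hV : ∀ x, 0 ≤ V x) : 0 ≤ pNormPow N V t u :=
  add_nonneg (integral_nonneg fun x => by positivity)
    (integral_nonneg fun x => mul_nonneg (hV x) (by positivity))

lemma vNorm_rpow (hV : ∀ x, 0 ≤ V x) (ht : t ≠ 0) : vNorm N V t u ^ t = pNormPow N V t u := by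
  rw [vNorm, one_div, Real.rpow_inv_rpow (pNormPow_nonneg hV) ht]

lemma vNorm_nonneg (hV : ∀ x, 0 ≤ V x) : 0 ≤ vNorm N V t u :=
  Real.rpow_nonneg (pNormPow_nonneg hV) _

lemma integral_norm_fderiv_rpow_le_pNormPow (hV : ∀ x, 0 ≤ V x) :
    ∫ x, ‖fderiv ℝ u x‖ ^ t ≤ pNormPow N V t u :=
  le_add_of_nonneg_right (integral_nonneg fun x => mul_nonneg (hV x) (by positivity))

lemma mul_integral_abs_rpow_le_pNormPow {V₀ : ℝ} (hV : Continuous V) (hVlb : ∀ x, V₀ ≤ V x)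
    (hu : Continuous u) (h2u : HasCompactSupport u) (ht : 0 < t) :
    V₀ * ∫ x, |u x| ^ t ≤ pNormPow N V t u := by
  have hut : Integrable (fun x => |u x| ^ t) := by
    simpa using hu.integrable_norm_rpow_of_hasCompactSupport h2u ht
  have hVut : Integrable (fun x => V x * |u x| ^ t) :=
    (hV.mul (hu.abs.rpow_const fun _ => Or.inr ht.le)).integrable_of_hasCompactSupport
      (h2u.abs.rpow_const ht.ne').mul_left
  rw [← integral_const_mul]
  exact (integral_mono (hut.const_mul V₀) hVut fun x => by gcongr; exact hVlb x).trans
    (le_add_of_nonneg_left (integral_nonneg fun x => by positivity))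

lemma exists_integral_abs_rpow_le_pNormPow {q r V₀ : ℝ} (hq : 1 ≤ q) (hqN : q < N)
    (hqr : q < r) (hrcrit : r < N * q / (N - q)) (hV : Continuous V) (hV₀ : 0 < V₀)
    (hVlb : ∀ x, V₀ ≤ V x) :
    ∃ K ≥ 0, ∀ u : EuclideanSpace ℝ (Fin N) → ℝ, ContDiff ℝ 1 u → HasCompactSupport u →
      ∫ x, |u x| ^ r ≤ K * pNormPow N V q u ^ (r / q) := by
  have hV0 : ∀ x, 0 ≤ V x := fun x => hV₀.le.trans (hVlb x)
  have hq0 : 0 < q := by linarith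
  set qs := N * q / (N - q)
  have hqs : qs⁻¹ = q⁻¹ - (Module.finrank ℝ (EuclideanSpace ℝ (Fin N)) : ℝ)⁻¹ := by
    have hN : (N : ℝ) ≠ 0 := by linarith
    simp only [qs, finrank_euclideanSpace_fin, inv_div]
    field_simp
  set θ := (r - q) / (qs - q)
  have hθ₀ : 0 < θ := div_pos (by linarith) (by linarith)
  have hθ₁ : θ < 1 := (div_lt_one (by linarith)).mpr (by linarith)
  have hr : (1 - θ) * q + θ * qs = r := by
    simp only [θ]; field_simp [show qs - q ≠ 0 by linarith]; ring
  have hexp : (1 - θ) + qs / q * θ = r / q := by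
    rw [← hr]; field_simp
  set S : ℝ :=
    ↑(eLpNormLESNormFDerivOfEqInnerConst (volume : Measure (EuclideanSpace ℝ (Fin N))) q)
  refine ⟨V₀⁻¹ ^ (1 - θ) * (S ^ qs) ^ θ, by positivity, fun u hu h2u => ?_⟩
  set P := pNormPow N V q u
  have hP : 0 ≤ P := pNormPow_nonneg hV0
  have huq : ∫ x, |u x| ^ q ≤ P / V₀ := by
    rw [le_div_iff₀ hV₀, mul_comm]
    exact mul_integral_abs_rpow_le_pNormPow hV hVlb hu.continuous h2u hq0
  calc ∫ x, |u x| ^ r = ∫ x, ‖u x‖ ^ ((1 - θ) * q + θ * qs) := by simp [hr]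
    _ ≤ (∫ x, ‖u x‖ ^ q) ^ (1 - θ) * (S ^ qs * (∫ x, ‖fderiv ℝ u x‖ ^ q) ^ (qs / q)) ^ θ :=
      integral_norm_rpow_le_gagliardoNirenberg volume hu h2u hq (by simpa using hqN) hqs hθ₀ hθ₁
    _ ≤ (P / V₀) ^ (1 - θ) * (S ^ qs * P ^ (qs / q)) ^ θ := by
      simp only [Real.norm_eq_abs]
      gcongr
      exact integral_norm_fderiv_rpow_le_pNormPow hV0
    _ = V₀⁻¹ ^ (1 - θ) * (S ^ qs) ^ θ * P ^ (r / q) := by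
      rw [div_eq_mul_inv, Real.mul_rpow hP (by positivity), Real.mul_rpow (by positivity)
        (by positivity), ← Real.rpow_mul hP, ← hexp, Real.rpow_add_of_nonneg hP (by linarith)
        (by positivity)]
      ring

lemma integral_primitive_comp_le {f : ℝ → ℝ} (hf : Continuous f) {V₀ ε C K p q r : ℝ}
    (hV : Continuous V) (hVlb : ∀ x, V₀ ≤ V x) (hV₀ : 0 ≤ V₀) (hε : 0 ≤ ε) (hC : 0 ≤ C)
    (hp : 0 < p) (hq : 0 < q) (hr : 0 < r)
    (hF : ∀ t, ∫ τ in (0 : ℝ)..t, f τ ≤ ε * V₀ * |t| ^ p + C * |t| ^ r)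
    (hu : ContDiff ℝ 1 u) (h2u : HasCompactSupport u)
    (hSob : ∫ x, |u x| ^ r ≤ K * pNormPow N V q u ^ (r / q)) :
    ∫ x, ∫ τ in (0 : ℝ)..u x, f τ ≤ ε * vNorm N V p u ^ p + C * K * vNorm N V q u ^ r := by
  have hV0 : ∀ x, 0 ≤ V x := fun x => hV₀.trans (hVlb x)
  have hbr : pNormPow N V q u ^ (r / q) = vNorm N V q u ^ r := by
    rw [← vNorm_rpow hV0 hq.ne', ← Real.rpow_mul (vNorm_nonneg hV0), mul_div_cancel₀ _ hq.ne']
  calc ∫ x, ∫ τ in (0 : ℝ)..u x, f τ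
      ≤ ε * V₀ * (∫ x, |u x| ^ p) + C * ∫ x, |u x| ^ r :=
        integral_comp_le_mul_integral_rpow_add_mul_integral_rpow
          (intervalIntegral.continuous_primitive hf.intervalIntegrable 0)
          intervalIntegral.integral_same hu.continuous h2u hp hr hF (μ := volume)
    _ ≤ ε * vNorm N V p u ^ p + C * K * vNorm N V q u ^ r := by
      rw [mul_assoc ε, mul_assoc C, vNorm_rpow hV0 hp.ne', ← hbr]
      gcongr
      exact mul_integral_abs_rpow_le_pNormPow hV hVlb hu.continuous h2u hp

end EnergyFunctional

theorem stmt4 (N : ℕ) (p q r V₀ : ℝ)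
    (hp : 1 < p) (hpq : p < q) (hqN : q < (N : ℝ))
    (hqr : q < r) (hrcrit : r < (N : ℝ) * q / ((N : ℝ) - q))
    (V : EuclideanSpace ℝ (Fin N) → ℝ) (hV : Continuous V)
    (hV₀ : 0 < V₀) (hVlb : ∀ x, V₀ ≤ V x)
    (f : ℝ → ℝ) (hf : Continuous f)
    (h0 : Tendsto (fun t : ℝ => f t / |t| ^ (p - 1)) (𝓝[≠] (0 : ℝ)) (𝓝 0))
    (hinf : Tendsto (fun t : ℝ => f t / |t| ^ (r - 1)) (Filter.cocompact ℝ) (𝓝 0)) :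
    ∃ α > (0:ℝ), ∃ ρ > (0:ℝ), ∀ u : EuclideanSpace ℝ (Fin N) → ℝ,
      ContDiff ℝ 1 u → HasCompactSupport u →
      vNorm N V p u + vNorm N V q u = ρ →
      α ≤ (1 / p) * pNormPow N V p u + (1 / q) * pNormPow N V q u
            - ∫ x : EuclideanSpace ℝ (Fin N), (∫ τ in (0:ℝ)..(u x), f τ) := by
  have hV0 : ∀ x, 0 ≤ V x := fun x => hV₀.le.trans (hVlb x)
  have hp0 : 0 < p := by linarith
  have hq0 : 0 < q := by linarith
  obtain ⟨C, hC, hF⟩ := Real.exists_intervalIntegral_le_mul_rpow_add_mul_rpow hp (by linarith)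
    hf h0 hinf (ε := 1 / (2 * p) * V₀) (by positivity)
  obtain ⟨K, hK, hSob⟩ := exists_integral_abs_rpow_le_pNormPow (by linarith) hqN hqr hrcrit hV
    hV₀ hVlb
  obtain ⟨ρ, hρ₀, hρ₁, hρ⟩ := Real.exists_pos_le_one_mul_rpow_le (C * K) (sub_pos.mpr hqr)
    (d := 1 / (2 * q)) (by positivity)
  refine ⟨1 / (2 * q) * (ρ / 2) ^ q, by positivity, ρ, hρ₀, fun u hu h2u hρu => ?_⟩
  have hFu := integral_primitive_comp_le hf hV hVlb hV₀.le (by positivity) hC hp0 hq0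
    (by linarith) hF hu h2u (hSob u hu h2u)
  have hgeom := Real.half_rpow_add_le_of_add_le_one (vNorm_nonneg hV0) (vNorm_nonneg hV0) hp0
    hpq.le hqr.le (hρu.trans_le hρ₁) (mul_nonneg hC hK) (hρu ▸ hρ)
  rw [← vNorm_rpow hV0 hp0.ne', ← vNorm_rpow hV0 hq0.ne', ← hρu]
  linarith
end

section
/- Let N ≥ 1 be an integer and 1 < p < s real numbers. Let f : ℝ → ℝ be continuous with lim_{t → 0} f(t)/|t|^{p-1} = 0 and lim_{|t| → ∞} f(t)/|t|^{s-1} = 0, and set F(t) = ∫₀^t f(τ) dτ. Let u_n, u : ℝ^N → ℝ be measurable functions such that u_n → u almost everywhere on ℝ^N, sup_n (∫_{ℝ^N} |u_n|^p dx + ∫_{ℝ^N} |u_n|^s dx) < ∞, and ∫_{ℝ^N} |u|^p dx + ∫_{ℝ^N} |u|^s dx < ∞. Then ∫_{ℝ^N} (F(u_n − u) − F(u_n) + F(u)) dx → 0 as n → ∞. -/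
/-!
The growth conditions give, for every ε > 0, a bound |f t| ≤ ε|t|^(s-1) + C_ε|t|^(p-1).
Integrating it between x and y and splitting the product with a Young-type inequality yields
|F x - F y| ≤ ε(|x|^p + |x|^s) + C_ε(|x-y|^p + |x-y|^s), so the integrand g_n satisfies
|g_n| ≤ ε(|u_n|^p + |u_n|^s) + 2C_ε(|u|^p + |u|^s), while g_n → 0 a.e. by continuity of F.
The positive part of |g_n| - ε(|u_n|^p + |u_n|^s) is dominated by an integrable function, so its
integral tends to 0 by dominated convergence; the rest is at most ε sup_n ∫ |u_n|^p + |u_n|^s.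
-/

open Filter MeasureTheory Set
open scoped Topology ENNReal

section Growth

variable {f : ℝ → ℝ} {p s : ℝ}

lemma apply_zero_eq_zero_of_tendsto_div_abs_rpow (hf : Continuous f) (hp : 1 < p)
    (h0 : Tendsto (fun t => f t / |t| ^ (p - 1)) (𝓝[≠] 0) (𝓝 0)) : f 0 = 0 := by
  have hpow : Tendsto (fun t : ℝ => |t| ^ (p - 1)) (𝓝[≠] 0) (𝓝 0) := by
    have hc : Continuous fun t : ℝ => |t| ^ (p - 1) :=
      continuous_abs.rpow_const fun _ => Or.inr (by linarith)
    simpa [Real.zero_rpow (by linarith : p - 1 ≠ 0)] using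
      (hc.tendsto 0).mono_left nhdsWithin_le_nhds
  refine tendsto_nhds_unique (((hf.tendsto 0).mono_left nhdsWithin_le_nhds :
    Tendsto f (𝓝[≠] 0) _)) ?_
  simpa using (h0.mul hpow).congr' <| eventually_nhdsWithin_of_forall (s := {0}ᶜ) fun t ht =>
    div_mul_cancel₀ _ (Real.rpow_pos_of_pos (abs_pos.2 ht) _).ne'

-- Continuity at `0` uses the junk value `f 0 / 0 = 0`.
lemma continuous_div_abs_rpow (hf : Continuous f) (hp : 1 < p)
    (h0 : Tendsto (fun t => f t / |t| ^ (p - 1)) (𝓝[≠] 0) (𝓝 0)) :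
    Continuous fun t => f t / |t| ^ (p - 1) := by
  refine continuous_iff_continuousAt.2 fun t => ?_
  rcases eq_or_ne t 0 with rfl | ht
  · rw [← continuousWithinAt_compl_self, ContinuousWithinAt]
    simpa [Real.zero_rpow (by linarith : p - 1 ≠ 0)] using h0
  · have hc : Continuous fun t : ℝ => |t| ^ (p - 1) :=
      continuous_abs.rpow_const fun _ => Or.inr (by linarith)
    exact hf.continuousAt.div hc.continuousAt (Real.rpow_pos_of_pos (abs_pos.2 ht) _).ne'

lemma exists_abs_le_rpow_add_rpow (hf : Continuous f) (hp : 1 < p)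
    (h0 : Tendsto (fun t => f t / |t| ^ (p - 1)) (𝓝[≠] 0) (𝓝 0))
    (hinf : Tendsto (fun t => f t / |t| ^ (s - 1)) (cocompact ℝ) (𝓝 0))
    {ε : ℝ} (hε : 0 < ε) :
    ∃ C > 0, ∀ t, |f t| ≤ ε * |t| ^ (s - 1) + C * |t| ^ (p - 1) := by
  have hev : ∀ᶠ t in cocompact ℝ, |f t / |t| ^ (s - 1)| < ε :=
    hinf.abs.eventually_lt_const (by rwa [abs_zero])
  rw [← Metric.cobounded_eq_cocompact] at hev
  obtain ⟨R, -, hR⟩ := hasBasis_cobounded_norm.eventually_iff.1 hev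
  obtain ⟨B, hB⟩ := (isCompact_Icc (a := -R) (b := R)).exists_bound_of_continuousOn
    (continuous_div_abs_rpow hf hp h0).continuousOn
  refine ⟨max B 1, by positivity, fun t => ?_⟩
  rcases eq_or_ne t 0 with rfl | ht
  · simp [apply_zero_eq_zero_of_tendsto_div_abs_rpow hf hp h0,
      Real.zero_rpow (by linarith : p - 1 ≠ 0)]
    positivity
  have hts : 0 < |t| ^ (s - 1) := Real.rpow_pos_of_pos (abs_pos.2 ht) _
  have htp : 0 < |t| ^ (p - 1) := Real.rpow_pos_of_pos (abs_pos.2 ht) _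
  rcases le_or_gt R |t| with hRt | hRt
  · have hlt := @hR t hRt
    rw [abs_div, abs_of_pos hts, div_lt_iff₀ hts] at hlt
    have : 0 ≤ max B 1 * |t| ^ (p - 1) := by positivity
    linarith
  · have hq := hB t (abs_le.1 hRt.le)
    rw [Real.norm_eq_abs, abs_div, abs_of_pos htp, div_le_iff₀ htp] at hq
    have : 0 ≤ ε * |t| ^ (s - 1) := by positivity
    nlinarith [le_max_left B 1]

end Growth

lemma exists_add_rpow_sub_one_mul_le {r δ : ℝ} (hr : 1 ≤ r) (hδ : 0 < δ) :
    ∃ K ≥ 0, ∀ x y : ℝ, 0 ≤ x → 0 ≤ y →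
      (x + y) ^ (r - 1) * y ≤ δ * x ^ r + K * y ^ r := by
  -- `η ≤ 1` and `2 ^ (r - 1) * η ≤ δ` are what the case `y ≤ η * x` needs.
  set η := min 1 (δ / 2 ^ (r - 1))
  have hη : 0 < η := by positivity
  refine ⟨(1 + η⁻¹) ^ (r - 1), by positivity, fun x y hx hy => ?_⟩
  have hpow : ∀ z : ℝ, 0 ≤ z → z ^ (r - 1) * z = z ^ r := fun z hz => by
    rw [← Real.rpow_add_one' hz (by linarith), sub_add_cancel]
  rcases le_or_gt y (η * x) with hyx | hyx
  · have hsmall : (x + y) ^ (r - 1) * y ≤ δ * x ^ r := calc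
        (x + y) ^ (r - 1) * y ≤ (2 * x) ^ (r - 1) * (η * x) := by
          have : y ≤ x := hyx.trans (mul_le_of_le_one_left hx (min_le_left _ _))
          gcongr
          linarith
        _ = 2 ^ (r - 1) * η * x ^ r := by
          rw [Real.mul_rpow zero_le_two hx, ← hpow x hx]; ring
        _ ≤ δ * x ^ r := by
          gcongr
          rw [← le_div_iff₀' (by positivity)]
          exact min_le_right _ _
    have : 0 ≤ (1 + η⁻¹) ^ (r - 1) * y ^ r := by positivity
    linarith
  · have hlarge : (x + y) ^ (r - 1) * y ≤ (1 + η⁻¹) ^ (r - 1) * y ^ r := calc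
        (x + y) ^ (r - 1) * y ≤ ((1 + η⁻¹) * y) ^ (r - 1) * y := by
          have : x ≤ η⁻¹ * y := by rw [inv_mul_eq_div, le_div_iff₀' hη]; exact hyx.le
          gcongr
          linarith
        _ = (1 + η⁻¹) ^ (r - 1) * y ^ r := by
          rw [Real.mul_rpow (by positivity) hy, mul_assoc, hpow y hy]
    have : 0 ≤ δ * x ^ r := by positivity
    linarith

section Primitive

variable {f : ℝ → ℝ} {p s : ℝ}

lemma abs_le_abs_add_abs_sub_of_mem_uIoc {x y τ : ℝ} (hτ : τ ∈ uIoc y x) :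
    |τ| ≤ |x| + |x - y| := by
  rw [mem_uIoc] at hτ
  rw [abs_le]
  constructor <;> rcases hτ with ⟨h1, h2⟩ | ⟨h1, h2⟩ <;>
    linarith [neg_abs_le x, le_abs_self x, neg_abs_le (x - y), le_abs_self (x - y)]

lemma exists_abs_primitive_sub_le (hf : Continuous f) (hp : 1 ≤ p) (hs : 1 ≤ s)
    (hgrowth : ∀ ε > 0, ∃ C > 0, ∀ t, |f t| ≤ ε * |t| ^ (s - 1) + C * |t| ^ (p - 1))
    {ε : ℝ} (hε : 0 < ε) :
    ∃ C, ∀ x y : ℝ, |(∫ τ in (0 : ℝ)..x, f τ) - ∫ τ in (0 : ℝ)..y, f τ| ≤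
      ε * (|x| ^ p + |x| ^ s) + C * (|x - y| ^ p + |x - y| ^ s) := by
  obtain ⟨C₁, hC₁, hf_le⟩ := hgrowth ε hε
  obtain ⟨Ks, hKs, hs_le⟩ := exists_add_rpow_sub_one_mul_le hs zero_lt_one
  obtain ⟨Kp, hKp, hp_le⟩ := exists_add_rpow_sub_one_mul_le hp (div_pos hε hC₁)
  refine ⟨ε * Ks + C₁ * Kp, fun x y => ?_⟩
  set X := |x|
  set Y := |x - y|
  have hbound : ∀ τ ∈ uIoc y x,
      ‖f τ‖ ≤ ε * (X + Y) ^ (s - 1) + C₁ * (X + Y) ^ (p - 1) := by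
    intro τ hτ
    have hτ := abs_le_abs_add_abs_sub_of_mem_uIoc hτ
    rw [Real.norm_eq_abs]
    refine (hf_le τ).trans ?_
    gcongr
  have hYp : 0 ≤ Y ^ p := by positivity
  have hYs : 0 ≤ Y ^ s := by positivity
  calc |(∫ τ in (0 : ℝ)..x, f τ) - ∫ τ in (0 : ℝ)..y, f τ| = |∫ τ in y..x, f τ| := by
        rw [intervalIntegral.integral_interval_sub_left (hf.intervalIntegrable 0 x)
          (hf.intervalIntegrable 0 y)]
    _ ≤ (ε * (X + Y) ^ (s - 1) + C₁ * (X + Y) ^ (p - 1)) * |x - y| :=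
        intervalIntegral.norm_integral_le_of_norm_le_const hbound
    _ = ε * ((X + Y) ^ (s - 1) * Y) + C₁ * ((X + Y) ^ (p - 1) * Y) := by ring
    _ ≤ ε * (1 * X ^ s + Ks * Y ^ s) + C₁ * (ε / C₁ * X ^ p + Kp * Y ^ p) := by
        gcongr
        exacts [hs_le X Y (abs_nonneg _) (abs_nonneg _),
          hp_le X Y (abs_nonneg _) (abs_nonneg _)]
    _ ≤ ε * (X ^ p + X ^ s) + (ε * Ks + C₁ * Kp) * (Y ^ p + Y ^ s) := by
        rw [mul_add C₁, ← mul_assoc C₁, mul_div_cancel₀ _ hC₁.ne']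
        nlinarith [mul_nonneg hε.le (mul_nonneg hKs hYp),
          mul_nonneg hC₁.le (mul_nonneg hKp hYs)]

lemma exists_abs_primitive_sub_sub_add_le (hf : Continuous f) (hp : 1 ≤ p) (hs : 1 ≤ s)
    (hgrowth : ∀ ε > 0, ∃ C > 0, ∀ t, |f t| ≤ ε * |t| ^ (s - 1) + C * |t| ^ (p - 1))
    {ε : ℝ} (hε : 0 < ε) :
    ∃ C, ∀ a b : ℝ, |(∫ τ in (0 : ℝ)..(a - b), f τ) - (∫ τ in (0 : ℝ)..a, f τ) +
      ∫ τ in (0 : ℝ)..b, f τ| ≤ ε * (|a| ^ p + |a| ^ s) + 2 * C * (|b| ^ p + |b| ^ s) := by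
  obtain ⟨C, hC⟩ := exists_abs_primitive_sub_le hf hp hs hgrowth hε
  refine ⟨C, fun a b => ?_⟩
  have hab := hC a (a - b)
  have hb := hC 0 b
  rw [sub_sub_cancel] at hab
  rw [zero_sub, abs_neg, abs_zero, Real.zero_rpow (by linarith), Real.zero_rpow (by linarith),
    intervalIntegral.integral_same] at hb
  calc _ = |-(((∫ τ in (0 : ℝ)..a, f τ) - ∫ τ in (0 : ℝ)..(a - b), f τ) +
        (0 - ∫ τ in (0 : ℝ)..b, f τ))| := by ring_nf
    _ ≤ |(∫ τ in (0 : ℝ)..a, f τ) - ∫ τ in (0 : ℝ)..(a - b), f τ| +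
        |0 - ∫ τ in (0 : ℝ)..b, f τ| := by rw [abs_neg]; exact abs_add_le _ _
    _ ≤ _ := by linarith

end Primitive

section DominatedConvergence

variable {α : Type*} [MeasurableSpace α] {μ : Measure α}

lemma tendsto_zero_of_forall_abs_le_add {a : ℕ → ℝ}
    (h : ∀ ε > 0, ∃ z : ℕ → ℝ, Tendsto z atTop (𝓝 0) ∧ ∀ n, |a n| ≤ z n + ε) :
    Tendsto a atTop (𝓝 0) := by
  rw [Metric.tendsto_atTop]
  intro ε hε
  obtain ⟨z, hz, hle⟩ := h (ε / 2) (half_pos hε)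
  obtain ⟨n₀, hn₀⟩ := Metric.tendsto_atTop.1 hz (ε / 2) (half_pos hε)
  refine ⟨n₀, fun n hn => ?_⟩
  have := hn₀ n hn
  rw [Real.dist_0_eq_abs] at this ⊢
  linarith [hle n, le_abs_self (z n)]

theorem tendsto_integral_of_abs_le_mul_add {g W : ℕ → α → ℝ} {M : ℝ}
    (hg : ∀ n, AEStronglyMeasurable (g n) μ)
    (hlim : ∀ᵐ x ∂μ, Tendsto (fun n => g n x) atTop (𝓝 0))
    (hW : ∀ n, Integrable (W n) μ) (hW0 : ∀ n, 0 ≤ᵐ[μ] W n) (hWM : ∀ n, ∫ x, W n x ∂μ ≤ M)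
    (hdom : ∀ ε > 0, ∃ h, Integrable h μ ∧ ∀ n, ∀ᵐ x ∂μ, |g n x| ≤ ε * W n x + h x) :
    Tendsto (fun n => ∫ x, g n x ∂μ) atTop (𝓝 0) := by
  refine tendsto_zero_of_forall_abs_le_add fun ε hε => ?_
  set δ := ε / (|M| + 1)
  have hδ : 0 < δ := by positivity
  obtain ⟨h, hh, hgh⟩ := hdom δ hδ
  set z : ℕ → α → ℝ := fun n x => max (|g n x| - δ * W n x) 0
  have hz_meas : ∀ n, AEStronglyMeasurable (z n) μ := fun n =>
    (((hg n).norm.sub ((hW n).1.const_mul δ)).sup aestronglyMeasurable_const)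
  have hz_le : ∀ n, ∀ᵐ x ∂μ, ‖z n x‖ ≤ |h x| := fun n => by
    filter_upwards [hgh n] with x hx
    rw [Real.norm_eq_abs, abs_of_nonneg (le_max_right _ _)]
    exact max_le (by linarith [le_abs_self (h x)]) (abs_nonneg _)
  have hz_lim : ∀ᵐ x ∂μ, Tendsto (fun n => z n x) atTop (𝓝 0) := by
    filter_upwards [hlim, ae_all_iff.2 hW0] with x hx hx0
    refine squeeze_zero (fun n => le_max_right _ _) (fun n => max_le ?_ (abs_nonneg _))
      (by simpa using hx.abs)
    linarith [mul_nonneg hδ.le (hx0 n)]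
  refine ⟨fun n => ∫ x, z n x ∂μ,
    by simpa using tendsto_integral_of_dominated_convergence _ hz_meas hh.abs hz_le hz_lim,
    fun n => ?_⟩
  have hz_int : Integrable (z n) μ := hh.abs.mono' (hz_meas n) (hz_le n)
  calc |∫ x, g n x ∂μ| ≤ ∫ x, |g n x| ∂μ := abs_integral_le_integral_abs
    _ ≤ ∫ x, (z n x + δ * W n x) ∂μ :=
        integral_mono_of_nonneg (ae_of_all _ fun x => abs_nonneg _)
          (hz_int.add ((hW n).const_mul δ))
          (ae_of_all _ fun x => by linarith [le_max_left (|g n x| - δ * W n x) 0])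
    _ = ∫ x, z n x ∂μ + δ * ∫ x, W n x ∂μ := by
        rw [integral_add hz_int ((hW n).const_mul δ), integral_const_mul]
    _ ≤ ∫ x, z n x ∂μ + ε := by
        gcongr
        calc δ * ∫ x, W n x ∂μ ≤ δ * (|M| + 1) := by
              gcongr
              linarith [hWM n, le_abs_self M]
          _ = ε := div_mul_cancel₀ _ (by positivity)

variable {w : α → ℝ} {p s : ℝ}

lemma lintegral_ofReal_abs_rpow_add (hw : Measurable w) :
    ∫⁻ x, ENNReal.ofReal (|w x| ^ p + |w x| ^ s) ∂μ =
      ∫⁻ x, ENNReal.ofReal (|w x| ^ p) ∂μ + ∫⁻ x, ENNReal.ofReal (|w x| ^ s) ∂μ := by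
  rw [← lintegral_add_left (by fun_prop)]
  exact lintegral_congr fun x => ENNReal.ofReal_add (by positivity) (by positivity)

lemma integrable_abs_rpow_add (hw : Measurable w)
    (hfin : ∫⁻ x, ENNReal.ofReal (|w x| ^ p) ∂μ + ∫⁻ x, ENNReal.ofReal (|w x| ^ s) ∂μ < ∞) :
    Integrable (fun x => |w x| ^ p + |w x| ^ s) μ :=
  ⟨by fun_prop, (hasFiniteIntegral_iff_ofReal (ae_of_all _ fun x => by positivity)).2
    (by rwa [lintegral_ofReal_abs_rpow_add hw])⟩

lemma integral_abs_rpow_add (hw : Measurable w) :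
    ∫ x, (|w x| ^ p + |w x| ^ s) ∂μ =
      (∫⁻ x, ENNReal.ofReal (|w x| ^ p) ∂μ + ∫⁻ x, ENNReal.ofReal (|w x| ^ s) ∂μ).toReal := by
  rw [integral_eq_lintegral_of_nonneg_ae (ae_of_all _ fun x => by positivity) (by fun_prop),
    lintegral_ofReal_abs_rpow_add hw]

end DominatedConvergence

theorem stmt5_general (N : ℕ) (p s : ℝ) (hp : 1 < p) (hps : p < s)
    (f : ℝ → ℝ) (hf : Continuous f)
    (h0 : Tendsto (fun t : ℝ => f t / |t| ^ (p - 1)) (𝓝[≠] (0 : ℝ)) (𝓝 0))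
    (hinf : Tendsto (fun t : ℝ => f t / |t| ^ (s - 1)) (Filter.cocompact ℝ) (𝓝 0))
    (u : ℕ → EuclideanSpace ℝ (Fin N) → ℝ) (v : EuclideanSpace ℝ (Fin N) → ℝ)
    (hu : ∀ n, Measurable (u n)) (hv : Measurable v)
    (hae : ∀ᵐ x : EuclideanSpace ℝ (Fin N), Tendsto (fun n => u n x) atTop (𝓝 (v x)))
    (hbdd : (⨆ n, ((∫⁻ x : EuclideanSpace ℝ (Fin N), ENNReal.ofReal (|u n x| ^ p))
        + ∫⁻ x : EuclideanSpace ℝ (Fin N), ENNReal.ofReal (|u n x| ^ s))) < ⊤)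
    (hvint : ((∫⁻ x : EuclideanSpace ℝ (Fin N), ENNReal.ofReal (|v x| ^ p))
        + ∫⁻ x : EuclideanSpace ℝ (Fin N), ENNReal.ofReal (|v x| ^ s)) < ⊤) :
    Tendsto (fun n => ∫ x : EuclideanSpace ℝ (Fin N),
        ((∫ τ in (0:ℝ)..(u n x - v x), f τ) - (∫ τ in (0:ℝ)..(u n x), f τ)
          + ∫ τ in (0:ℝ)..(v x), f τ)) atTop (𝓝 0) := by
  have hF : Continuous fun t => ∫ τ in (0 : ℝ)..t, f τ :=
    intervalIntegral.continuous_primitive (fun a b => hf.intervalIntegrable a b) 0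
  have hu_le (n : ℕ) := le_iSup (fun n => (∫⁻ x, ENNReal.ofReal (|u n x| ^ p))
    + ∫⁻ x, ENNReal.ofReal (|u n x| ^ s)) n
  refine tendsto_integral_of_abs_le_mul_add (W := fun n x => |u n x| ^ p + |u n x| ^ s)
    (fun n => by fun_prop) ?_ (fun n => integrable_abs_rpow_add (hu n) ((hu_le n).trans_lt hbdd))
    (fun n => ae_of_all _ fun x => by positivity)
    (fun n => (integral_abs_rpow_add (hu n)).trans_le (ENNReal.toReal_mono hbdd.ne (hu_le n)))
    fun ε hε => ?_
  · filter_upwards [hae] with x hx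
    simpa using ((hF.tendsto 0).comp (by simpa using hx.sub_const (v x))).sub
      ((hF.tendsto _).comp hx) |>.add_const (∫ τ in (0 : ℝ)..v x, f τ)
  · obtain ⟨C, hC⟩ := exists_abs_primitive_sub_sub_add_le hf hp.le (by linarith)
      (fun ε hε => exists_abs_le_rpow_add_rpow hf hp h0 hinf hε) hε
    exact ⟨_, (integrable_abs_rpow_add hv hvint).const_mul (2 * C),
      fun n => ae_of_all _ fun x => hC (u n x) (v x)⟩

theorem stmt5 (N : ℕ) (hN : 1 ≤ N) (p s : ℝ) (hp : 1 < p) (hps : p < s)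
    (f : ℝ → ℝ) (hf : Continuous f)
    (h0 : Tendsto (fun t : ℝ => f t / |t| ^ (p - 1)) (𝓝[≠] (0 : ℝ)) (𝓝 0))
    (hinf : Tendsto (fun t : ℝ => f t / |t| ^ (s - 1)) (Filter.cocompact ℝ) (𝓝 0))
    (u : ℕ → EuclideanSpace ℝ (Fin N) → ℝ) (v : EuclideanSpace ℝ (Fin N) → ℝ)
    (hu : ∀ n, Measurable (u n)) (hv : Measurable v)
    (hae : ∀ᵐ x : EuclideanSpace ℝ (Fin N), Tendsto (fun n => u n x) atTop (𝓝 (v x)))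
    (hbdd : (⨆ n, ((∫⁻ x : EuclideanSpace ℝ (Fin N), ENNReal.ofReal (|u n x| ^ p))
        + ∫⁻ x : EuclideanSpace ℝ (Fin N), ENNReal.ofReal (|u n x| ^ s))) < ⊤)
    (hvint : ((∫⁻ x : EuclideanSpace ℝ (Fin N), ENNReal.ofReal (|v x| ^ p))
        + ∫⁻ x : EuclideanSpace ℝ (Fin N), ENNReal.ofReal (|v x| ^ s)) < ⊤) :
    Tendsto (fun n => ∫ x : EuclideanSpace ℝ (Fin N),
        ((∫ τ in (0:ℝ)..(u n x - v x), f τ) - (∫ τ in (0:ℝ)..(u n x), f τ)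
          + ∫ τ in (0:ℝ)..(v x), f τ)) atTop (𝓝 0) :=
  stmt5_general N p s hp hps f hf h0 hinf u v hu hv hae hbdd hvint
end

section
/- Let N ≥ 1 be an integer and 1 < p < s real numbers. Let f : ℝ → ℝ be continuous with lim_{t → 0} f(t)/|t|^{p-1} = 0 and lim_{|t| → ∞} f(t)/|t|^{s-1} = 0. Let u_n, u : ℝ^N → ℝ be measurable functions such that u_n → u almost everywhere on ℝ^N, ∫_{B_R(0)} |u_n − u|^p dx → 0 for every R > 0, sup_n (∫_{ℝ^N} |u_n|^p dx + ∫_{ℝ^N} |u_n|^s dx) < ∞, and ∫_{ℝ^N} |u|^p dx + ∫_{ℝ^N} |u|^s dx < ∞. Then sup { ∫_{ℝ^N} |f(u_n − u) − f(u_n) + f(u)| · |w| dx : w : ℝ^N → ℝ measurable with ∫_{ℝ^N} |w|^p dx ≤ 1 and ∫_{ℝ^N} |w|^s dx ≤ 1 } → 0 as n → ∞. -/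
/-!
Write `q = (p + s) / 2`. The growth conditions at `0` and at infinity, together with uniform
continuity of `f` on compact sets, give for every `δ > 0` a constant `C` with
`|f (a + b) - f a - f b| ≤ δ (|a|^(p-1) + |a|^(s-1) + |b|^(p-1) + |b|^(s-1)) + C |b|^(q-1)`.
Apply it with `(a, b) = (v, uₙ - v)` on a ball `B_R` and with `(a, b) = (uₙ - v, v)` outside.
By Hölder, the `δ`-terms are bounded uniformly in `n` and `w`, while the `C`-terms are bounded by
`(∫_{B_R} |uₙ - v|^q)^(1-1/q)` and `(∫_{B_Rᶜ} |v|^q)^(1-1/q)`. The first tends to `0` by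
Cauchy–Schwarz between the local `L^p` convergence and the uniform `L^s` bound; the second is
small once `R` is large.
-/

open Filter MeasureTheory
open scoped Topology ENNReal

lemma abs_add_rpow_le {t : ℝ} (ht : 0 ≤ t) (a b : ℝ) :
    |a + b| ^ t ≤ 2 ^ t * (|a| ^ t + |b| ^ t) := by
  have hmax : |a + b| ≤ 2 * max |a| |b| := by
    linarith [abs_add_le a b, le_max_left |a| |b|, le_max_right |a| |b|]
  calc |a + b| ^ t ≤ (2 * max |a| |b|) ^ t := by gcongr
    _ = 2 ^ t * max |a| |b| ^ t := Real.mul_rpow zero_le_two (le_max_of_le_left (abs_nonneg a))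
    _ ≤ 2 ^ t * (|a| ^ t + |b| ^ t) := by
      have := Real.rpow_nonneg (abs_nonneg a) t
      have := Real.rpow_nonneg (abs_nonneg b) t
      gcongr
      rcases max_cases |a| |b| with ⟨h, -⟩ | ⟨h, -⟩ <;> rw [h] <;> linarith

lemma rpow_le_rpow_add_rpow {x p q s : ℝ} (hx : 0 ≤ x) (hq : 0 < q) (hpq : p ≤ q)
    (hqs : q ≤ s) : x ^ q ≤ x ^ p + x ^ s := by
  rcases hx.eq_or_lt with rfl | hx0
  · rw [Real.zero_rpow hq.ne']
    positivity
  rcases le_total x 1 with h1 | h1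
  · linarith [Real.rpow_le_rpow_of_exponent_ge hx0 h1 hpq, Real.rpow_nonneg hx s]
  · linarith [Real.rpow_le_rpow_of_exponent_le h1 hqs, Real.rpow_nonneg hx p]

lemma abs_map_add_sub_le_of_abs_le {f : ℝ → ℝ} {c K e a b : ℝ} (he : 0 ≤ e) (hK : 0 ≤ K)
    (hab : |f (a + b)| ≤ c + K * |a + b| ^ e) (ha : |f a| ≤ c + K * |a| ^ e) :
    |f (a + b) - f a| ≤ 2 * c + K * (2 ^ e + 1) * (|a| ^ e + |b| ^ e) := by
  have h2 := mul_le_mul_of_nonneg_left (abs_add_rpow_le he a b) hK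
  have hb : 0 ≤ K * |b| ^ e := by positivity
  linarith [abs_sub (f (a + b)) (f a)]

lemma abs_le_mul_rpow_of_abs_div_le {y t K α : ℝ} (ht : t ≠ 0) (h : |y / |t| ^ α| ≤ K) :
    |y| ≤ K * |t| ^ α := by
  have hpos : 0 < |t| ^ α := Real.rpow_pos_of_pos (abs_pos.2 ht) α
  rwa [abs_div, abs_of_pos hpos, div_le_iff₀ hpos] at h

section GrowthOfNonlinearity

variable {f : ℝ → ℝ} {α β : ℝ}

lemma map_zero_eq_zero_of_tendsto_div_rpow (hf : ContinuousAt f 0) (hα : 0 < α)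
    (h0 : Tendsto (fun t => f t / |t| ^ α) (𝓝[≠] 0) (𝓝 0)) : f 0 = 0 := by
  have hpow : Tendsto (fun t : ℝ => |t| ^ α) (𝓝[≠] 0) (𝓝 0) := by
    have := ((continuous_abs.rpow_const fun _ => Or.inr hα.le).tendsto 0).mono_left
      (nhdsWithin_le_nhds (s := {0}ᶜ))
    simpa [Real.zero_rpow hα.ne'] using this
  have hf0 : Tendsto f (𝓝[≠] 0) (𝓝 0) := by
    have := (h0.mul hpow).congr' (eventually_nhdsWithin_of_forall fun t ht =>
      div_mul_cancel₀ (f t) (Real.rpow_pos_of_pos (abs_pos.2 ht) α).ne')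
    rwa [zero_mul] at this
  exact tendsto_nhds_unique (hf.tendsto.mono_left nhdsWithin_le_nhds) hf0

lemma exists_abs_le_mul_rpow_of_tendsto_nhdsNE (hf0 : f 0 = 0)
    (h0 : Tendsto (fun t => f t / |t| ^ α) (𝓝[≠] 0) (𝓝 0)) {K : ℝ} (hK : 0 < K) :
    ∃ r > 0, ∀ t, |t| ≤ r → |f t| ≤ K * |t| ^ α := by
  obtain ⟨r, hr, hball⟩ := Metric.eventually_nhds_iff_ball.1
    (eventually_nhdsWithin_iff.1 (h0.eventually (Metric.closedBall_mem_nhds 0 hK)))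
  refine ⟨r / 2, half_pos hr, fun t ht => ?_⟩
  rcases eq_or_ne t 0 with rfl | ht0
  · simp only [hf0, abs_zero]
    positivity
  · refine abs_le_mul_rpow_of_abs_div_le ht0 ?_
    simpa only [Set.mem_preimage, Metric.mem_closedBall, Real.dist_0_eq_abs] using
      hball t (by rw [Metric.mem_ball, Real.dist_0_eq_abs]; linarith) ht0

lemma exists_abs_le_mul_rpow_of_tendsto_cocompact
    (hinf : Tendsto (fun t => f t / |t| ^ β) (cocompact ℝ) (𝓝 0)) {K : ℝ} (hK : 0 < K) :
    ∃ M ≥ 1, ∀ t, M ≤ |t| → |f t| ≤ K * |t| ^ β := by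
  have h := hinf.eventually (Metric.closedBall_mem_nhds 0 hK)
  rw [← Metric.cobounded_eq_cocompact, ← comap_norm_atTop, eventually_comap,
    eventually_atTop] at h
  obtain ⟨M, hM⟩ := h
  refine ⟨max M 1, le_max_right _ _, fun t ht => ?_⟩
  have ht0 : t ≠ 0 := by
    rintro rfl
    rw [abs_zero] at ht
    linarith [le_max_right M 1]
  refine abs_le_mul_rpow_of_abs_div_le ht0 ?_
  simpa only [Set.mem_preimage, Metric.mem_closedBall, Real.dist_0_eq_abs] using
    hM ‖t‖ ((le_max_left M 1).trans ht) t rfl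

lemma exists_abs_le_add_mul_rpow (hf : Continuous f) {K M : ℝ} (hK : 0 ≤ K)
    (hlarge : ∀ t, M ≤ |t| → |f t| ≤ K * |t| ^ β) :
    ∃ C ≥ 0, ∀ t, |f t| ≤ C + K * |t| ^ β := by
  obtain ⟨C, hC⟩ := (isCompact_closedBall (0 : ℝ) M).exists_bound_of_continuousOn
    hf.continuousOn
  refine ⟨max C 0, le_max_right _ _, fun t => ?_⟩
  have hKt : 0 ≤ K * |t| ^ β := by positivity
  rcases le_total |t| M with ht | ht
  · have := hC t (by simpa using ht)
    rw [Real.norm_eq_abs] at this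
    linarith [le_max_left C 0]
  · linarith [hlarge t ht, le_max_right C 0]

lemma exists_abs_map_add_sub_le_of_continuous (hf : Continuous f) (L : ℝ) {ε : ℝ}
    (hε : 0 < ε) : ∃ ρ > 0, ∀ a b, |a| ≤ L → |b| ≤ ρ → |f (a + b) - f a| ≤ ε := by
  obtain ⟨ρ, hρ, h⟩ := Metric.uniformContinuousOn_iff_le.1
    ((isCompact_closedBall (0 : ℝ) (L + 1)).uniformContinuousOn_of_continuous
      hf.continuousOn) ε hε
  refine ⟨min ρ 1, by positivity, fun a b ha hb => ?_⟩
  have hb1 := hb.trans (min_le_right _ _)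
  have hbρ := hb.trans (min_le_left _ _)
  simpa [Real.dist_eq] using h (a + b)
    (by rw [Metric.mem_closedBall, Real.dist_0_eq_abs]; linarith [abs_add_le a b]) a
    (by rw [Metric.mem_closedBall, Real.dist_0_eq_abs]; linarith)
    (by simpa [Real.dist_eq] using hbρ)

lemma exists_abs_map_add_sub_le_of_tendsto (hf : Continuous f) (hα : 0 < α)
    (h0 : Tendsto (fun t => f t / |t| ^ α) (𝓝[≠] 0) (𝓝 0))
    (hinf : Tendsto (fun t => f t / |t| ^ β) (cocompact ℝ) (𝓝 0)) (hβ : 0 < β)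
    {K : ℝ} (hK : 0 < K) :
    ∃ ρ > 0, ∀ a b, |b| ≤ ρ → |f (a + b) - f a| ≤
      K * ((2 ^ α + 1) * (|a| ^ α + |b| ^ α) + (2 ^ β + 1) * (|a| ^ β + |b| ^ β)) := by
  obtain ⟨r, hr, hsmall⟩ := exists_abs_le_mul_rpow_of_tendsto_nhdsNE
    (map_zero_eq_zero_of_tendsto_div_rpow hf.continuousAt hα h0) h0 hK
  obtain ⟨M, hM, hlarge⟩ := exists_abs_le_mul_rpow_of_tendsto_cocompact hinf hK
  obtain ⟨ρ, hρ, huc⟩ := exists_abs_map_add_sub_le_of_continuous hf (2 * M)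
    (ε := K * (r / 2) ^ α) (by positivity)
  refine ⟨min ρ (min (r / 2) 1), by positivity, fun a b hb => ?_⟩
  have hbρ : |b| ≤ ρ := hb.trans (min_le_left _ _)
  have hbr : |b| ≤ r / 2 := hb.trans ((min_le_right _ _).trans (min_le_left _ _))
  have hb1 : |b| ≤ 1 := hb.trans ((min_le_right _ _).trans (min_le_right _ _))
  have hWα : 0 ≤ K * ((2 ^ α + 1) * (|a| ^ α + |b| ^ α)) := by positivity
  have hWβ : 0 ≤ K * ((2 ^ β + 1) * (|a| ^ β + |b| ^ β)) := by positivity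
  -- `|a|` small: growth at `0`; `|a|` moderate: uniform continuity; `|a|` large: growth at `∞`.
  rcases le_total |a| (r / 2) with ha | ha
  · have := abs_map_add_sub_le_of_abs_le (c := 0) hα.le hK.le
      (by simpa using hsmall (a + b) (by linarith [abs_add_le a b]))
      (by simpa using hsmall a (by linarith))
    linarith
  rcases le_total |a| (2 * M) with ha' | ha'
  · have : (r / 2) ^ α ≤ (2 ^ α + 1) * (|a| ^ α + |b| ^ α) := by
      have : (r / 2) ^ α ≤ |a| ^ α := by gcongr
      nlinarith [Real.rpow_nonneg zero_le_two α, Real.rpow_nonneg (abs_nonneg a) α,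
        Real.rpow_nonneg (abs_nonneg b) α]
    nlinarith [huc a b ha' hbρ]
  · have := abs_map_add_sub_le_of_abs_le (c := 0) hβ.le hK.le
      (by simpa using hlarge (a + b) (by linarith [abs_sub_abs_le_abs_add a b]))
      (by simpa using hlarge a (by linarith))
    linarith

lemma exists_abs_map_add_sub_sub_le_of_abs_le (hf : Continuous f) (hα : 0 < α)
    (h0 : Tendsto (fun t => f t / |t| ^ α) (𝓝[≠] 0) (𝓝 0))
    (hinf : Tendsto (fun t => f t / |t| ^ β) (cocompact ℝ) (𝓝 0)) (hβ : 0 < β)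
    {K : ℝ} (hK : 0 < K) :
    ∃ ρ > 0, ∀ a b, |b| ≤ ρ → |f (a + b) - f a - f b| ≤
      K * (2 ^ α + 2 ^ β + 2) * ((|a| ^ α + |a| ^ β) + (|b| ^ α + |b| ^ β)) := by
  obtain ⟨r, hr, hsmall⟩ := exists_abs_le_mul_rpow_of_tendsto_nhdsNE
    (map_zero_eq_zero_of_tendsto_div_rpow hf.continuousAt hα h0) h0 hK
  obtain ⟨ρ, hρ, hdiff⟩ := exists_abs_map_add_sub_le_of_tendsto hf hα h0 hinf hβ hK
  refine ⟨min ρ r, lt_min hρ hr, fun a b hb => ?_⟩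
  have hW : (2 ^ α + 1) * (|a| ^ α + |b| ^ α) + (2 ^ β + 1) * (|a| ^ β + |b| ^ β) +
      |b| ^ α ≤ (2 ^ α + 2 ^ β + 2) * ((|a| ^ α + |a| ^ β) + (|b| ^ α + |b| ^ β)) := by
    nlinarith [Real.rpow_nonneg zero_le_two α, Real.rpow_nonneg zero_le_two β,
      Real.rpow_nonneg (abs_nonneg a) α, Real.rpow_nonneg (abs_nonneg a) β,
      Real.rpow_nonneg (abs_nonneg b) α, Real.rpow_nonneg (abs_nonneg b) β]
  calc |f (a + b) - f a - f b| ≤ |f (a + b) - f a| + |f b| := abs_sub _ _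
    _ ≤ K * ((2 ^ α + 1) * (|a| ^ α + |b| ^ α) + (2 ^ β + 1) * (|a| ^ β + |b| ^ β)) +
        K * |b| ^ α :=
      add_le_add (hdiff a b (hb.trans (min_le_left _ _)))
        (hsmall b (hb.trans (min_le_right _ _)))
    _ ≤ _ := by
      rw [mul_assoc, ← mul_add]
      exact mul_le_mul_of_nonneg_left hW hK.le

lemma exists_abs_map_add_sub_sub_le_of_le_abs (hf : Continuous f)
    (hinf : Tendsto (fun t => f t / |t| ^ β) (cocompact ℝ) (𝓝 0)) (hβ : 0 < β)
    {K ρ γ : ℝ} (hK : 0 < K) (hρ : 0 < ρ) (hγ : 0 ≤ γ) :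
    ∃ C ≥ 0, ∀ a b, ρ ≤ |b| → |f (a + b) - f a - f b| ≤
      K * (2 ^ α + 2 ^ β + 2) * ((|a| ^ α + |a| ^ β) + (|b| ^ α + |b| ^ β)) +
        C * |b| ^ γ := by
  obtain ⟨M, -, hlarge⟩ := exists_abs_le_mul_rpow_of_tendsto_cocompact hinf hK
  obtain ⟨C, hC, hglobal⟩ := exists_abs_le_add_mul_rpow hf hK.le hlarge
  refine ⟨3 * C / ρ ^ γ, by positivity, fun a b hb => ?_⟩
  have hC3 : 3 * C ≤ 3 * C / ρ ^ γ * |b| ^ γ := by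
    rw [div_mul_eq_mul_div, le_div_iff₀ (by positivity)]
    gcongr
  have hW : (2 ^ β + 1) * (|a| ^ β + |b| ^ β) + |b| ^ β ≤
      (2 ^ α + 2 ^ β + 2) * ((|a| ^ α + |a| ^ β) + (|b| ^ α + |b| ^ β)) := by
    nlinarith [Real.rpow_nonneg zero_le_two α, Real.rpow_nonneg zero_le_two β,
      Real.rpow_nonneg (abs_nonneg a) α, Real.rpow_nonneg (abs_nonneg a) β,
      Real.rpow_nonneg (abs_nonneg b) α, Real.rpow_nonneg (abs_nonneg b) β]
  calc |f (a + b) - f a - f b| ≤ |f (a + b) - f a| + |f b| := abs_sub _ _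
    _ ≤ (2 * C + K * (2 ^ β + 1) * (|a| ^ β + |b| ^ β)) + (C + K * |b| ^ β) :=
      add_le_add (abs_map_add_sub_le_of_abs_le hβ.le hK.le (hglobal _) (hglobal a))
        (hglobal b)
    _ ≤ _ := by linarith [mul_le_mul_of_nonneg_left hW hK.le]

theorem exists_abs_map_add_sub_sub_le (hf : Continuous f) (hα : 0 < α)
    (h0 : Tendsto (fun t => f t / |t| ^ α) (𝓝[≠] 0) (𝓝 0))
    (hinf : Tendsto (fun t => f t / |t| ^ β) (cocompact ℝ) (𝓝 0)) (hβ : 0 < β)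
    {γ : ℝ} (hγ : 0 ≤ γ) {δ : ℝ} (hδ : 0 < δ) :
    ∃ C ≥ 0, ∀ a b, |f (a + b) - f a - f b| ≤
      δ * ((|a| ^ α + |a| ^ β) + (|b| ^ α + |b| ^ β)) + C * |b| ^ γ := by
  have hc : (0 : ℝ) < 2 ^ α + 2 ^ β + 2 := by positivity
  have hK : δ / (2 ^ α + 2 ^ β + 2) * (2 ^ α + 2 ^ β + 2) = δ := div_mul_cancel₀ _ hc.ne'
  obtain ⟨ρ, hρ, hsmall⟩ :=
    exists_abs_map_add_sub_sub_le_of_abs_le hf hα h0 hinf hβ (div_pos hδ hc)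
  obtain ⟨C, hC, hlarge⟩ :=
    exists_abs_map_add_sub_sub_le_of_le_abs (α := α) hf hinf hβ (div_pos hδ hc) hρ hγ
  refine ⟨C, hC, fun a b => ?_⟩
  rw [← hK]
  rcases le_total |b| ρ with hb | hb
  · exact (hsmall a b hb).trans (le_add_of_nonneg_right (by positivity))
  · exact hlarge a b hb

end GrowthOfNonlinearity

lemma ENNReal.tendsto_const_mul_rpow_of_tendsto_zero {ι : Type*} {l : Filter ι}
    {c : ℝ≥0∞} (hc : c ≠ ⊤) {γ : ℝ} (hγ : 0 < γ) {Y : ι → ℝ≥0∞}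
    (hY : Tendsto Y l (𝓝 0)) : Tendsto (fun i => c * Y i ^ γ) l (𝓝 0) := by
  simpa [ENNReal.zero_rpow_of_pos hγ] using
    ENNReal.Tendsto.const_mul (((ENNReal.continuous_rpow_const (y := γ)).tendsto 0).comp hY)
      (Or.inr hc)

lemma ENNReal.ofReal_abs_mul_le_of_abs_le {y z δ C Φ Ψ : ℝ} (hδ : 0 ≤ δ) (hC : 0 ≤ C)
    (hΦ : 0 ≤ Φ) (hΨ : 0 ≤ Ψ) (h : |y| ≤ δ * Φ + C * Ψ) :
    ENNReal.ofReal (|y| * |z|) ≤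
      ENNReal.ofReal δ * ENNReal.ofReal (Φ * |z|) +
        ENNReal.ofReal C * ENNReal.ofReal (Ψ * |z|) := by
  rw [← ENNReal.ofReal_mul hδ, ← ENNReal.ofReal_mul hC,
    ← ENNReal.ofReal_add (by positivity) (by positivity)]
  exact ENNReal.ofReal_le_ofReal (by nlinarith [abs_nonneg z])

section LebesgueIntegralBounds

variable {X : Type*} [MeasurableSpace X] {μ : Measure X}

lemma lintegral_ofReal_abs_rpow_le_add {g : X → ℝ} (hg : Measurable g) {p q s : ℝ}
    (hq : 0 < q) (hpq : p ≤ q) (hqs : q ≤ s) :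
    ∫⁻ x, ENNReal.ofReal (|g x| ^ q) ∂μ ≤
      ∫⁻ x, ENNReal.ofReal (|g x| ^ p) ∂μ + ∫⁻ x, ENNReal.ofReal (|g x| ^ s) ∂μ := by
  rw [← lintegral_add_left (hg.abs.pow_const p).ennreal_ofReal]
  refine lintegral_mono fun x => ?_
  rw [← ENNReal.ofReal_add (by positivity) (by positivity)]
  exact ENNReal.ofReal_le_ofReal (rpow_le_rpow_add_rpow (abs_nonneg _) hq hpq hqs)

lemma lintegral_ofReal_abs_sub_rpow_le {g h : X → ℝ} (hg : Measurable g) {t : ℝ}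
    (ht : 0 ≤ t) :
    ∫⁻ x, ENNReal.ofReal (|g x - h x| ^ t) ∂μ ≤ ENNReal.ofReal (2 ^ t) *
      (∫⁻ x, ENNReal.ofReal (|g x| ^ t) ∂μ + ∫⁻ x, ENNReal.ofReal (|h x| ^ t) ∂μ) := by
  rw [← lintegral_add_left (hg.abs.pow_const t).ennreal_ofReal,
    ← lintegral_const_mul' _ _ ENNReal.ofReal_ne_top]
  refine lintegral_mono fun x => ?_
  rw [← ENNReal.ofReal_add (by positivity) (by positivity), ← ENNReal.ofReal_mul (by positivity)]
  refine ENNReal.ofReal_le_ofReal ?_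
  simpa [sub_eq_add_neg] using abs_add_rpow_le ht (g x) (-h x)

lemma lintegral_ofReal_abs_rpow_sub_one_mul_le {t : ℝ} (ht : 1 < t) {g w : X → ℝ}
    (hg : Measurable g) (hw : Measurable w) {A B : ℝ≥0∞}
    (hgA : ∫⁻ x, ENNReal.ofReal (|g x| ^ t) ∂μ ≤ A)
    (hwB : ∫⁻ x, ENNReal.ofReal (|w x| ^ t) ∂μ ≤ B) :
    ∫⁻ x, ENNReal.ofReal (|g x| ^ (t - 1) * |w x|) ∂μ ≤ A ^ (1 - 1 / t) * B ^ (1 / t) := by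
  have ht1 : t - 1 ≠ 0 := sub_ne_zero.2 ht.ne'
  have hconj : (t / (t - 1)).HolderConjugate t := (Real.HolderConjugate.conjExponent ht).symm
  have hexp : (t - 1) * (t / (t - 1)) = t := by field_simp
  have hinv : 1 / (t / (t - 1)) = 1 - 1 / t := by field_simp
  have hθ : 0 ≤ 1 - 1 / t := by
    rw [sub_nonneg, div_le_one (by linarith)]
    exact ht.le
  calc ∫⁻ x, ENNReal.ofReal (|g x| ^ (t - 1) * |w x|) ∂μ
      = ∫⁻ x, ((fun x => ENNReal.ofReal (|g x| ^ (t - 1))) *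
          fun x => ENNReal.ofReal |w x|) x ∂μ :=
        lintegral_congr fun x => ENNReal.ofReal_mul (by positivity)
    _ ≤ (∫⁻ x, ENNReal.ofReal (|g x| ^ (t - 1)) ^ (t / (t - 1)) ∂μ) ^ (1 / (t / (t - 1))) *
          (∫⁻ x, ENNReal.ofReal |w x| ^ t ∂μ) ^ (1 / t) :=
        ENNReal.lintegral_mul_le_Lp_mul_Lq μ hconj
          (hg.abs.pow_const _).ennreal_ofReal.aemeasurable hw.abs.ennreal_ofReal.aemeasurable
    _ = (∫⁻ x, ENNReal.ofReal (|g x| ^ t) ∂μ) ^ (1 - 1 / t) *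
          (∫⁻ x, ENNReal.ofReal (|w x| ^ t) ∂μ) ^ (1 / t) := by
        have hg' : ∀ x, ENNReal.ofReal (|g x| ^ (t - 1)) ^ (t / (t - 1)) =
            ENNReal.ofReal (|g x| ^ t) := fun x => by
          rw [ENNReal.ofReal_rpow_of_nonneg (by positivity) hconj.nonneg,
            ← Real.rpow_mul (abs_nonneg _), hexp]
        have hw' : ∀ x, ENNReal.ofReal |w x| ^ t = ENNReal.ofReal (|w x| ^ t) := fun x =>
          ENNReal.ofReal_rpow_of_nonneg (abs_nonneg _) (by linarith)
        simp only [hg', hw', hinv]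
    _ ≤ A ^ (1 - 1 / t) * B ^ (1 / t) := by gcongr

lemma lintegral_ofReal_abs_rpow_midpoint_le {g : X → ℝ} (hg : Measurable g) {p s : ℝ}
    (hp : 0 ≤ p) (hs : 0 ≤ s) :
    ∫⁻ x, ENNReal.ofReal (|g x| ^ ((p + s) / 2)) ∂μ ≤
      (∫⁻ x, ENNReal.ofReal (|g x| ^ p) ∂μ) ^ (1 / 2 : ℝ) *
        (∫⁻ x, ENNReal.ofReal (|g x| ^ s) ∂μ) ^ (1 / 2 : ℝ) := by
  calc ∫⁻ x, ENNReal.ofReal (|g x| ^ ((p + s) / 2)) ∂μ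
      = ∫⁻ x, ((fun x => ENNReal.ofReal (|g x| ^ (p / 2))) *
          fun x => ENNReal.ofReal (|g x| ^ (s / 2))) x ∂μ :=
        lintegral_congr fun x => by
          rw [Pi.mul_apply, ← ENNReal.ofReal_mul (by positivity),
            ← Real.rpow_add_of_nonneg (abs_nonneg _) (by positivity) (by positivity), add_div]
    _ ≤ _ := ENNReal.lintegral_mul_le_Lp_mul_Lq μ Real.HolderConjugate.two_two
          (hg.abs.pow_const _).ennreal_ofReal.aemeasurable
          (hg.abs.pow_const _).ennreal_ofReal.aemeasurable
    _ = _ := by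
        have hsq : ∀ x (e : ℝ), 0 ≤ e → ENNReal.ofReal (|g x| ^ (e / 2)) ^ (2 : ℝ) =
            ENNReal.ofReal (|g x| ^ e) := fun x e he => by
          rw [ENNReal.ofReal_rpow_of_nonneg (by positivity) zero_le_two,
            ← Real.rpow_mul (abs_nonneg _), div_mul_cancel₀ e two_ne_zero]
        simp only [hsq _ p hp, hsq _ s hs]

lemma tendsto_lintegral_ofReal_abs_rpow_midpoint {ι : Type*} {l : Filter ι} {G : ι → X → ℝ}
    (hG : ∀ i, Measurable (G i)) {p s : ℝ} (hp : 0 ≤ p) (hs : 0 ≤ s) {A : ℝ≥0∞} (hA : A ≠ ⊤)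
    (hGp : Tendsto (fun i => ∫⁻ x, ENNReal.ofReal (|G i x| ^ p) ∂μ) l (𝓝 0))
    (hGs : ∀ i, ∫⁻ x, ENNReal.ofReal (|G i x| ^ s) ∂μ ≤ A) :
    Tendsto (fun i => ∫⁻ x, ENNReal.ofReal (|G i x| ^ ((p + s) / 2)) ∂μ) l (𝓝 0) := by
  refine tendsto_of_tendsto_of_tendsto_of_le_of_le tendsto_const_nhds
    (ENNReal.tendsto_const_mul_rpow_of_tendsto_zero (γ := 1 / 2)
      (ENNReal.rpow_ne_top_of_nonneg (by norm_num : (0 : ℝ) ≤ 1 / 2) hA) (by norm_num) hGp)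
    (fun _ => by positivity) fun i => ?_
  rw [mul_comm]
  exact (lintegral_ofReal_abs_rpow_midpoint_le (hG i) hp hs).trans (by gcongr; exact hGs i)

lemma lintegral_ofReal_add_mul_abs {g h w : X → ℝ} (hg : Measurable g) (hw : Measurable w)
    (hg0 : ∀ x, 0 ≤ g x) (hh0 : ∀ x, 0 ≤ h x) :
    ∫⁻ x, ENNReal.ofReal ((g x + h x) * |w x|) ∂μ =
      ∫⁻ x, ENNReal.ofReal (g x * |w x|) ∂μ + ∫⁻ x, ENNReal.ofReal (h x * |w x|) ∂μ := by
  rw [← lintegral_add_left (by fun_prop)]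
  refine lintegral_congr fun x => ?_
  rw [add_mul, ENNReal.ofReal_add (mul_nonneg (hg0 x) (abs_nonneg _))
    (mul_nonneg (hh0 x) (abs_nonneg _))]

lemma lintegral_ofReal_rpow_add_rpow_mul_le {p s : ℝ} (hp : 1 < p) (hs : 1 < s)
    {h w : X → ℝ} (hh : Measurable h) (hw : Measurable w) {A : ℝ≥0∞}
    (hhp : ∫⁻ x, ENNReal.ofReal (|h x| ^ p) ∂μ ≤ A)
    (hhs : ∫⁻ x, ENNReal.ofReal (|h x| ^ s) ∂μ ≤ A)
    (hwp : ∫⁻ x, ENNReal.ofReal (|w x| ^ p) ∂μ ≤ 1)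
    (hws : ∫⁻ x, ENNReal.ofReal (|w x| ^ s) ∂μ ≤ 1) :
    ∫⁻ x, ENNReal.ofReal ((|h x| ^ (p - 1) + |h x| ^ (s - 1)) * |w x|) ∂μ ≤
      A ^ (1 - 1 / p) + A ^ (1 - 1 / s) := by
  rw [lintegral_ofReal_add_mul_abs (hh.abs.pow_const _) hw (fun _ => by positivity)
    (fun _ => by positivity)]
  gcongr
  · simpa using lintegral_ofReal_abs_rpow_sub_one_mul_le hp hh hw hhp hwp
  · simpa using lintegral_ofReal_abs_rpow_sub_one_mul_le hs hh hw hhs hws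

lemma lintegral_ofReal_abs_rpow_sub_one_mul_le_two_rpow {p q s : ℝ} (hq : 1 < q)
    (hpq : p ≤ q) (hqs : q ≤ s) {g w : X → ℝ} (hg : Measurable g) (hw : Measurable w)
    (hwp : ∫⁻ x, ENNReal.ofReal (|w x| ^ p) ∂μ ≤ 1)
    (hws : ∫⁻ x, ENNReal.ofReal (|w x| ^ s) ∂μ ≤ 1) :
    ∫⁻ x, ENNReal.ofReal (|g x| ^ (q - 1) * |w x|) ∂μ ≤
      2 ^ (1 / q) * (∫⁻ x, ENNReal.ofReal (|g x| ^ q) ∂μ) ^ (1 - 1 / q) := by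
  have hwq : ∫⁻ x, ENNReal.ofReal (|w x| ^ q) ∂μ ≤ 2 :=
    (lintegral_ofReal_abs_rpow_le_add hw (by linarith) hpq hqs).trans
      ((add_le_add hwp hws).trans_eq one_add_one_eq_two)
  rw [mul_comm]
  exact lintegral_ofReal_abs_rpow_sub_one_mul_le hq hg hw le_rfl hwq

lemma lintegral_ofReal_abs_mul_le_of_abs_le {F Φ Ψ w : X → ℝ} {δ C : ℝ} (hδ : 0 ≤ δ)
    (hC : 0 ≤ C) (hΦ : Measurable Φ) (hw : Measurable w) (hΦ0 : ∀ x, 0 ≤ Φ x)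
    (hΨ0 : ∀ x, 0 ≤ Ψ x) (hF : ∀ x, |F x| ≤ δ * Φ x + C * Ψ x) :
    ∫⁻ x, ENNReal.ofReal (|F x| * |w x|) ∂μ ≤
      ENNReal.ofReal δ * ∫⁻ x, ENNReal.ofReal (Φ x * |w x|) ∂μ +
        ENNReal.ofReal C * ∫⁻ x, ENNReal.ofReal (Ψ x * |w x|) ∂μ := by
  rw [← lintegral_const_mul' _ _ ENNReal.ofReal_ne_top,
    ← lintegral_const_mul' _ _ ENNReal.ofReal_ne_top, ← lintegral_add_left (by fun_prop)]
  exact lintegral_mono fun x =>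
    ENNReal.ofReal_abs_mul_le_of_abs_le hδ hC (hΦ0 x) (hΨ0 x) (hF x)

theorem lintegral_abs_map_sub_sub_mul_le_of_abs_le {f : ℝ → ℝ} {α β γ δ C : ℝ} (hδ : 0 ≤ δ)
    (hC : 0 ≤ C) (hkey : ∀ a b, |f (a + b) - f a - f b| ≤
      δ * ((|a| ^ α + |a| ^ β) + (|b| ^ α + |b| ^ β)) + C * |b| ^ γ)
    {u v w : X → ℝ} (hu : Measurable u) (hv : Measurable v) (hw : Measurable w)
    {S : Set X} (hS : MeasurableSet S) :
    ∫⁻ x, ENNReal.ofReal (|f (u x - v x) - f (u x) + f (v x)| * |w x|) ∂μ ≤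
      ENNReal.ofReal δ * ∫⁻ x, ENNReal.ofReal (((|u x - v x| ^ α + |u x - v x| ^ β) +
          (|v x| ^ α + |v x| ^ β)) * |w x|) ∂μ +
        ENNReal.ofReal C * (∫⁻ x in S, ENNReal.ofReal (|u x - v x| ^ γ * |w x|) ∂μ +
          ∫⁻ x in Sᶜ, ENNReal.ofReal (|v x| ^ γ * |w x|) ∂μ) := by
  set F : X → ℝ := fun x => f (u x - v x) - f (u x) + f (v x)
  set Φ : X → ℝ := fun x => (|u x - v x| ^ α + |u x - v x| ^ β) + (|v x| ^ α + |v x| ^ β)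
  have hΦ : Measurable Φ := by fun_prop
  have hΦ0 : ∀ x, 0 ≤ Φ x := fun x => by positivity
  have hF_in : ∀ x, |F x| ≤ δ * Φ x + C * |u x - v x| ^ γ := fun x => by
    have h := hkey (v x) (u x - v x)
    rw [add_sub_cancel] at h
    calc |F x| = |f (u x) - f (v x) - f (u x - v x)| := by
          rw [← abs_neg]; simp only [F]; ring_nf
      _ ≤ _ := h.trans_eq (by simp only [Φ]; ring)
  have hF_out : ∀ x, |F x| ≤ δ * Φ x + C * |v x| ^ γ := fun x => by
    have h := hkey (u x - v x) (v x)
    rw [sub_add_cancel] at h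
    calc |F x| = |f (u x) - f (u x - v x) - f (v x)| := by
          rw [← abs_neg]; simp only [F]; ring_nf
      _ ≤ _ := h
  calc ∫⁻ x, ENNReal.ofReal (|F x| * |w x|) ∂μ
      = ∫⁻ x in S, ENNReal.ofReal (|F x| * |w x|) ∂μ +
          ∫⁻ x in Sᶜ, ENNReal.ofReal (|F x| * |w x|) ∂μ := (lintegral_add_compl _ hS).symm
    _ ≤ (ENNReal.ofReal δ * ∫⁻ x in S, ENNReal.ofReal (Φ x * |w x|) ∂μ +
          ENNReal.ofReal C * ∫⁻ x in S, ENNReal.ofReal (|u x - v x| ^ γ * |w x|) ∂μ) +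
        (ENNReal.ofReal δ * ∫⁻ x in Sᶜ, ENNReal.ofReal (Φ x * |w x|) ∂μ +
          ENNReal.ofReal C * ∫⁻ x in Sᶜ, ENNReal.ofReal (|v x| ^ γ * |w x|) ∂μ) :=
      add_le_add
        (lintegral_ofReal_abs_mul_le_of_abs_le hδ hC hΦ hw hΦ0 (fun _ => by positivity) hF_in)
        (lintegral_ofReal_abs_mul_le_of_abs_le hδ hC hΦ hw hΦ0 (fun _ => by positivity) hF_out)
    _ = _ := by
      rw [← lintegral_add_compl (μ := μ) (fun x => ENNReal.ofReal (Φ x * |w x|)) hS]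
      ring

theorem lintegral_abs_map_sub_sub_mul_le {f : ℝ → ℝ} {p q s δ C : ℝ} (hp : 1 < p)
    (hpq : p ≤ q) (hqs : q ≤ s) (hδ : 0 ≤ δ) (hC : 0 ≤ C)
    (hkey : ∀ a b, |f (a + b) - f a - f b| ≤
      δ * ((|a| ^ (p - 1) + |a| ^ (s - 1)) + (|b| ^ (p - 1) + |b| ^ (s - 1))) +
        C * |b| ^ (q - 1))
    {u v w : X → ℝ} (hu : Measurable u) (hv : Measurable v) (hw : Measurable w) {A : ℝ≥0∞}
    (hup : ∫⁻ x, ENNReal.ofReal (|u x - v x| ^ p) ∂μ ≤ A)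
    (hus : ∫⁻ x, ENNReal.ofReal (|u x - v x| ^ s) ∂μ ≤ A)
    (hvp : ∫⁻ x, ENNReal.ofReal (|v x| ^ p) ∂μ ≤ A)
    (hvs : ∫⁻ x, ENNReal.ofReal (|v x| ^ s) ∂μ ≤ A)
    (hwp : ∫⁻ x, ENNReal.ofReal (|w x| ^ p) ∂μ ≤ 1)
    (hws : ∫⁻ x, ENNReal.ofReal (|w x| ^ s) ∂μ ≤ 1) {S : Set X} (hS : MeasurableSet S) :
    ∫⁻ x, ENNReal.ofReal (|f (u x - v x) - f (u x) + f (v x)| * |w x|) ∂μ ≤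
      ENNReal.ofReal δ * (2 * (A ^ (1 - 1 / p) + A ^ (1 - 1 / s))) +
        ENNReal.ofReal C * 2 ^ (1 / q) *
          ((∫⁻ x in S, ENNReal.ofReal (|u x - v x| ^ q) ∂μ) ^ (1 - 1 / q) +
            (∫⁻ x in Sᶜ, ENNReal.ofReal (|v x| ^ q) ∂μ) ^ (1 - 1 / q)) := by
  have hs : 1 < s := by linarith
  have hq : 1 < q := by linarith
  have huv : Measurable fun x => u x - v x := hu.sub hv
  have hw_on : ∀ T : Set X, ∫⁻ x in T, ENNReal.ofReal (|w x| ^ p) ∂μ ≤ 1 ∧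
      ∫⁻ x in T, ENNReal.ofReal (|w x| ^ s) ∂μ ≤ 1 := fun T =>
    ⟨(setLIntegral_le_lintegral _ _).trans hwp, (setLIntegral_le_lintegral _ _).trans hws⟩
  refine (lintegral_abs_map_sub_sub_mul_le_of_abs_le hδ hC hkey hu hv hw hS).trans
    (add_le_add ?_ ?_)
  · rw [lintegral_ofReal_add_mul_abs (by fun_prop) hw (fun _ => by positivity)
      (fun _ => by positivity), two_mul]
    exact mul_le_mul_right (add_le_add
      (lintegral_ofReal_rpow_add_rpow_mul_le hp hs huv hw hup hus hwp hws)
      (lintegral_ofReal_rpow_add_rpow_mul_le hp hs hv hw hvp hvs hwp hws)) _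
  · rw [mul_assoc]
    refine mul_le_mul_right ?_ _
    rw [mul_add]
    exact add_le_add
      (lintegral_ofReal_abs_rpow_sub_one_mul_le_two_rpow hq hpq hqs huv hw
        (hw_on S).1 (hw_on S).2)
      (lintegral_ofReal_abs_rpow_sub_one_mul_le_two_rpow hq hpq hqs hv hw
        (hw_on Sᶜ).1 (hw_on Sᶜ).2)

lemma exists_lintegral_ofReal_abs_sub_rpow_le {ι : Type*} {u : ι → X → ℝ} {v : X → ℝ}
    (hu : ∀ i, Measurable (u i)) {p s : ℝ} (hp : 0 ≤ p) (hps : p ≤ s)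
    (hbdd : (⨆ i, ((∫⁻ x, ENNReal.ofReal (|u i x| ^ p) ∂μ) +
      ∫⁻ x, ENNReal.ofReal (|u i x| ^ s) ∂μ)) < ⊤)
    (hv : ((∫⁻ x, ENNReal.ofReal (|v x| ^ p) ∂μ) + ∫⁻ x, ENNReal.ofReal (|v x| ^ s) ∂μ) < ⊤) :
    ∃ A ≠ ⊤, (∀ i, ∫⁻ x, ENNReal.ofReal (|u i x - v x| ^ p) ∂μ ≤ A ∧
        ∫⁻ x, ENNReal.ofReal (|u i x - v x| ^ s) ∂μ ≤ A) ∧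
      ∫⁻ x, ENNReal.ofReal (|v x| ^ p) ∂μ ≤ A ∧ ∫⁻ x, ENNReal.ofReal (|v x| ^ s) ∂μ ≤ A := by
  set B := ⨆ i, ((∫⁻ x, ENNReal.ofReal (|u i x| ^ p) ∂μ) +
      ∫⁻ x, ENNReal.ofReal (|u i x| ^ s) ∂μ)
  set V := (∫⁻ x, ENNReal.ofReal (|v x| ^ p) ∂μ) + ∫⁻ x, ENNReal.ofReal (|v x| ^ s) ∂μ
  have h2s : 1 ≤ ENNReal.ofReal (2 ^ s) :=
    ENNReal.one_le_ofReal.2 (Real.one_le_rpow one_le_two (hp.trans hps))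
  have hbound : ∀ t, 0 ≤ t → t ≤ s → (∀ i, ∫⁻ x, ENNReal.ofReal (|u i x| ^ t) ∂μ ≤ B) →
      ∫⁻ x, ENNReal.ofReal (|v x| ^ t) ∂μ ≤ V →
      (∀ i, ∫⁻ x, ENNReal.ofReal (|u i x - v x| ^ t) ∂μ ≤ ENNReal.ofReal (2 ^ s) * (B + V)) ∧
        ∫⁻ x, ENNReal.ofReal (|v x| ^ t) ∂μ ≤ ENNReal.ofReal (2 ^ s) * (B + V) := by
    intro t ht hts huB hvV
    refine ⟨fun i => (lintegral_ofReal_abs_sub_rpow_le (hu i) ht).trans ?_, ?_⟩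
    · gcongr
      · norm_num
      · exact huB i
    · calc _ ≤ B + V := hvV.trans le_add_self
        _ ≤ _ := le_mul_of_one_le_left' h2s
  obtain ⟨hup, hvp⟩ := hbound p hp hps
    (fun i => le_iSup_of_le (f := fun i => _ + _) i le_self_add) le_self_add
  obtain ⟨hus, hvs⟩ := hbound s (hp.trans hps) le_rfl
    (fun i => le_iSup_of_le (f := fun i => _ + _) i le_add_self) le_add_self
  exact ⟨_, ENNReal.mul_ne_top ENNReal.ofReal_ne_top (ENNReal.add_ne_top.2 ⟨hbdd.ne, hv.ne⟩),
    fun i => ⟨hup i, hus i⟩, hvp, hvs⟩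

end LebesgueIntegralBounds

lemma tendsto_setLIntegral_compl_ball_atTop {X : Type*} [PseudoMetricSpace X]
    [MeasurableSpace X] [OpensMeasurableSpace X] {μ : Measure X} {F : X → ℝ≥0∞}
    (hF : ∫⁻ x, F x ∂μ ≠ ⊤) (x₀ : X) :
    Tendsto (fun R : ℝ => ∫⁻ x in (Metric.ball x₀ R)ᶜ, F x ∂μ) atTop (𝓝 0) := by
  have hν : ∀ R, (μ.withDensity F) (Metric.ball x₀ R)ᶜ = ∫⁻ x in (Metric.ball x₀ R)ᶜ, F x ∂μ :=
    fun R => withDensity_apply _ measurableSet_ball.compl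
  have hempty : ⋂ R : ℝ, (Metric.ball x₀ R)ᶜ = ∅ := by
    rw [← Set.compl_iUnion, Set.compl_empty_iff, Set.eq_univ_iff_forall]
    exact fun x => Set.mem_iUnion.2 ⟨dist x x₀ + 1, by simp⟩
  have h := tendsto_measure_iInter_atTop (μ := μ.withDensity F)
    (fun R => measurableSet_ball.compl.nullMeasurableSet)
    (fun R R' h => Set.compl_subset_compl.2 (Metric.ball_subset_ball h))
    ⟨0, by rw [hν, Metric.ball_zero, Set.compl_empty, Measure.restrict_univ]; exact hF⟩
  rw [hempty, measure_empty] at h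
  simpa only [Function.comp_def, hν] using h

theorem stmt6_general (N : ℕ) (p s : ℝ) (hp : 1 < p) (hps : p < s)
    (f : ℝ → ℝ) (hf : Continuous f)
    (h0 : Tendsto (fun t : ℝ => f t / |t| ^ (p - 1)) (𝓝[≠] (0 : ℝ)) (𝓝 0))
    (hinf : Tendsto (fun t : ℝ => f t / |t| ^ (s - 1)) (Filter.cocompact ℝ) (𝓝 0))
    (u : ℕ → EuclideanSpace ℝ (Fin N) → ℝ) (v : EuclideanSpace ℝ (Fin N) → ℝ)
    (hu : ∀ n, Measurable (u n)) (hv : Measurable v)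
    (hloc : ∀ R > (0:ℝ), Tendsto (fun n =>
        ∫⁻ x in Metric.ball (0 : EuclideanSpace ℝ (Fin N)) R,
          ENNReal.ofReal (|u n x - v x| ^ p)) atTop (𝓝 0))
    (hbdd : (⨆ n, ((∫⁻ x : EuclideanSpace ℝ (Fin N), ENNReal.ofReal (|u n x| ^ p))
        + ∫⁻ x : EuclideanSpace ℝ (Fin N), ENNReal.ofReal (|u n x| ^ s))) < ⊤)
    (hvint : ((∫⁻ x : EuclideanSpace ℝ (Fin N), ENNReal.ofReal (|v x| ^ p))
        + ∫⁻ x : EuclideanSpace ℝ (Fin N), ENNReal.ofReal (|v x| ^ s)) < ⊤) :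
    ∀ ε > (0:ℝ), ∃ n₀ : ℕ, ∀ n ≥ n₀, ∀ w : EuclideanSpace ℝ (Fin N) → ℝ,
      Measurable w →
      (∫⁻ x : EuclideanSpace ℝ (Fin N), ENNReal.ofReal (|w x| ^ p)) ≤ 1 →
      (∫⁻ x : EuclideanSpace ℝ (Fin N), ENNReal.ofReal (|w x| ^ s)) ≤ 1 →
      (∫⁻ x : EuclideanSpace ℝ (Fin N),
          ENNReal.ofReal (|f (u n x - v x) - f (u n x) + f (v x)| * |w x|))
        ≤ ENNReal.ofReal ε := by
  intro ε hε
  set q := (p + s) / 2 with hq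
  have hpq : p ≤ q := by linarith
  have hqs : q ≤ s := by linarith
  have hθ : ∀ t : ℝ, 1 ≤ t → 0 ≤ 1 - 1 / t := fun t ht => by
    rw [sub_nonneg, div_le_one (by linarith)]; exact ht
  have hγ : 0 < 1 - 1 / q := by rw [sub_pos, div_lt_one (by linarith)]; linarith
  set η := ENNReal.ofReal ε / 3
  have hη : 0 < η := ENNReal.div_pos (ENNReal.ofReal_pos.2 hε).ne' ENNReal.ofNat_ne_top
  obtain ⟨A, hA, huvA, hvpA, hvsA⟩ :=
    exists_lintegral_ofReal_abs_sub_rpow_le hu (by linarith) hps.le hbdd hvint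
  have hD : (2 : ℝ≥0∞) * (A ^ (1 - 1 / p) + A ^ (1 - 1 / s)) ≠ ⊤ :=
    ENNReal.mul_ne_top ENNReal.ofNat_ne_top (ENNReal.add_ne_top.2
      ⟨ENNReal.rpow_ne_top_of_nonneg (hθ p hp.le) hA,
        ENNReal.rpow_ne_top_of_nonneg (hθ s (by linarith)) hA⟩)
  obtain ⟨δ, hδ, hδD⟩ := ENNReal.exists_nnreal_pos_mul_lt hD hη.ne'
  obtain ⟨C, hC, hkey⟩ := exists_abs_map_add_sub_sub_le hf (by linarith) h0 hinf (by linarith)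
    (by linarith : 0 ≤ q - 1) (NNReal.coe_pos.2 hδ)
  have hc : ENNReal.ofReal C * 2 ^ (1 / q) ≠ ⊤ := by finiteness
  have hvq := (lintegral_ofReal_abs_rpow_le_add hv (by linarith) hpq hqs).trans_lt hvint
  obtain ⟨R, hRtail, hR⟩ := (((ENNReal.tendsto_const_mul_rpow_of_tendsto_zero hc hγ
    (tendsto_setLIntegral_compl_ball_atTop hvq.ne 0)).eventually_lt_const hη).and
    (eventually_gt_atTop 0)).exists
  obtain ⟨n₀, hn₀⟩ := eventually_atTop.1 ((ENNReal.tendsto_const_mul_rpow_of_tendsto_zero hc hγ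
    (tendsto_lintegral_ofReal_abs_rpow_midpoint
    (G := fun n x => u n x - v x) (fun n => (hu n).sub hv) (by linarith) (by linarith) hA
    (hloc R hR) fun n => (setLIntegral_le_lintegral _ _).trans (huvA n).2)).eventually_lt_const hη)
  refine ⟨n₀, fun n hn w hw hwp hws => ?_⟩
  calc _ ≤ _ := lintegral_abs_map_sub_sub_mul_le hp hpq hqs δ.coe_nonneg hC hkey (hu n) hv hw
        (huvA n).1 (huvA n).2 hvpA hvsA hwp hws (measurableSet_ball (x := 0) (ε := R))
    _ ≤ η + (η + η) := by
      rw [ENNReal.ofReal_coe_nnreal, mul_add (ENNReal.ofReal C * 2 ^ (1 / q))]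
      exact add_le_add hδD.le (add_le_add (hn₀ n hn).le hRtail.le)
    _ = ENNReal.ofReal ε := by rw [← add_assoc, ENNReal.add_thirds]

theorem stmt6 (N : ℕ) (hN : 1 ≤ N) (p s : ℝ) (hp : 1 < p) (hps : p < s)
    (f : ℝ → ℝ) (hf : Continuous f)
    (h0 : Tendsto (fun t : ℝ => f t / |t| ^ (p - 1)) (𝓝[≠] (0 : ℝ)) (𝓝 0))
    (hinf : Tendsto (fun t : ℝ => f t / |t| ^ (s - 1)) (Filter.cocompact ℝ) (𝓝 0))
    (u : ℕ → EuclideanSpace ℝ (Fin N) → ℝ) (v : EuclideanSpace ℝ (Fin N) → ℝ)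
    (hu : ∀ n, Measurable (u n)) (hv : Measurable v)
    (hae : ∀ᵐ x : EuclideanSpace ℝ (Fin N), Tendsto (fun n => u n x) atTop (𝓝 (v x)))
    (hloc : ∀ R > (0:ℝ), Tendsto (fun n =>
        ∫⁻ x in Metric.ball (0 : EuclideanSpace ℝ (Fin N)) R,
          ENNReal.ofReal (|u n x - v x| ^ p)) atTop (𝓝 0))
    (hbdd : (⨆ n, ((∫⁻ x : EuclideanSpace ℝ (Fin N), ENNReal.ofReal (|u n x| ^ p))
        + ∫⁻ x : EuclideanSpace ℝ (Fin N), ENNReal.ofReal (|u n x| ^ s))) < ⊤)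
    (hvint : ((∫⁻ x : EuclideanSpace ℝ (Fin N), ENNReal.ofReal (|v x| ^ p))
        + ∫⁻ x : EuclideanSpace ℝ (Fin N), ENNReal.ofReal (|v x| ^ s)) < ⊤) :
    ∀ ε > (0:ℝ), ∃ n₀ : ℕ, ∀ n ≥ n₀, ∀ w : EuclideanSpace ℝ (Fin N) → ℝ,
      Measurable w →
      (∫⁻ x : EuclideanSpace ℝ (Fin N), ENNReal.ofReal (|w x| ^ p)) ≤ 1 →
      (∫⁻ x : EuclideanSpace ℝ (Fin N), ENNReal.ofReal (|w x| ^ s)) ≤ 1 →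
      (∫⁻ x : EuclideanSpace ℝ (Fin N),
          ENNReal.ofReal (|f (u n x - v x) - f (u n x) + f (v x)| * |w x|))
        ≤ ENNReal.ofReal ε :=
  stmt6_general N p s hp hps f hf h0 hinf u v hu hv hloc hbdd hvint
end

section
/- Let N ≥ 1 be an integer and p, q ∈ [1, ∞) real numbers. Let W : ℝ^N → [0, ∞) be measurable and let u_n, u : ℝ^N → ℝ be measurable functions with u_n → u almost everywhere on ℝ^N and sup_n ∫_{ℝ^N} W(x)(|u_n(x)|^p + |u_n(x)|^q) dx < ∞. Then ∫_{ℝ^N} W(x)(|u_n − u|^p + |u_n − u|^q) dx − ∫_{ℝ^N} W(x)(|u_n|^p + |u_n|^q) dx + ∫_{ℝ^N} W(x)(|u|^p + |u|^q) dx → 0 as n → ∞. -/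
open Filter MeasureTheory
open scoped Topology ENNReal

/-!
A weighted Brezis–Lieb lemma is the Brezis–Lieb lemma for the measure `W dx`, applied to
`Φ t = |t| ^ p + |t| ^ q`. What makes Brezis–Lieb work for `Φ` is the almost-subadditivity
`Φ (a + b) ≤ (1 + η) Φ a + C_η Φ b` (for `|t| ^ r` this is convexity of `x ↦ x ^ r`), which gives
`|Φ (a - b) - Φ a + Φ b| ≤ ε Φ (a - b) + C_ε Φ b`. Fatou makes `Φ ∘ v` integrable, and then the
defect `Φ (uₙ - v) - Φ uₙ + Φ v`, which tends to `0` a.e., is dominated up to `ε Φ (uₙ - v)`,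
whose integrals are bounded; dominated convergence finishes.
-/

structure BrezisLiebFunction (Φ : ℝ → ℝ) : Prop where
  continuous : Continuous Φ
  map_zero : Φ 0 = 0
  nonneg : ∀ t, 0 ≤ Φ t
  even : Function.Even Φ
  add_le : ∀ η > 0, ∃ C, ∀ a b, Φ (a + b) ≤ (1 + η) * Φ a + C * Φ b

theorem Real.exists_abs_add_rpow_le {r : ℝ} (hr : 1 ≤ r) {η : ℝ} (hη : 0 < η) :
    ∃ C, ∀ a b : ℝ, |a + b| ^ r ≤ (1 + η) * |a| ^ r + C * |b| ^ r := by
  have hlim : Tendsto (fun l : ℝ => l ^ (1 - r)) (𝓝[<] 1) (𝓝 1) := by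
    simpa using (Real.continuousAt_rpow_const 1 (1 - r) (Or.inl one_ne_zero)).tendsto.mono_left
      nhdsWithin_le_nhds
  obtain ⟨l, ⟨hlη, hl0⟩, hl1⟩ : ∃ l : ℝ, (l ^ (1 - r) < 1 + η ∧ 0 < l) ∧ l < 1 :=
    ((hlim.eventually_lt_const (by linarith)).and
      (Ioo_mem_nhdsLT zero_lt_one)).exists.imp fun l h => ⟨⟨h.1, h.2.1⟩, h.2.2⟩
  refine ⟨(1 - l) ^ (1 - r), fun a b => ?_⟩
  have hl1' : 0 < 1 - l := sub_pos.2 hl1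
  -- convexity of `x ↦ x ^ r`, applied to `|a| + |b| = l * (|a| / l) + (1 - l) * (|b| / (1 - l))`
  have hconv := (convexOn_rpow hr).2 (Set.mem_Ici.2 (div_nonneg (abs_nonneg a) hl0.le))
    (Set.mem_Ici.2 (div_nonneg (abs_nonneg b) hl1'.le)) hl0.le hl1'.le (add_sub_cancel l 1)
  simp only [smul_eq_mul] at hconv
  have hpow : ∀ {s : ℝ}, 0 < s → ∀ x : ℝ, s * (|x| / s) ^ r = s ^ (1 - r) * |x| ^ r := by
    intro s hs x
    rw [Real.div_rpow (abs_nonneg x) hs.le, Real.rpow_sub hs, Real.rpow_one]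
    field_simp
  calc |a + b| ^ r ≤ (|a| + |b|) ^ r :=
        Real.rpow_le_rpow (abs_nonneg _) (abs_add_le a b) (by linarith)
    _ = (l * (|a| / l) + (1 - l) * (|b| / (1 - l))) ^ r := by field_simp
    _ ≤ l ^ (1 - r) * |a| ^ r + (1 - l) ^ (1 - r) * |b| ^ r := by
        rw [← hpow hl0, ← hpow hl1']; exact hconv
    _ ≤ (1 + η) * |a| ^ r + (1 - l) ^ (1 - r) * |b| ^ r := by
        gcongr

namespace BrezisLiebFunction

theorem abs_rpow {r : ℝ} (hr : 1 ≤ r) : BrezisLiebFunction fun t => |t| ^ r where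
  continuous := continuous_abs.rpow_const fun _ => Or.inr (by linarith)
  map_zero := by simp [Real.zero_rpow (by linarith : r ≠ 0)]
  nonneg t := Real.rpow_nonneg (abs_nonneg t) r
  even t := by simp only [abs_neg]
  add_le _ hη := Real.exists_abs_add_rpow_le hr hη

theorem add {Φ Ψ : ℝ → ℝ} (hΦ : BrezisLiebFunction Φ) (hΨ : BrezisLiebFunction Ψ) :
    BrezisLiebFunction fun t => Φ t + Ψ t where
  continuous := hΦ.continuous.add hΨ.continuous
  map_zero := by simp [hΦ.map_zero, hΨ.map_zero]
  nonneg t := add_nonneg (hΦ.nonneg t) (hΨ.nonneg t)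
  even t := by simp only [hΦ.even t, hΨ.even t]
  add_le η hη := by
    obtain ⟨C, hC⟩ := hΦ.add_le η hη
    obtain ⟨D, hD⟩ := hΨ.add_le η hη
    refine ⟨max C D, fun a b => ?_⟩
    have hCb := mul_le_mul_of_nonneg_right (le_max_left C D) (hΦ.nonneg b)
    have hDb := mul_le_mul_of_nonneg_right (le_max_right C D) (hΨ.nonneg b)
    nlinarith [hC a b, hD a b]

variable {Φ : ℝ → ℝ}

theorem exists_abs_add_sub_le (hΦ : BrezisLiebFunction Φ) {ε : ℝ} (hε : 0 < ε) :
    ∃ C, ∀ a b, |Φ (a + b) - Φ a| ≤ ε * Φ a + C * Φ b := by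
  obtain ⟨C, hC⟩ := hΦ.add_le ε hε
  refine ⟨|C|, fun a b => abs_le.2 ⟨?_, ?_⟩⟩
  · have h := hC (a + b) (-b)
    rw [add_neg_cancel_right, hΦ.even] at h
    have hCb := mul_le_mul_of_nonneg_right (le_abs_self C) (hΦ.nonneg b)
    have hεa : ε * Φ a ≤ (1 + ε) * (ε * Φ a) := by
      nlinarith [mul_nonneg hε.le (hΦ.nonneg a)]
    have hCb' : |C| * Φ b ≤ (1 + ε) * (|C| * Φ b) := by
      nlinarith [mul_nonneg (abs_nonneg C) (hΦ.nonneg b)]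
    have key : (1 + ε) * (Φ a - Φ (a + b)) ≤ (1 + ε) * (ε * Φ a + |C| * Φ b) := by linarith
    linarith [le_of_mul_le_mul_left key (by linarith : (0 : ℝ) < 1 + ε)]
  · nlinarith [hC a b, mul_le_mul_of_nonneg_right (le_abs_self C) (hΦ.nonneg b)]

theorem exists_abs_sub_sub_add_le (hΦ : BrezisLiebFunction Φ) {ε : ℝ} (hε : 0 < ε) :
    ∃ C, ∀ a b, |Φ (a - b) - Φ a + Φ b| ≤ ε * Φ (a - b) + C * Φ b := by
  obtain ⟨C, hC⟩ := hΦ.exists_abs_add_sub_le hε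
  refine ⟨C + 1, fun a b => ?_⟩
  have h := hC (a - b) b
  rw [sub_add_cancel, abs_sub_comm] at h
  calc |Φ (a - b) - Φ a + Φ b| ≤ |Φ (a - b) - Φ a| + |Φ b| := abs_add_le _ _
    _ ≤ ε * Φ (a - b) + (C + 1) * Φ b := by
        rw [abs_of_nonneg (hΦ.nonneg b)]; linarith

theorem exists_sub_le (hΦ : BrezisLiebFunction Φ) :
    ∃ C, ∀ a b, Φ (a - b) ≤ 2 * Φ a + C * Φ b := by
  obtain ⟨C, hC⟩ := hΦ.add_le 1 one_pos
  refine ⟨C, fun a b => ?_⟩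
  have h := hC a (-b)
  rwa [← sub_eq_add_neg, hΦ.even, one_add_one_eq_two] at h

theorem tendsto_sub_sub_add (hΦ : BrezisLiebFunction Φ) {ι : Type*} {l : Filter ι} {x : ι → ℝ}
    {y : ℝ} (hx : Tendsto x l (𝓝 y)) : Tendsto (fun n => Φ (x n - y) - Φ (x n) + Φ y) l (𝓝 0) := by
  have hx0 : Tendsto (fun n => x n - y) l (𝓝 0) := by simpa using hx.sub_const y
  simpa [hΦ.map_zero] using (((hΦ.continuous.tendsto 0).comp hx0).sub
    ((hΦ.continuous.tendsto y).comp hx)).add_const (Φ y)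

end BrezisLiebFunction

section Measure

variable {α : Type*} [MeasurableSpace α] {μ : Measure α}

theorem integral_withDensity_ofReal {w : α → ℝ} (hw : Measurable w) (hw0 : ∀ x, 0 ≤ w x)
    (h : α → ℝ) :
    ∫ x, h x ∂μ.withDensity (fun x => ENNReal.ofReal (w x)) = ∫ x, w x * h x ∂μ := by
  rw [integral_withDensity_eq_integral_toReal_smul hw.ennreal_ofReal
    (Eventually.of_forall fun _ => ENNReal.ofReal_lt_top)]
  simp only [ENNReal.toReal_ofReal (hw0 _), smul_eq_mul]

theorem lintegral_withDensity_ofReal {w : α → ℝ} (hw : Measurable w) (hw0 : ∀ x, 0 ≤ w x)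
    (h : α → ℝ) :
    ∫⁻ x, ENNReal.ofReal (h x) ∂μ.withDensity (fun x => ENNReal.ofReal (w x)) =
      ∫⁻ x, ENNReal.ofReal (w x * h x) ∂μ := by
  rw [lintegral_withDensity_eq_lintegral_mul_non_measurable _ hw.ennreal_ofReal
    (Eventually.of_forall fun _ => ENNReal.ofReal_lt_top)]
  simp only [Pi.mul_apply, ENNReal.ofReal_mul (hw0 _)]

theorem integrable_of_lintegral_ofReal_le {h : α → ℝ} (hm : AEStronglyMeasurable h μ)
    (h0 : 0 ≤ᵐ[μ] h) {S : ℝ≥0∞} (hS : S < ⊤) (hhS : ∫⁻ x, ENNReal.ofReal (h x) ∂μ ≤ S) :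
    Integrable h μ ∧ ∫ x, h x ∂μ ≤ S.toReal := by
  refine ⟨(lintegral_ofReal_ne_top_iff_integrable hm h0).1 (hhS.trans_lt hS).ne, ?_⟩
  rw [integral_eq_lintegral_of_nonneg_ae h0 hm]
  exact ENNReal.toReal_mono hS.ne hhS

theorem lintegral_ofReal_comp_le_iSup_of_tendsto {Φ : ℝ → ℝ} (hΦ : Continuous Φ)
    {f : ℕ → α → ℝ} {g : α → ℝ} (hf : ∀ n, AEMeasurable (f n) μ)
    (hlim : ∀ᵐ x ∂μ, Tendsto (fun n => f n x) atTop (𝓝 (g x))) :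
    ∫⁻ x, ENNReal.ofReal (Φ (g x)) ∂μ ≤ ⨆ n, ∫⁻ x, ENNReal.ofReal (Φ (f n x)) ∂μ :=
  calc ∫⁻ x, ENNReal.ofReal (Φ (g x)) ∂μ
      = ∫⁻ x, liminf (fun n => ENNReal.ofReal (Φ (f n x))) atTop ∂μ := by
        refine lintegral_congr_ae ?_
        filter_upwards [hlim] with x hx
        exact ((ENNReal.continuous_ofReal.tendsto _).comp
          ((hΦ.tendsto _).comp hx)).liminf_eq.symm
    _ ≤ liminf (fun n => ∫⁻ x, ENNReal.ofReal (Φ (f n x)) ∂μ) atTop :=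
        lintegral_liminf_le' fun n => (hΦ.measurable.comp_aemeasurable (hf n)).ennreal_ofReal
    _ ≤ ⨆ n, ∫⁻ x, ENNReal.ofReal (Φ (f n x)) ∂μ :=
        (liminf_le_limsup).trans limsup_le_iSup

theorem tendsto_integral_of_forall_abs_le_mul_add {D E : ℕ → α → ℝ} {G : α → ℝ} {M : ℝ}
    (hD : ∀ n, AEStronglyMeasurable (D n) μ) (hE : ∀ n, Integrable (E n) μ)
    (hE0 : ∀ n, 0 ≤ᵐ[μ] E n) (hEM : ∀ n, ∫ x, E n x ∂μ ≤ M) (hG : Integrable G μ)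
    (hdom : ∀ ε > 0, ∃ C, ∀ n, ∀ᵐ x ∂μ, |D n x| ≤ ε * E n x + C * G x)
    (hlim : ∀ᵐ x ∂μ, Tendsto (fun n => D n x) atTop (𝓝 0)) :
    Tendsto (fun n => ∫ x, D n x ∂μ) atTop (𝓝 0) := by
  refine Metric.tendsto_nhds.2 fun δ hδ => ?_
  obtain ⟨ε, hε, hεM⟩ : ∃ ε > 0, ε * M ≤ δ / 2 := by
    refine ⟨δ / (2 * (|M| + 1)), by positivity, ?_⟩
    rw [div_mul_eq_mul_div, div_le_div_iff₀ (by positivity) two_pos]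
    nlinarith [le_abs_self M]
  obtain ⟨C, hC⟩ := hdom ε hε
  -- the part of `|D n|` not controlled by `ε * E n` is dominated and tends to `0`
  set R : ℕ → α → ℝ := fun n x => max (|D n x| - ε * E n x) 0
  have hR : ∀ n, AEStronglyMeasurable (R n) μ := fun n =>
    ((hD n).norm.sub ((hE n).aestronglyMeasurable.const_mul ε)).sup aestronglyMeasurable_const
  have hRG : ∀ n, ∀ᵐ x ∂μ, ‖R n x‖ ≤ |C| * |G x| := fun n => by
    filter_upwards [hC n] with x hx
    rw [Real.norm_of_nonneg (le_max_right _ _), ← abs_mul]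
    exact max_le (by linarith [le_abs_self (C * G x)]) (abs_nonneg _)
  have hRlim : ∀ᵐ x ∂μ, Tendsto (fun n => R n x) atTop (𝓝 0) := by
    filter_upwards [hlim, ae_all_iff.2 hE0] with x hx hx0
    refine squeeze_zero (fun n => le_max_right _ _) (fun n => max_le ?_ (abs_nonneg (D n x)))
      (by simpa using hx.abs)
    linarith [mul_nonneg hε.le (hx0 n)]
  have hRint : Tendsto (fun n => ∫ x, R n x ∂μ) atTop (𝓝 0) := by
    simpa using tendsto_integral_of_dominated_convergence _ hR (hG.abs.const_mul |C|) hRG hRlim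
  filter_upwards [hRint.eventually_lt_const (half_pos hδ)] with n hn
  have hRn : Integrable (R n) μ := (hG.abs.const_mul |C|).mono' (hR n) (hRG n)
  have hDn : ∀ x, |D n x| ≤ R n x + ε * E n x := fun x => by
    linarith [le_max_left (|D n x| - ε * E n x) 0]
  rw [dist_zero_right]
  calc ‖∫ x, D n x ∂μ‖ ≤ ∫ x, |D n x| ∂μ := norm_integral_le_integral_norm _
    _ ≤ ∫ x, (R n x + ε * E n x) ∂μ :=
        integral_mono_of_nonneg (Eventually.of_forall fun x => abs_nonneg _)
          (hRn.add ((hE n).const_mul ε)) (Eventually.of_forall hDn)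
    _ = ∫ x, R n x ∂μ + ε * ∫ x, E n x ∂μ := by
        rw [integral_add hRn ((hE n).const_mul ε), integral_const_mul]
    _ < δ := by nlinarith [hEM n]

theorem BrezisLiebFunction.tendsto_integral_sub_sub_add {Φ : ℝ → ℝ}
    (hΦ : BrezisLiebFunction Φ)
    {f : ℕ → α → ℝ} {g : α → ℝ} (hf : ∀ n, AEStronglyMeasurable (f n) μ)
    (hlim : ∀ᵐ x ∂μ, Tendsto (fun n => f n x) atTop (𝓝 (g x)))
    (hbdd : (⨆ n, ∫⁻ x, ENNReal.ofReal (Φ (f n x)) ∂μ) < ⊤) :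
    Tendsto (fun n => ∫ x, Φ (f n x - g x) ∂μ - ∫ x, Φ (f n x) ∂μ + ∫ x, Φ (g x) ∂μ)
      atTop (𝓝 0) := by
  have hg : AEStronglyMeasurable g μ := aestronglyMeasurable_of_tendsto_ae _ hf hlim
  have hΦm : ∀ {h : α → ℝ}, AEStronglyMeasurable h μ →
      AEStronglyMeasurable (fun x => Φ (h x)) μ :=
    hΦ.continuous.comp_aestronglyMeasurable
  have hΦ0 : ∀ h : α → ℝ, 0 ≤ᵐ[μ] fun x => Φ (h x) := fun _ =>
    Eventually.of_forall fun _ => hΦ.nonneg _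
  obtain ⟨hΦg, -⟩ := integrable_of_lintegral_ofReal_le (hΦm hg) (hΦ0 g) hbdd
    (lintegral_ofReal_comp_le_iSup_of_tendsto hΦ.continuous (fun n => (hf n).aemeasurable) hlim)
  have hΦf : ∀ n, Integrable (fun x => Φ (f n x)) μ ∧ ∫ x, Φ (f n x) ∂μ ≤ _ := fun n =>
    integrable_of_lintegral_ofReal_le (hΦm (hf n)) (hΦ0 _) hbdd
      (le_iSup (fun n => ∫⁻ x, ENNReal.ofReal (Φ (f n x)) ∂μ) n)
  obtain ⟨K, hK⟩ := hΦ.exists_sub_le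
  have hdom : ∀ n, Integrable (fun x => 2 * Φ (f n x) + K * Φ (g x)) μ := fun n =>
    ((hΦf n).1.const_mul 2).add (hΦg.const_mul K)
  have hΦfg : ∀ n, Integrable (fun x => Φ (f n x - g x)) μ := fun n =>
    (hdom n).mono' (hΦm ((hf n).sub hg)) (Eventually.of_forall fun x => by
      rw [Real.norm_of_nonneg (hΦ.nonneg _)]; exact hK _ _)
  have hΦfg_le : ∀ n, ∫ x, Φ (f n x - g x) ∂μ ≤
      2 * (⨆ n, ∫⁻ x, ENNReal.ofReal (Φ (f n x)) ∂μ).toReal + K * ∫ x, Φ (g x) ∂μ := fun n =>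
    calc ∫ x, Φ (f n x - g x) ∂μ ≤ ∫ x, (2 * Φ (f n x) + K * Φ (g x)) ∂μ :=
          integral_mono (hΦfg n) (hdom n) fun x => hK _ _
      _ ≤ _ := by
          rw [integral_add ((hΦf n).1.const_mul 2) (hΦg.const_mul K), integral_const_mul,
            integral_const_mul]
          linarith [(hΦf n).2]
  have hsplit : ∀ n, ∫ x, Φ (f n x - g x) ∂μ - ∫ x, Φ (f n x) ∂μ + ∫ x, Φ (g x) ∂μ =
      ∫ x, (Φ (f n x - g x) - Φ (f n x) + Φ (g x)) ∂μ := fun n => by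
    rw [integral_add (f := fun x => Φ (f n x - g x) - Φ (f n x)) ((hΦfg n).sub (hΦf n).1) hΦg,
      integral_sub (hΦfg n) (hΦf n).1]
  simp only [hsplit]
  refine tendsto_integral_of_forall_abs_le_mul_add
    (fun n => (((hΦfg n).sub (hΦf n).1).add hΦg).aestronglyMeasurable) hΦfg
    (fun n => hΦ0 _) hΦfg_le hΦg ?_ ?_
  · intro ε hε
    obtain ⟨C, hC⟩ := hΦ.exists_abs_sub_sub_add_le hε
    exact ⟨C, fun n => Eventually.of_forall fun x => hC _ _⟩
  · filter_upwards [hlim] with x hx using hΦ.tendsto_sub_sub_add hx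

end Measure

theorem stmt7_general (N : ℕ) (p q : ℝ) (hp : 1 ≤ p) (hq : 1 ≤ q)
    (W : EuclideanSpace ℝ (Fin N) → ℝ) (hW : Measurable W) (hW0 : ∀ x, 0 ≤ W x)
    (u : ℕ → EuclideanSpace ℝ (Fin N) → ℝ) (v : EuclideanSpace ℝ (Fin N) → ℝ)
    (hu : ∀ n, Measurable (u n))
    (hae : ∀ᵐ x : EuclideanSpace ℝ (Fin N), Tendsto (fun n => u n x) atTop (𝓝 (v x)))
    (hbdd : (⨆ n, ∫⁻ x : EuclideanSpace ℝ (Fin N),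
        ENNReal.ofReal (W x * (|u n x| ^ p + |u n x| ^ q))) < ⊤) :
    Tendsto (fun n =>
        (∫ x : EuclideanSpace ℝ (Fin N), W x * (|u n x - v x| ^ p + |u n x - v x| ^ q))
      - (∫ x : EuclideanSpace ℝ (Fin N), W x * (|u n x| ^ p + |u n x| ^ q))
      + ∫ x : EuclideanSpace ℝ (Fin N), W x * (|v x| ^ p + |v x| ^ q)) atTop (𝓝 0) := by
  have hΦ := (BrezisLiebFunction.abs_rpow hp).add (BrezisLiebFunction.abs_rpow hq)
  have h := hΦ.tendsto_integral_sub_sub_add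
    (μ := volume.withDensity fun x => ENNReal.ofReal (W x))
    (fun n => (hu n).aestronglyMeasurable) ((withDensity_absolutelyContinuous _ _).ae_le hae)
    (by simpa only [lintegral_withDensity_ofReal hW hW0] using hbdd)
  simpa only [integral_withDensity_ofReal hW hW0] using h

theorem stmt7 (N : ℕ) (hN : 1 ≤ N) (p q : ℝ) (hp : 1 ≤ p) (hq : 1 ≤ q)
    (W : EuclideanSpace ℝ (Fin N) → ℝ) (hW : Measurable W) (hW0 : ∀ x, 0 ≤ W x)
    (u : ℕ → EuclideanSpace ℝ (Fin N) → ℝ) (v : EuclideanSpace ℝ (Fin N) → ℝ)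
    (hu : ∀ n, Measurable (u n)) (hv : Measurable v)
    (hae : ∀ᵐ x : EuclideanSpace ℝ (Fin N), Tendsto (fun n => u n x) atTop (𝓝 (v x)))
    (hbdd : (⨆ n, ∫⁻ x : EuclideanSpace ℝ (Fin N),
        ENNReal.ofReal (W x * (|u n x| ^ p + |u n x| ^ q))) < ⊤) :
    Tendsto (fun n =>
        (∫ x : EuclideanSpace ℝ (Fin N), W x * (|u n x - v x| ^ p + |u n x - v x| ^ q))
      - (∫ x : EuclideanSpace ℝ (Fin N), W x * (|u n x| ^ p + |u n x| ^ q))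
      + ∫ x : EuclideanSpace ℝ (Fin N), W x * (|v x| ^ p + |v x| ^ q)) atTop (𝓝 0) :=
  stmt7_general N p q hp hq W hW hW0 u v hu hae hbdd
end

section
/- Let 1 < p < N, set p* = Np/(N−p), and let r ∈ [p, p*). Let u_n : ℝ^N → ℝ be continuously differentiable functions with sup_n (∫_{ℝ^N} |u_n|^p dx + ∫_{ℝ^N} ‖∇u_n‖^p dx) < ∞, and suppose that for some R > 0, lim_{n → ∞} sup_{y ∈ ℝ^N} ∫_{B_R(y)} |u_n|^r dx = 0. Then for every t ∈ (p, p*), ∫_{ℝ^N} |u_n|^t dx → 0 as n → ∞. -/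
/-!
Cover `ℝᴺ` by the balls `B(z, R)` centred on the lattice `(R / (N + 1)) ℤᴺ`; the doubled balls
`B(z, 2R)` overlap a bounded number of times. Write `q = p*`. Cutting `u` off with a bump
function, the Gagliardo–Nirenberg–Sobolev inequality gives on every ball
`∫_{B(z,R)} |u|^q ≤ K (∫_{B(z,2R)} |u|^p + ‖∇u‖^p)^{q/p}` with `K` independent of `z`.
For `θ = 1 - p/q`, Hölder interpolation between `r` and `q` on each ball then bounds
`∫_{B(z,R)} |u|^{θr + p}` by `(sup_y ∫_{B(y,R)} |u|^r)^θ` times `K^{1-θ}` and the *first* power of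
the local `W^{1,p}` energy, since `(q/p)(1 - θ) = 1`. Summing over the lattice, the bounded
overlap turns this into `(sup_y …)^θ` times the global energy bound, so `∫ |u_n|^{θr+p} → 0`.
Summing the local Sobolev inequalities (with `∑ aₖ^{q/p} ≤ (∑ aₖ)^{q/p}`) bounds `∫ |u_n|^q`, and
interpolating between the exponents `p`, `θr + p` and `q` gives the claim for every `t ∈ (p, q)`.
-/

open Filter MeasureTheory Metric Set Module
open scoped Topology ENNReal NNReal

theorem ENNReal.tendsto_zero_of_le_rpow_mul {ι : Type*} {l : Filter ι} {f g : ι → ℝ≥0∞} {θ : ℝ}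
    (hθ : 0 < θ) {C : ℝ≥0∞} (hC : C ≠ ⊤) (hfg : ∀ i, f i ≤ g i ^ θ * C)
    (hg : Tendsto g l (𝓝 0)) : Tendsto f l (𝓝 0) := by
  have hlim : Tendsto (fun i => g i ^ θ * C) l (𝓝 0) := by
    simpa [ENNReal.zero_rpow_of_pos hθ] using ENNReal.Tendsto.mul_const
      ((ENNReal.continuous_rpow_const (y := θ).tendsto 0).comp hg) (.inr hC)
  exact tendsto_of_tendsto_of_tendsto_of_le_of_le tendsto_const_nhds hlim (fun _ => zero_le) hfg

theorem ENNReal.tsum_rpow_le_rpow_tsum {ι : Type*} (a : ι → ℝ≥0∞) {q : ℝ} (hq : 1 ≤ q) :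
    ∑' i, a i ^ q ≤ (∑' i, a i) ^ q := by
  have hsplit (x : ℝ≥0∞) : x ^ q = x ^ (q - 1) * x := by
    calc x ^ q = x ^ (q - 1 + 1) := by rw [sub_add_cancel]
      _ = x ^ (q - 1) * x := by
        rw [ENNReal.rpow_add_of_nonneg _ _ (by linarith) zero_le_one, ENNReal.rpow_one]
  calc ∑' i, a i ^ q ≤ ∑' i, (∑' j, a j) ^ (q - 1) * a i :=
        ENNReal.tsum_le_tsum fun i => by
          rw [hsplit]; gcongr; exact ENNReal.le_tsum i
    _ = (∑' j, a j) ^ q := by rw [ENNReal.tsum_mul_left, ← hsplit]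

section Interpolation

variable {α : Type*} [MeasurableSpace α] {μ : Measure α}

theorem lintegral_rpow_interpolate_le {w : α → ℝ≥0∞} (hw : AEMeasurable w μ) {a b θ : ℝ}
    (ha : 0 ≤ a) (hb : 0 ≤ b) (hθ₀ : 0 ≤ θ) (hθ₁ : θ ≤ 1) :
    ∫⁻ x, w x ^ (θ * a + (1 - θ) * b) ∂μ
      ≤ (∫⁻ x, w x ^ a ∂μ) ^ θ * (∫⁻ x, w x ^ b ∂μ) ^ (1 - θ) := by
  have hsplit (x : α) : w x ^ (θ * a + (1 - θ) * b) = (w x ^ a) ^ θ * (w x ^ b) ^ (1 - θ) := by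
    rw [← ENNReal.rpow_mul, ← ENNReal.rpow_mul, ← ENNReal.rpow_add_of_nonneg _ _
      (by positivity) (mul_nonneg hb (by linarith)), mul_comm a, mul_comm b]
  simp_rw [hsplit]
  exact ENNReal.lintegral_mul_norm_pow_le (hw.pow_const a) (hw.pow_const b) hθ₀ (by linarith)
    (by ring)

variable {ι : Type*} {l : Filter ι} {w : ι → α → ℝ≥0∞}

theorem tendsto_lintegral_rpow_interpolate (hw : ∀ i, AEMeasurable (w i) μ) {a b θ : ℝ}
    (ha : 0 ≤ a) (hb : 0 ≤ b) (hθ₀ : 0 < θ) (hθ₁ : θ ≤ 1)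
    (ha_lim : Tendsto (fun i => ∫⁻ x, w i x ^ a ∂μ) l (𝓝 0))
    {C : ℝ≥0∞} (hC : C ≠ ⊤) (hb_le : ∀ i, ∫⁻ x, w i x ^ b ∂μ ≤ C) :
    Tendsto (fun i => ∫⁻ x, w i x ^ (θ * a + (1 - θ) * b) ∂μ) l (𝓝 0) :=
  ENNReal.tendsto_zero_of_le_rpow_mul hθ₀ (ENNReal.rpow_ne_top_of_nonneg (by linarith) hC)
    (fun i => (lintegral_rpow_interpolate_le (hw i) ha hb hθ₀.le hθ₁).trans
      (mul_le_mul_right (ENNReal.rpow_le_rpow (hb_le i) (by linarith)) _)) ha_lim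

theorem tendsto_lintegral_rpow_of_mem_Ioo (hw : ∀ i, AEMeasurable (w i) μ) {p s q : ℝ}
    (hp : 0 ≤ p) (hps : p < s) (hsq : s < q)
    (hs_lim : Tendsto (fun i => ∫⁻ x, w i x ^ s ∂μ) l (𝓝 0))
    {Cp Cq : ℝ≥0∞} (hCp : Cp ≠ ⊤) (hCq : Cq ≠ ⊤)
    (hp_le : ∀ i, ∫⁻ x, w i x ^ p ∂μ ≤ Cp) (hq_le : ∀ i, ∫⁻ x, w i x ^ q ∂μ ≤ Cq)
    {t : ℝ} (ht : t ∈ Ioo p q) :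
    Tendsto (fun i => ∫⁻ x, w i x ^ t ∂μ) l (𝓝 0) := by
  obtain ⟨hpt, htq⟩ := ht
  rcases le_or_gt t s with hts | hst
  · have key := tendsto_lintegral_rpow_interpolate (θ := (t - p) / (s - p)) hw (by linarith) hp
      (div_pos (by linarith) (by linarith)) ((div_le_one (by linarith)).2 (by linarith))
      hs_lim hCp hp_le
    rwa [show (t - p) / (s - p) * s + (1 - (t - p) / (s - p)) * p = t by
      field_simp [(sub_pos.2 hps).ne']; ring] at key
  · have key := tendsto_lintegral_rpow_interpolate (θ := (q - t) / (q - s)) hw (by linarith)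
      (by linarith) (div_pos (by linarith) (by linarith))
      ((div_le_one (by linarith)).2 (by linarith)) hs_lim hCq hq_le
    rwa [show (q - t) / (q - s) * s + (1 - (q - t) / (q - s)) * q = t by
      field_simp [(sub_pos.2 hsq).ne']; ring] at key

end Interpolation

section BoundedOverlap

variable {X : Type*} [PseudoMetricSpace X] [MeasurableSpace X] {ι : Type*}

structure IsBoundedOverlapCover (μ : Measure X) (z : ι → X) (R : ℝ) (M : ℝ≥0∞) : Prop where
  iUnion_ball_eq : ⋃ i, ball (z i) R = univ
  tsum_setLIntegral_ball_two_mul_le (g : X → ℝ≥0∞) (hg : Measurable g) :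
    ∑' i, ∫⁻ x in ball (z i) (2 * R), g x ∂μ ≤ M * ∫⁻ x, g x ∂μ

namespace IsBoundedOverlapCover

variable [Countable ι] {μ : Measure X} {z : ι → X} {R : ℝ} {M : ℝ≥0∞} {w G : X → ℝ≥0∞}
  {p q r : ℝ} {K : ℝ≥0∞}

theorem lintegral_le_tsum (hz : IsBoundedOverlapCover μ z R M) (g : X → ℝ≥0∞) :
    ∫⁻ x, g x ∂μ ≤ ∑' i, ∫⁻ x in ball (z i) R, g x ∂μ := by
  simpa [hz.iUnion_ball_eq] using lintegral_iUnion_le (fun i => ball (z i) R) g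

theorem lintegral_rpow_le (hz : IsBoundedOverlapCover μ z R M) (hp : 0 < p) (hpq : p ≤ q)
    (hG : Measurable G)
    (hloc : ∀ i, ∫⁻ x in ball (z i) R, w x ^ q ∂μ
      ≤ K * (∫⁻ x in ball (z i) (2 * R), G x ∂μ) ^ (q / p)) :
    ∫⁻ x, w x ^ q ∂μ ≤ K * (M * ∫⁻ x, G x ∂μ) ^ (q / p) :=
  calc ∫⁻ x, w x ^ q ∂μ ≤ ∑' i, ∫⁻ x in ball (z i) R, w x ^ q ∂μ := hz.lintegral_le_tsum _
    _ ≤ K * ∑' i, (∫⁻ x in ball (z i) (2 * R), G x ∂μ) ^ (q / p) := by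
        rw [← ENNReal.tsum_mul_left]; exact ENNReal.tsum_le_tsum hloc
    _ ≤ K * (∑' i, ∫⁻ x in ball (z i) (2 * R), G x ∂μ) ^ (q / p) := by
        gcongr; exact ENNReal.tsum_rpow_le_rpow_tsum _ ((one_le_div hp).2 hpq)
    _ ≤ K * (M * ∫⁻ x, G x ∂μ) ^ (q / p) :=
        mul_le_mul_right (ENNReal.rpow_le_rpow (hz.tsum_setLIntegral_ball_two_mul_le G hG)
          (div_nonneg (hp.le.trans hpq) hp.le)) _

theorem lintegral_rpow_le_iSup_mul (hz : IsBoundedOverlapCover μ z R M) (hw : AEMeasurable w μ)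
    (hG : Measurable G) (hp : 0 < p) (hr : 0 ≤ r) {θ : ℝ} (hθ₀ : 0 ≤ θ) (hθ₁ : θ ≤ 1)
    (hθ : (1 - θ) * q = p)
    (hloc : ∀ i, ∫⁻ x in ball (z i) R, w x ^ q ∂μ
      ≤ K * (∫⁻ x in ball (z i) (2 * R), G x ∂μ) ^ (q / p)) :
    ∫⁻ x, w x ^ (θ * r + (1 - θ) * q) ∂μ
      ≤ (⨆ y, ∫⁻ x in ball y R, w x ^ r ∂μ) ^ θ * (K ^ (1 - θ) * (M * ∫⁻ x, G x ∂μ)) := by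
  set S := ⨆ y, ∫⁻ x in ball y R, w x ^ r ∂μ
  have hq : 0 ≤ q := (pos_of_mul_pos_right (hθ ▸ hp) (sub_nonneg.2 hθ₁)).le
  -- the choice of `θ` makes the local energy appear to the first power, so that it can be summed
  have hexp : q / p * (1 - θ) = 1 := by rw [div_mul_eq_mul_div, mul_comm, hθ, div_self hp.ne']
  have hball (i : ι) : ∫⁻ x in ball (z i) R, w x ^ (θ * r + (1 - θ) * q) ∂μ
      ≤ S ^ θ * (K ^ (1 - θ) * ∫⁻ x in ball (z i) (2 * R), G x ∂μ) :=
    calc ∫⁻ x in ball (z i) R, w x ^ (θ * r + (1 - θ) * q) ∂μ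
        ≤ (∫⁻ x in ball (z i) R, w x ^ r ∂μ) ^ θ
            * (∫⁻ x in ball (z i) R, w x ^ q ∂μ) ^ (1 - θ) :=
          lintegral_rpow_interpolate_le hw.restrict hr hq hθ₀ hθ₁
      _ ≤ S ^ θ * (K * (∫⁻ x in ball (z i) (2 * R), G x ∂μ) ^ (q / p)) ^ (1 - θ) := by
          gcongr
          · exact le_iSup (fun y => ∫⁻ x in ball y R, w x ^ r ∂μ) (z i)
          · exact hloc i
      _ = S ^ θ * (K ^ (1 - θ) * ∫⁻ x in ball (z i) (2 * R), G x ∂μ) := by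
          rw [ENNReal.mul_rpow_of_nonneg _ _ (by linarith), ← ENNReal.rpow_mul, hexp,
            ENNReal.rpow_one]
  calc ∫⁻ x, w x ^ (θ * r + (1 - θ) * q) ∂μ
      ≤ ∑' i, ∫⁻ x in ball (z i) R, w x ^ (θ * r + (1 - θ) * q) ∂μ := hz.lintegral_le_tsum _
    _ ≤ S ^ θ * (K ^ (1 - θ) * ∑' i, ∫⁻ x in ball (z i) (2 * R), G x ∂μ) := by
        rw [← ENNReal.tsum_mul_left, ← ENNReal.tsum_mul_left]
        exact ENNReal.tsum_le_tsum hball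
    _ ≤ S ^ θ * (K ^ (1 - θ) * (M * ∫⁻ x, G x ∂μ)) := by
        gcongr; exact hz.tsum_setLIntegral_ball_two_mul_le G hG

theorem tendsto_lintegral_rpow (hz : IsBoundedOverlapCover μ z R M) (hM : M ≠ ⊤)
    {κ : Type*} {l : Filter κ} {w G : κ → X → ℝ≥0∞} (hw : ∀ n, AEMeasurable (w n) μ)
    (hG : ∀ n, Measurable (G n)) (hp : 0 < p) (hpq : p < q) (hr : 0 < r) (hrq : r < q)
    (hK : K ≠ ⊤) {C : ℝ≥0∞} (hC : C ≠ ⊤)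
    (hloc : ∀ n i, ∫⁻ x in ball (z i) R, w n x ^ q ∂μ
      ≤ K * (∫⁻ x in ball (z i) (2 * R), G n x ∂μ) ^ (q / p))
    (hGC : ∀ n, ∫⁻ x, G n x ∂μ ≤ C) (hwp : ∀ n, ∫⁻ x, w n x ^ p ∂μ ≤ C)
    (hvan : Tendsto (fun n => ⨆ y, ∫⁻ x in ball y R, w n x ^ r ∂μ) l (𝓝 0))
    {t : ℝ} (ht : t ∈ Ioo p q) :
    Tendsto (fun n => ∫⁻ x, w n x ^ t ∂μ) l (𝓝 0) := by
  have hq : 0 < q := hp.trans hpq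
  set θ := 1 - p / q
  have hθ : (1 - θ) * q = p := by simp only [θ, sub_sub_cancel, div_mul_cancel₀ _ hq.ne']
  have hθ₀ : 0 < θ := sub_pos.2 ((div_lt_one hq).2 hpq)
  have hθ₁ : θ ≤ 1 := sub_le_self _ (div_nonneg hp.le hq.le)
  have hvanish : Tendsto (fun n => ∫⁻ x, w n x ^ (θ * r + (1 - θ) * q) ∂μ) l (𝓝 0) :=
    ENNReal.tendsto_zero_of_le_rpow_mul hθ₀ (by finiteness : K ^ (1 - θ) * (M * C) ≠ ⊤)
      (fun n => (hz.lintegral_rpow_le_iSup_mul (hw n) (hG n) hp hr.le hθ₀.le hθ₁ hθ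
        (hloc n)).trans (by gcongr; exact hGC n)) hvan
  refine tendsto_lintegral_rpow_of_mem_Ioo hw hp.le ?_ ?_ hvanish hC
    (Cq := K * (M * C) ^ (q / p)) (by finiteness) hwp (fun n => ?_) ht
  · rw [hθ]; linarith [mul_pos hθ₀ hr]
  · linarith [mul_lt_mul_of_pos_left hrq hθ₀]
  · exact (hz.lintegral_rpow_le hp hpq.le (hG n) (hloc n)).trans
      (mul_le_mul_right (ENNReal.rpow_le_rpow (mul_le_mul_right (hGC n) _)
        (div_nonneg hq.le hp.le)) _)

end IsBoundedOverlapCover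

end BoundedOverlap

theorem Int.mem_Icc_ceil_of_abs_sub_lt {y : ℝ} {k : ℤ} {M : ℕ} (h : |y - k| < M) :
    k ∈ Finset.Icc (⌈y⌉ - M) (⌈y⌉ + M) := by
  obtain ⟨h₁, h₂⟩ := abs_sub_lt_iff.1 h
  have hlo : ⌈y⌉ < k + M + 1 := by
    exact_mod_cast (by linarith [Int.ceil_lt_add_one y] : (⌈y⌉ : ℝ) < k + M + 1)
  have hhi : k < ⌈y⌉ + M := by
    exact_mod_cast (by linarith [Int.le_ceil y] : (k : ℝ) < ⌈y⌉ + M)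
  rw [Finset.mem_Icc]
  omega

section Lattice

variable {N : ℕ} {h ρ : ℝ}

def latticePoint (h : ℝ) (k : Fin N → ℤ) : EuclideanSpace ℝ (Fin N) :=
  WithLp.toLp 2 fun i => h * k i

theorem exists_dist_latticePoint_le (hh : 0 < h) (x : EuclideanSpace ℝ (Fin N)) :
    ∃ k, dist x (latticePoint h k) ≤ h * √N / 2 := by
  refine ⟨fun i => round (x i / h), ?_⟩
  have hcoord (i : Fin N) : dist (x i) (h * round (x i / h)) ≤ h / 2 := by
    rw [Real.dist_eq, show x i - h * round (x i / h) = h * (x i / h - round (x i / h)) by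
      field_simp, abs_mul, abs_of_pos hh]
    linarith [mul_le_mul_of_nonneg_left (abs_sub_round (x i / h)) hh.le]
  calc dist x (latticePoint h _)
      = √(∑ i, dist (x i) (h * round (x i / h)) ^ 2) := EuclideanSpace.dist_eq _ _
    _ ≤ √(∑ _i : Fin N, (h / 2) ^ 2) :=
        Real.sqrt_le_sqrt (Finset.sum_le_sum fun i _ => pow_le_pow_left₀ dist_nonneg (hcoord i) 2)
    _ = h * √N / 2 := by
        rw [Finset.sum_const, Finset.card_univ, Fintype.card_fin, nsmul_eq_mul,
          Real.sqrt_mul (Nat.cast_nonneg N), Real.sqrt_sq (by positivity)]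
        ring

theorem iUnion_ball_latticePoint (hh : 0 < h) (hρ : h * √N / 2 < ρ) :
    ⋃ k, ball (latticePoint h k) ρ = (univ : Set (EuclideanSpace ℝ (Fin N))) :=
  eq_univ_of_forall fun x =>
    let ⟨k, hk⟩ := exists_dist_latticePoint_le hh x
    mem_iUnion.2 ⟨k, mem_ball.2 (hk.trans_lt hρ)⟩

theorem tsum_indicator_ball_latticePoint_le (hh : 0 < h) {M : ℕ} (hρ : ρ ≤ M * h)
    (g : EuclideanSpace ℝ (Fin N) → ℝ≥0∞) (x : EuclideanSpace ℝ (Fin N)) :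
    ∑' k, (ball (latticePoint h k) ρ).indicator g x ≤ ((2 * M + 1) ^ N : ℕ) * g x := by
  classical
  set T := Fintype.piFinset fun i => Finset.Icc (⌈x i / h⌉ - M) (⌈x i / h⌉ + M)
  have hT (k : Fin N → ℤ) (hk : x ∈ ball (latticePoint h k) ρ) : k ∈ T := by
    refine Fintype.mem_piFinset.2 fun i => Int.mem_Icc_ceil_of_abs_sub_lt ?_
    have hi : |x i - h * k i| < M * h :=
      ((PiLp.dist_apply_le x (latticePoint h k) i).trans_lt (mem_ball.1 hk)).trans_le hρ
    rw [show x i / h - k i = (x i - h * k i) / h by field_simp, abs_div, abs_of_pos hh]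
    exact (div_lt_iff₀ hh).2 hi
  calc ∑' k, (ball (latticePoint h k) ρ).indicator g x
      ≤ ∑' k, (T : Set (Fin N → ℤ)).indicator (fun _ => g x) k :=
        ENNReal.tsum_le_tsum fun k => by
          by_cases hk : x ∈ ball (latticePoint h k) ρ
          · simp [hk, hT k hk]
          · simp [hk]
    _ = T.card * g x := by rw [← sum_eq_tsum_indicator, Finset.sum_const, nsmul_eq_mul]
    _ = ((2 * M + 1) ^ N : ℕ) * g x := by
        have hcard (a : ℤ) : (a + M + 1 - (a - M)).toNat = 2 * M + 1 := by omega
        simp only [T, Fintype.card_piFinset, Int.card_Icc, hcard, Finset.prod_const,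
          Finset.card_univ, Fintype.card_fin]

theorem tsum_setLIntegral_ball_latticePoint_le (μ : Measure (EuclideanSpace ℝ (Fin N)))
    (hh : 0 < h) {M : ℕ} (hρ : ρ ≤ M * h) {g : EuclideanSpace ℝ (Fin N) → ℝ≥0∞}
    (hg : Measurable g) :
    ∑' k, ∫⁻ x in ball (latticePoint h k) ρ, g x ∂μ ≤ ((2 * M + 1) ^ N : ℕ) * ∫⁻ x, g x ∂μ := by
  simp_rw [← lintegral_indicator measurableSet_ball]
  rw [← lintegral_tsum fun k => (hg.indicator measurableSet_ball).aemeasurable,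
    ← lintegral_const_mul _ hg]
  exact lintegral_mono (tsum_indicator_ball_latticePoint_le hh hρ g)

-- Any spacing `h` with `h √N < 2R` would do; `R / (N + 1)` avoids square roots and `N = 0`.
theorem isBoundedOverlapCover_latticePoint (μ : Measure (EuclideanSpace ℝ (Fin N))) {R : ℝ}
    (hR : 0 < R) :
    IsBoundedOverlapCover μ (latticePoint (R / (N + 1))) R ((2 * (2 * N + 2) + 1) ^ N : ℕ) := by
  have hh : 0 < R / (N + 1) := by positivity
  refine ⟨iUnion_ball_latticePoint hh ?_,
    fun g hg => tsum_setLIntegral_ball_latticePoint_le μ hh ?_ hg⟩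
  · have hsqrt : √N < 2 * (N + 1) := (Real.sqrt_lt' (by positivity)).2 (by nlinarith)
    rw [div_mul_eq_mul_div, div_div, div_lt_iff₀ (by positivity)]
    nlinarith
  · push_cast
    field_simp
    linarith

end Lattice

theorem exists_cutoff_ball {E : Type*} [NormedAddCommGroup E] [NormedSpace ℝ E]
    [HasContDiffBump E] [FiniteDimensional ℝ E] {R : ℝ} (hR : 0 < R) :
    ∃ K : ℝ≥0, ∀ c : E, ∃ φ : E → ℝ, ContDiff ℝ 1 φ ∧ (∀ x, |φ x| ≤ 1) ∧ EqOn φ 1 (ball c R) ∧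
      tsupport φ ⊆ ball c (2 * R) ∧ ∀ x, ‖fderiv ℝ φ x‖ₑ ≤ (K : ℝ≥0∞) := by
  let φ (c : E) : ContDiffBump c := ⟨R, 3 / 2 * R, hR, by linarith⟩
  have hφ (c x : E) : φ c x = φ 0 (x - c) := by simp [ContDiffBump.apply, φ]
  obtain ⟨K, hK⟩ := ((φ 0).contDiff.continuous_fderiv one_ne_zero).bounded_above_of_compact_support
    ((φ 0).hasCompactSupport.fderiv ℝ)
  refine ⟨K.toNNReal, fun c => ⟨φ c, (φ c).contDiff,
    fun x => abs_le.2 ⟨by linarith [(φ c).nonneg (x := x)], (φ c).le_one⟩,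
    fun x hx => (φ c).one_of_mem_closedBall (ball_subset_closedBall hx), ?_, fun x => ?_⟩⟩
  · rw [(φ c).tsupport_eq]
    exact closedBall_subset_ball (by simp only [φ]; linarith)
  · rw [show ⇑(φ c) = fun x => φ 0 (x - c) from funext (hφ c), fderiv_comp_sub, ← ofReal_norm]
    exact ENNReal.ofReal_le_ofReal (hK _)

theorem enorm_fderiv_mul_rpow_le {E : Type*} [NormedAddCommGroup E] [NormedSpace ℝ E]
    {φ f : E → ℝ} {x : E} (hφ : DifferentiableAt ℝ φ x) (hf : DifferentiableAt ℝ f x)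
    (hφ₁ : |φ x| ≤ 1) {K : ℝ≥0∞} (hK : ‖fderiv ℝ φ x‖ₑ ≤ K) {p : ℝ} (hp : 1 ≤ p) :
    ‖fderiv ℝ (fun y => φ y * f y) x‖ₑ ^ p
      ≤ 2 ^ (p - 1) * (1 + K) ^ p * (‖f x‖ₑ ^ p + ‖fderiv ℝ f x‖ₑ ^ p) := by
  have hφ₁' : ‖φ x‖ₑ ≤ 1 := by
    rw [Real.enorm_eq_ofReal_abs]; exact ENNReal.ofReal_le_one.2 hφ₁
  have hle : ‖fderiv ℝ (fun y => φ y * f y) x‖ₑ ≤ (1 + K) * (‖f x‖ₑ + ‖fderiv ℝ f x‖ₑ) :=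
    calc ‖fderiv ℝ (fun y => φ y * f y) x‖ₑ
        = ‖φ x • fderiv ℝ f x + f x • fderiv ℝ φ x‖ₑ := by rw [fderiv_fun_mul hφ hf]
      _ ≤ ‖φ x • fderiv ℝ f x‖ₑ + ‖f x • fderiv ℝ φ x‖ₑ := 
          enorm_add_le (φ x • fderiv ℝ f x) _
      _ = ‖φ x‖ₑ * ‖fderiv ℝ f x‖ₑ + ‖f x‖ₑ * ‖fderiv ℝ φ x‖ₑ := by rw [enorm_smul, enorm_smul]
      _ ≤ 1 * ‖fderiv ℝ f x‖ₑ + K * ‖f x‖ₑ := by rw [mul_comm (‖f x‖ₑ)]; gcongr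
      _ ≤ (1 + K) * ‖fderiv ℝ f x‖ₑ + (1 + K) * ‖f x‖ₑ := by gcongr <;> simp
      _ = (1 + K) * (‖f x‖ₑ + ‖fderiv ℝ f x‖ₑ) := by rw [← mul_add, add_comm (‖fderiv ℝ f x‖ₑ)]
  calc ‖fderiv ℝ (fun y => φ y * f y) x‖ₑ ^ p
      ≤ (1 + K) ^ p * (‖f x‖ₑ + ‖fderiv ℝ f x‖ₑ) ^ p := by
        rw [← ENNReal.mul_rpow_of_nonneg _ _ (by linarith)]
        exact ENNReal.rpow_le_rpow hle (by linarith)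
    _ ≤ (1 + K) ^ p * (2 ^ (p - 1) * (‖f x‖ₑ ^ p + ‖fderiv ℝ f x‖ₑ ^ p)) := by
        gcongr; exact ENNReal.rpow_add_le_mul_rpow_add_rpow _ _ hp
    _ = 2 ^ (p - 1) * (1 + K) ^ p * (‖f x‖ₑ ^ p + ‖fderiv ℝ f x‖ₑ ^ p) := by ring

theorem lintegral_enorm_rpow_eq_eLpNorm_rpow {α F : Type*} [MeasurableSpace α]
    [NormedAddCommGroup F] (μ : Measure α) (f : α → F) {p : ℝ} (hp : 0 < p) :
    ∫⁻ x, ‖f x‖ₑ ^ p ∂μ = eLpNorm f p.toNNReal μ ^ p := by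
  simpa [hp.le] using
    (eLpNorm_nnreal_pow_eq_lintegral (f := f) (μ := μ) (Real.toNNReal_pos.2 hp).ne').symm

section Sobolev

variable {E : Type*} [NormedAddCommGroup E] [InnerProductSpace ℝ E] [FiniteDimensional ℝ E]
  [MeasurableSpace E] [BorelSpace E] (μ : Measure E) [μ.IsAddHaarMeasure] {p q : ℝ}

theorem lintegral_enorm_rpow_le_of_hasCompactSupport {F : Type*} [NormedAddCommGroup F]
    [InnerProductSpace ℝ F] {v : E → F} (hv : ContDiff ℝ 1 v) (h2v : HasCompactSupport v)
    (hp : 1 ≤ p) (hpn : p < finrank ℝ E) (hpq : q⁻¹ = p⁻¹ - (finrank ℝ E : ℝ)⁻¹) :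
    ∫⁻ x, ‖v x‖ₑ ^ q ∂μ
      ≤ (eLpNormLESNormFDerivOfEqInnerConst μ p : ℝ≥0∞) ^ q
        * (∫⁻ x, ‖fderiv ℝ v x‖ₑ ^ p ∂μ) ^ (q / p) := by
  have hp₀ : 0 < p := by linarith
  have hq : 0 < q := inv_pos.1 (by rw [hpq]; exact sub_pos.2 (inv_strictAnti₀ hp₀ hpn))
  have hsob := eLpNorm_le_eLpNorm_fderiv_of_eq_inner μ hv h2v (p := p.toNNReal) (p' := q.toNNReal)
    (by simpa using hp) (by exact_mod_cast hp₀.trans hpn) (by simp [hp₀.le, hq.le, hpq])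
  rw [Real.coe_toNNReal _ hp₀.le] at hsob
  calc ∫⁻ x, ‖v x‖ₑ ^ q ∂μ = eLpNorm v q.toNNReal μ ^ q :=
        lintegral_enorm_rpow_eq_eLpNorm_rpow μ v hq
    _ ≤ ((eLpNormLESNormFDerivOfEqInnerConst μ p : ℝ≥0∞)
          * eLpNorm (fderiv ℝ v) p.toNNReal μ) ^ q :=
        ENNReal.rpow_le_rpow hsob hq.le
    _ = (eLpNormLESNormFDerivOfEqInnerConst μ p : ℝ≥0∞) ^ q
          * (eLpNorm (fderiv ℝ v) p.toNNReal μ ^ p) ^ (q / p) := by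
        rw [ENNReal.mul_rpow_of_nonneg _ _ hq.le, ← ENNReal.rpow_mul, mul_div_cancel₀ _ hp₀.ne']
    _ = _ := by rw [← lintegral_enorm_rpow_eq_eLpNorm_rpow μ _ hp₀]

theorem exists_setLIntegral_ball_rpow_le (hp : 1 ≤ p) (hpn : p < finrank ℝ E)
    (hpq : q⁻¹ = p⁻¹ - (finrank ℝ E : ℝ)⁻¹) {R : ℝ} (hR : 0 < R) :
    ∃ K : ℝ≥0∞, K ≠ ⊤ ∧ ∀ f : E → ℝ, ContDiff ℝ 1 f → ∀ c : E,
      ∫⁻ x in ball c R, ‖f x‖ₑ ^ q ∂μ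
        ≤ K * (∫⁻ x in ball c (2 * R), (‖f x‖ₑ ^ p + ‖fderiv ℝ f x‖ₑ ^ p) ∂μ) ^ (q / p) := by
  have hp₀ : 0 < p := by linarith
  have hq : 0 < q := inv_pos.1 (by rw [hpq]; exact sub_pos.2 (inv_strictAnti₀ hp₀ hpn))
  obtain ⟨L, hL⟩ := exists_cutoff_ball (E := E) hR
  set C : ℝ≥0∞ := (eLpNormLESNormFDerivOfEqInnerConst μ p : ℝ≥0∞)
  set D : ℝ≥0∞ := 2 ^ (p - 1) * (1 + L) ^ p
  have hD : D ≠ ⊤ := by simp [D, ENNReal.mul_eq_top, ENNReal.rpow_eq_top_iff, hp₀]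
  refine ⟨C ^ q * D ^ (q / p), by finiteness, fun f hf c => ?_⟩
  obtain ⟨φ, hφ, hφ₁, hφR, hφsupp, hφ'⟩ := hL c
  set v : E → ℝ := fun x => φ x * f x
  have hvsupp : tsupport v ⊆ ball c (2 * R) := tsupport_mul_subset_left.trans hφsupp
  have hv : HasCompactSupport v := (isCompact_closedBall c (2 * R)).of_isClosed_subset
    (isClosed_tsupport v) (hvsupp.trans ball_subset_closedBall)
  have hgrad : ∫⁻ x, ‖fderiv ℝ v x‖ₑ ^ p ∂μ
      ≤ D * ∫⁻ x in ball c (2 * R), (‖f x‖ₑ ^ p + ‖fderiv ℝ f x‖ₑ ^ p) ∂μ := by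
    rw [← setLIntegral_eq_of_support_subset (s := ball c (2 * R)), ← lintegral_const_mul' _ _ hD]
    · exact setLIntegral_mono' measurableSet_ball fun x _ => enorm_fderiv_mul_rpow_le
        (hφ.differentiable one_ne_zero x) (hf.differentiable one_ne_zero x) (hφ₁ x) (hφ' x) hp
    · refine fun x hx => hvsupp (support_fderiv_subset ℝ fun h => hx ?_)
      simp [h, hp₀, ← ofReal_norm]
  calc ∫⁻ x in ball c R, ‖f x‖ₑ ^ q ∂μ = ∫⁻ x in ball c R, ‖v x‖ₑ ^ q ∂μ :=
        setLIntegral_congr_fun measurableSet_ball fun x hx => by simp [v, hφR hx]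
    _ ≤ ∫⁻ x, ‖v x‖ₑ ^ q ∂μ := setLIntegral_le_lintegral _ _
    _ ≤ C ^ q * (∫⁻ x, ‖fderiv ℝ v x‖ₑ ^ p ∂μ) ^ (q / p) :=
        lintegral_enorm_rpow_le_of_hasCompactSupport μ (hφ.mul hf) hv hp hpn hpq
    _ ≤ C ^ q * (D * ∫⁻ x in ball c (2 * R), (‖f x‖ₑ ^ p + ‖fderiv ℝ f x‖ₑ ^ p) ∂μ) ^ (q / p) := by
        gcongr
    _ = _ := by rw [ENNReal.mul_rpow_of_nonneg _ _ (by positivity), mul_assoc]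

end Sobolev

theorem ofReal_norm_rpow {E : Type*} [SeminormedAddGroup E] (x : E) {s : ℝ} (hs : 0 ≤ s) :
    ENNReal.ofReal (‖x‖ ^ s) = ‖x‖ₑ ^ s := by
  rw [← ENNReal.ofReal_rpow_of_nonneg (norm_nonneg _) hs, ofReal_norm]

theorem stmt8 (N : ℕ) (p : ℝ) (hp : 1 < p) (hpN : p < (N : ℝ))
    (r : ℝ) (hpr : p ≤ r) (hrcrit : r < (N : ℝ) * p / ((N : ℝ) - p))
    (u : ℕ → EuclideanSpace ℝ (Fin N) → ℝ) (hu : ∀ n, ContDiff ℝ 1 (u n))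
    (hbdd : (⨆ n, ((∫⁻ x : EuclideanSpace ℝ (Fin N), ENNReal.ofReal (|u n x| ^ p))
        + ∫⁻ x : EuclideanSpace ℝ (Fin N), ENNReal.ofReal (‖fderiv ℝ (u n) x‖ ^ p))) < ⊤)
    (R : ℝ) (hR : 0 < R)
    (hvan : Tendsto (fun n => ⨆ y : EuclideanSpace ℝ (Fin N),
        ∫⁻ x in Metric.ball y R, ENNReal.ofReal (|u n x| ^ r)) atTop (𝓝 0)) :
    ∀ t : ℝ, p < t → t < (N : ℝ) * p / ((N : ℝ) - p) →
      Tendsto (fun n => ∫⁻ x : EuclideanSpace ℝ (Fin N), ENNReal.ofReal (|u n x| ^ t))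
        atTop (𝓝 0) := by
  intro t hpt htq
  have hp₀ : 0 < p := by linarith
  have hN : (0 : ℝ) < N := hp₀.trans hpN
  have hr₀ : 0 < r := hp₀.trans_le hpr
  have hpq : p < (N : ℝ) * p / ((N : ℝ) - p) := by
    rw [lt_div_iff₀ (by linarith)]; nlinarith
  obtain ⟨K, hK, hloc⟩ := exists_setLIntegral_ball_rpow_le
    (volume : Measure (EuclideanSpace ℝ (Fin N))) (q := (N : ℝ) * p / ((N : ℝ) - p))
    hp.le (by simpa using hpN) (by simp; field_simp) hR
  simp only [← Real.norm_eq_abs, ofReal_norm_rpow _ hp₀.le, ofReal_norm_rpow _ hr₀.le,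
    ofReal_norm_rpow _ (hp₀.trans hpt).le] at hbdd hvan ⊢
  have hmeas (n : ℕ) : Measurable fun x => ‖u n x‖ₑ := (hu n).continuous.measurable.enorm
  have hmeas' (n : ℕ) : Measurable fun x => ‖fderiv ℝ (u n) x‖ₑ :=
    ((hu n).continuous_fderiv one_ne_zero).measurable.enorm
  refine (isBoundedOverlapCover_latticePoint volume hR).tendsto_lintegral_rpow
    (ENNReal.natCast_ne_top _) (w := fun n x => ‖u n x‖ₑ)
    (G := fun n x => ‖u n x‖ₑ ^ p + ‖fderiv ℝ (u n) x‖ₑ ^ p) (fun n => (hmeas n).aemeasurable)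
    (fun n => ((hmeas n).pow_const p).add ((hmeas' n).pow_const p)) hp₀ hpq hr₀ hrcrit hK hbdd.ne
    (fun n i => hloc (u n) (hu n) _) (fun n => ?_) (fun n => ?_) hvan ⟨hpt, htq⟩
  · rw [lintegral_add_left ((hmeas n).pow_const p)]
    exact le_iSup_of_le n le_rfl
  · exact le_iSup_of_le n le_self_add
end

section
/- Let N, K ≥ 1 be integers, let t > 1 be real with conjugate exponent t' = t/(t−1), and define A : ℝ^K → ℝ^K by A(y) = ‖y‖^{t−2} y for y ≠ 0 and A(0) = 0. Let η_n : ℝ^N → ℝ^K be measurable functions with η_n → 0 almost everywhere on ℝ^N and sup_n ∫_{ℝ^N} ‖η_n‖^t dx < ∞. Then for every measurable w : ℝ^N → ℝ^K with ∫_{ℝ^N} ‖w‖^t dx < ∞ one has ∫_{ℝ^N} ‖A(η_n + w) − A(η_n) − A(w)‖^{t'} dx → 0 as n → ∞. -/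
/-!
The map `A y = ‖y‖ ^ (t - 2) • y` is continuous and homogeneous of degree `t - 1`. Uniform
continuity of `A` on a ball, transported by homogeneity, gives for every `ε > 0` a constant `C` with
`‖A (a + b) - A a‖ ≤ ε ‖a‖ ^ (t - 1) + C ‖b‖ ^ (t - 1)`, and raising this to the power
`t' = t / (t - 1)` gives `‖A (η + w) - A η - A w‖ ^ t' ≤ ε ‖η‖ ^ t + D ‖w‖ ^ t`.
The part of the integrand exceeding `ε ‖η n‖ ^ t` is dominated by the integrable `D ‖w‖ ^ t` and
tends to `0` almost everywhere, so by dominated convergence the limsup of the integrals is at most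
`ε * sup n, ∫ ‖η n‖ ^ t`; as `ε` is arbitrary, the integrals tend to `0`.
-/

open Filter MeasureTheory
open scoped Topology ENNReal NNReal

theorem Real.rpow_add_le_mul_rpow_add_rpow {x y : ℝ} (hx : 0 ≤ x) (hy : 0 ≤ y) {p : ℝ}
    (hp : 1 ≤ p) : (x + y) ^ p ≤ 2 ^ (p - 1) * (x ^ p + y ^ p) := by
  exact_mod_cast NNReal.rpow_add_le_mul_rpow_add_rpow ⟨x, hx⟩ ⟨y, hy⟩ hp

section DualityMap

variable {E : Type*} [NormedAddCommGroup E] [NormedSpace ℝ E] {t : ℝ}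

variable (t) in
noncomputable def dualityMap (y : E) : E := ‖y‖ ^ (t - 2) • y

@[simp]
lemma dualityMap_zero : dualityMap t (0 : E) = 0 := smul_zero _

lemma norm_dualityMap (ht : 1 < t) (y : E) : ‖dualityMap t y‖ = ‖y‖ ^ (t - 1) := by
  rcases eq_or_ne y 0 with rfl | hy
  · simp [Real.zero_rpow (by linarith : t - 1 ≠ 0)]
  · rw [dualityMap, norm_smul, Real.norm_of_nonneg (by positivity),
      ← Real.rpow_add_one (norm_ne_zero_iff.2 hy)]
    ring_nf

lemma dualityMap_smul {s : ℝ} (hs : 0 < s) (y : E) :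
    dualityMap t (s • y) = s ^ (t - 1) • dualityMap t y := by
  rw [dualityMap, dualityMap, norm_smul, Real.norm_of_nonneg hs.le,
    Real.mul_rpow hs.le (norm_nonneg y), smul_smul, smul_smul, mul_right_comm,
    ← Real.rpow_add_one hs.ne']
  ring_nf

lemma continuous_dualityMap (ht : 1 < t) : Continuous (dualityMap t : E → E) := by
  refine continuous_iff_continuousAt.2 fun y => ?_
  rcases eq_or_ne y 0 with rfl | hy
  · rw [ContinuousAt, dualityMap_zero, tendsto_zero_iff_norm_tendsto_zero]
    simp_rw [norm_dualityMap ht]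
    simpa [Real.zero_rpow (by linarith : t - 1 ≠ 0)] using
      (continuous_norm.tendsto (0 : E)).rpow_const (Or.inr (by linarith : 0 ≤ t - 1))
  · exact (continuous_norm.continuousAt.rpow_const (Or.inl (norm_ne_zero_iff.2 hy))).smul
      continuousAt_id

lemma tendsto_dualityMap_add_sub_sub (ht : 1 < t) {ι : Type*} {l : Filter ι} {u : ι → E}
    (hu : Tendsto u l (𝓝 0)) (w : E) :
    Tendsto (fun i => dualityMap t (u i + w) - dualityMap t (u i) - dualityMap t w) l (𝓝 0) := by
  have hA := continuous_dualityMap (E := E) ht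
  have := (((hA.tendsto w).comp (by simpa using hu.add_const w)).sub
    ((hA.tendsto 0).comp hu)).sub_const (dualityMap t w)
  rwa [dualityMap_zero, sub_zero, sub_self] at this

end DualityMap

section DualityMapEstimate

variable {E : Type*} [NormedAddCommGroup E] [NormedSpace ℝ E] [ProperSpace E] {t : ℝ}

lemma exists_norm_dualityMap_add_sub_le_of_norm_add_norm_eq_one (ht : 1 < t) {ε : ℝ}
    (hε : 0 < ε) : ∃ C, 0 ≤ C ∧ ∀ a b : E, ‖a‖ + ‖b‖ = 1 →
      ‖dualityMap t (a + b) - dualityMap t a‖ ≤ ε * ‖a‖ ^ (t - 1) + C * ‖b‖ ^ (t - 1) := by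
  have ht1 : 0 < t - 1 := by linarith
  obtain ⟨δ₀, hδ₀, hδ₀A⟩ := Metric.uniformContinuousOn_iff.1
    ((isCompact_closedBall (0 : E) 2).uniformContinuousOn_of_continuous
      (continuous_dualityMap ht).continuousOn) (ε / 2 ^ (t - 1)) (by positivity)
  set δ := min δ₀ (1 / 2)
  have hδ : 0 < δ := lt_min hδ₀ one_half_pos
  refine ⟨2 / δ ^ (t - 1), by positivity, fun a b hab => ?_⟩
  have ha : ‖a‖ ≤ 1 := by linarith [norm_nonneg b]
  rcases lt_or_ge ‖b‖ δ with hb | hb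
  · -- `a + b` is close to `a`, and `‖a‖ ≥ 1/2`
    have ha' : 1 / 2 ≤ ‖a‖ := by linarith [min_le_right δ₀ (1 / 2)]
    have hclose : dist (dualityMap t (a + b)) (dualityMap t a) < ε / 2 ^ (t - 1) := by
      refine hδ₀A _ ?_ _ ?_ ?_
      · simpa using (norm_add_le a b).trans (by linarith)
      · simpa using ha.trans one_le_two
      · simpa using hb.trans_le (min_le_left _ _)
    have : ε / 2 ^ (t - 1) ≤ ε * ‖a‖ ^ (t - 1) := by
      rw [div_eq_mul_inv, ← Real.inv_rpow zero_le_two]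
      gcongr
      linarith
    rw [dist_eq_norm] at hclose
    nlinarith [show 0 ≤ 2 / δ ^ (t - 1) * ‖b‖ ^ (t - 1) by positivity]
  · -- both terms have norm at most `1`, while `‖b‖ ≥ δ`
    have hbound : ‖dualityMap t (a + b) - dualityMap t a‖ ≤ 2 := by
      calc _ ≤ ‖a + b‖ ^ (t - 1) + ‖a‖ ^ (t - 1) := by
            rw [← norm_dualityMap ht, ← norm_dualityMap ht]; exact norm_sub_le _ _
        _ ≤ 1 + 1 := by
            gcongr <;> exact Real.rpow_le_one (norm_nonneg _) (by linarith [norm_add_le a b]) ht1.le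
        _ = 2 := one_add_one_eq_two
    have : 2 ≤ 2 / δ ^ (t - 1) * ‖b‖ ^ (t - 1) := by
      rw [div_mul_eq_mul_div, le_div_iff₀ (by positivity)]
      gcongr
    nlinarith [show 0 ≤ ε * ‖a‖ ^ (t - 1) by positivity]

lemma exists_norm_dualityMap_add_sub_le (ht : 1 < t) {ε : ℝ} (hε : 0 < ε) :
    ∃ C, 0 ≤ C ∧ ∀ a b : E,
      ‖dualityMap t (a + b) - dualityMap t a‖ ≤ ε * ‖a‖ ^ (t - 1) + C * ‖b‖ ^ (t - 1) := by
  obtain ⟨C, hC0, hC⟩ := exists_norm_dualityMap_add_sub_le_of_norm_add_norm_eq_one (E := E) ht hε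
  refine ⟨C, hC0, fun a b => ?_⟩
  rcases (add_nonneg (norm_nonneg a) (norm_nonneg b)).eq_or_lt with hs | hs_pos
  · obtain ⟨rfl, rfl⟩ : a = 0 ∧ b = 0 := by
      constructor <;> apply norm_eq_zero.1 <;> linarith [norm_nonneg a, norm_nonneg b]
    simp only [add_zero, dualityMap_zero, sub_zero, norm_zero]
    positivity
  -- both sides are homogeneous of degree `t - 1`
  obtain ⟨s, a, b, hs, hab, rfl, rfl⟩ :
      ∃ (s : ℝ) (a' b' : E), 0 < s ∧ ‖a'‖ + ‖b'‖ = 1 ∧ a = s • a' ∧ b = s • b' := by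
    refine ⟨_, (‖a‖ + ‖b‖)⁻¹ • a, (‖a‖ + ‖b‖)⁻¹ • b, hs_pos, ?_, ?_, ?_⟩
    · rw [norm_smul, norm_smul, ← mul_add, Real.norm_of_nonneg (by positivity),
        inv_mul_cancel₀ hs_pos.ne']
    all_goals rw [smul_inv_smul₀ hs_pos.ne']
  have hst : 0 < s ^ (t - 1) := by positivity
  rw [← smul_add, dualityMap_smul hs, dualityMap_smul hs, ← smul_sub, norm_smul, norm_smul,
    norm_smul, Real.norm_of_nonneg hst.le, Real.norm_of_nonneg hs.le,
    Real.mul_rpow hs.le (norm_nonneg a), Real.mul_rpow hs.le (norm_nonneg b)]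
  nlinarith [hC a b hab]

lemma exists_rpow_norm_dualityMap_add_sub_sub_le (ht : 1 < t) {ε : ℝ} (hε : 0 < ε) :
    ∃ D, 0 ≤ D ∧ ∀ a b : E,
      ‖dualityMap t (a + b) - dualityMap t a - dualityMap t b‖ ^ (t / (t - 1)) ≤
        ε * ‖a‖ ^ t + D * ‖b‖ ^ t := by
  set p := t / (t - 1)
  have ht1 : 0 < t - 1 := by linarith
  have hp : 1 ≤ p := by rw [le_div_iff₀ ht1]; linarith
  have hpt : (t - 1) * p = t := by simp only [p]; field_simp
  -- `δ` is chosen so that `2 ^ (p - 1) * δ ^ p = ε`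
  set δ := (ε / 2 ^ (p - 1)) ^ p⁻¹
  obtain ⟨C, hC0, hC⟩ := exists_norm_dualityMap_add_sub_le (E := E) ht (ε := δ) (by positivity)
  refine ⟨2 ^ (p - 1) * (C + 1) ^ p, by positivity, fun a b => ?_⟩
  have hle : ‖dualityMap t (a + b) - dualityMap t a - dualityMap t b‖ ≤
      δ * ‖a‖ ^ (t - 1) + (C + 1) * ‖b‖ ^ (t - 1) := by
    calc _ ≤ ‖dualityMap t (a + b) - dualityMap t a‖ + ‖b‖ ^ (t - 1) := by
          rw [← norm_dualityMap ht]; exact norm_sub_le _ _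
      _ ≤ _ := by linarith [hC a b]
  calc _ ≤ (δ * ‖a‖ ^ (t - 1) + (C + 1) * ‖b‖ ^ (t - 1)) ^ p := by gcongr
    _ ≤ 2 ^ (p - 1) * ((δ * ‖a‖ ^ (t - 1)) ^ p + ((C + 1) * ‖b‖ ^ (t - 1)) ^ p) :=
      Real.rpow_add_le_mul_rpow_add_rpow (by positivity) (by positivity) hp
    _ = ε * ‖a‖ ^ t + 2 ^ (p - 1) * (C + 1) ^ p * ‖b‖ ^ t := by
      rw [Real.mul_rpow (by positivity) (by positivity),
        Real.mul_rpow (by positivity) (by positivity),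
        ← Real.rpow_mul (norm_nonneg a), ← Real.rpow_mul (norm_nonneg b), hpt,
        Real.rpow_inv_rpow (by positivity) (by positivity)]
      field_simp

end DualityMapEstimate

section LintegralTendstoZero

variable {α : Type*} [MeasurableSpace α] {μ : Measure α} {f g : ℕ → α → ℝ≥0∞}

lemma limsup_lintegral_le_mul_iSup_lintegral (hf : ∀ n, AEMeasurable (f n) μ)
    (hg : ∀ n, AEMeasurable (g n) μ) (hf_lim : ∀ᵐ x ∂μ, Tendsto (fun n => f n x) atTop (𝓝 0))
    {c : ℝ≥0∞} {B : α → ℝ≥0∞} (hB : ∫⁻ x, B x ∂μ ≠ ⊤) (hle : ∀ n x, f n x ≤ c * g n x + B x) :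
    limsup (fun n => ∫⁻ x, f n x ∂μ) atTop ≤ c * ⨆ n, ∫⁻ x, g n x ∂μ := by
  -- the excess of `f n` over `c * g n` is dominated by `B` and tends to `0`
  set G : ℕ → α → ℝ≥0∞ := fun n x => f n x - c * g n x
  have hG : Tendsto (fun n => ∫⁻ x, G n x ∂μ) atTop (𝓝 0) := by
    simpa using tendsto_lintegral_of_dominated_convergence' B
      (fun n => (hf n).sub ((hg n).const_mul c))
      (fun n => ae_of_all _ fun x => tsub_le_iff_left.2 (hle n x)) hB
      (hf_lim.mono fun x hx => tendsto_of_tendsto_of_tendsto_of_le_of_le tendsto_const_nhds hx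
        (fun _ => zero_le) fun _ => tsub_le_self)
  have hfG : ∀ n, ∫⁻ x, f n x ∂μ ≤ ∫⁻ x, G n x ∂μ + c * ⨆ n, ∫⁻ x, g n x ∂μ := fun n =>
    calc ∫⁻ x, f n x ∂μ ≤ ∫⁻ x, G n x + c * g n x ∂μ := lintegral_mono fun x => le_tsub_add
      _ = ∫⁻ x, G n x ∂μ + c * ∫⁻ x, g n x ∂μ := by
        rw [lintegral_add_right' _ ((hg n).const_mul c), lintegral_const_mul'' c (hg n)]
      _ ≤ _ := by gcongr; exact le_iSup (fun n => ∫⁻ x, g n x ∂μ) n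
  calc _ ≤ limsup (fun n => ∫⁻ x, G n x ∂μ + c * ⨆ n, ∫⁻ x, g n x ∂μ) atTop :=
        limsup_le_limsup (Eventually.of_forall hfG)
    _ = c * ⨆ n, ∫⁻ x, g n x ∂μ := by simpa using (hG.add_const _).limsup_eq

theorem tendsto_lintegral_zero_of_le_mul_add (hf : ∀ n, AEMeasurable (f n) μ)
    (hg : ∀ n, AEMeasurable (g n) μ) (hf_lim : ∀ᵐ x ∂μ, Tendsto (fun n => f n x) atTop (𝓝 0))
    (hg_bdd : ⨆ n, ∫⁻ x, g n x ∂μ < ⊤)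
    (hle : ∀ ε : ℝ≥0, 0 < ε →
      ∃ B : α → ℝ≥0∞, ∫⁻ x, B x ∂μ ≠ ⊤ ∧ ∀ n x, f n x ≤ ε * g n x + B x) :
    Tendsto (fun n => ∫⁻ x, f n x ∂μ) atTop (𝓝 0) := by
  refine tendsto_of_le_liminf_of_limsup_le zero_le ?_
  refine ENNReal.le_of_forall_pos_le_add fun c hc _ => ?_
  lift ⨆ n, ∫⁻ x, g n x ∂μ to ℝ≥0 using hg_bdd.ne with M hM
  obtain ⟨B, hB, hfB⟩ := hle (c / (M + 1)) (by positivity)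
  calc _ ≤ ↑(c / (M + 1)) * (M : ℝ≥0∞) :=
        hM ▸ limsup_lintegral_le_mul_iSup_lintegral hf hg hf_lim hB hfB
    _ ≤ c := by
      rw [← ENNReal.coe_mul, ENNReal.coe_le_coe]
      calc c / (M + 1) * M ≤ c / (M + 1) * (M + 1) := by gcongr; exact le_self_add
        _ = c := div_mul_cancel₀ c (by positivity)
    _ = 0 + c := (zero_add _).symm

end LintegralTendstoZero

theorem tendsto_lintegral_rpow_norm_dualityMap_add_sub_sub {α E : Type*} [MeasurableSpace α]
    {μ : Measure α} [NormedAddCommGroup E] [NormedSpace ℝ E] [ProperSpace E] [MeasurableSpace E]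
    [BorelSpace E] {t : ℝ} (ht : 1 < t) {η : ℕ → α → E} (hη : ∀ n, AEMeasurable (η n) μ)
    (hae : ∀ᵐ x ∂μ, Tendsto (fun n => η n x) atTop (𝓝 0))
    (hbdd : ⨆ n, ∫⁻ x, ENNReal.ofReal (‖η n x‖ ^ t) ∂μ < ⊤) {w : α → E} (hw : AEMeasurable w μ)
    (hwint : ∫⁻ x, ENNReal.ofReal (‖w x‖ ^ t) ∂μ < ⊤) :
    Tendsto (fun n => ∫⁻ x, ENNReal.ofReal (‖dualityMap t (η n x + w x) - dualityMap t (η n x)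
      - dualityMap t (w x)‖ ^ (t / (t - 1))) ∂μ) atTop (𝓝 0) := by
  have hp : 0 < t / (t - 1) := div_pos (by linarith) (by linarith)
  have hA := (continuous_dualityMap (E := E) ht).measurable
  refine tendsto_lintegral_zero_of_le_mul_add (g := fun n x => ENNReal.ofReal (‖η n x‖ ^ t))
    (fun n => ?_) (fun n => ((hη n).norm.pow_const t).ennreal_ofReal) ?_ hbdd fun ε hε => ?_
  · exact ((((hA.comp_aemeasurable ((hη n).add hw)).sub (hA.comp_aemeasurable (hη n))).sub
      (hA.comp_aemeasurable hw)).norm.pow_const _).ennreal_ofReal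
  · filter_upwards [hae] with x hx
    simpa [Real.zero_rpow hp.ne'] using ENNReal.tendsto_ofReal
      ((tendsto_dualityMap_add_sub_sub ht hx (w x)).norm.rpow_const (Or.inr hp.le))
  · obtain ⟨D, hD0, hD⟩ := exists_rpow_norm_dualityMap_add_sub_sub_le (E := E) ht hε
    refine ⟨fun x => ENNReal.ofReal (D * ‖w x‖ ^ t), ?_, fun n x => ?_⟩
    · simp_rw [ENNReal.ofReal_mul hD0]
      rw [lintegral_const_mul' _ _ ENNReal.ofReal_ne_top]
      exact ENNReal.mul_ne_top ENNReal.ofReal_ne_top hwint.ne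
    · calc _ ≤ ENNReal.ofReal (ε * ‖η n x‖ ^ t + D * ‖w x‖ ^ t) :=
          ENNReal.ofReal_le_ofReal (hD _ _)
        _ ≤ _ := by
          rw [← ENNReal.ofReal_coe_nnreal, ← ENNReal.ofReal_mul ε.coe_nonneg]
          exact ENNReal.ofReal_add_le

theorem stmt9_general (N K : ℕ) (t : ℝ) (ht : 1 < t)
    (η : ℕ → EuclideanSpace ℝ (Fin N) → EuclideanSpace ℝ (Fin K))
    (hη : ∀ n, Measurable (η n))
    (hae : ∀ᵐ x : EuclideanSpace ℝ (Fin N), Tendsto (fun n => η n x) atTop (𝓝 0))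
    (hbdd : (⨆ n, ∫⁻ x : EuclideanSpace ℝ (Fin N), ENNReal.ofReal (‖η n x‖ ^ t)) < ⊤)
    (w : EuclideanSpace ℝ (Fin N) → EuclideanSpace ℝ (Fin K)) (hw : Measurable w)
    (hwint : (∫⁻ x : EuclideanSpace ℝ (Fin N), ENNReal.ofReal (‖w x‖ ^ t)) < ⊤) :
    Tendsto (fun n => ∫⁻ x : EuclideanSpace ℝ (Fin N),
        ENNReal.ofReal
          (‖(‖η n x + w x‖ ^ (t - 2)) • (η n x + w x)
              - (‖η n x‖ ^ (t - 2)) • (η n x)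
              - (‖w x‖ ^ (t - 2)) • (w x)‖ ^ (t / (t - 1)))) atTop (𝓝 0) :=
  tendsto_lintegral_rpow_norm_dualityMap_add_sub_sub ht (fun n => (hη n).aemeasurable) hae hbdd
    hw.aemeasurable hwint

theorem stmt9 (N K : ℕ) (hN : 1 ≤ N) (hK : 1 ≤ K) (t : ℝ) (ht : 1 < t)
    (η : ℕ → EuclideanSpace ℝ (Fin N) → EuclideanSpace ℝ (Fin K))
    (hη : ∀ n, Measurable (η n))
    (hae : ∀ᵐ x : EuclideanSpace ℝ (Fin N), Tendsto (fun n => η n x) atTop (𝓝 0))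
    (hbdd : (⨆ n, ∫⁻ x : EuclideanSpace ℝ (Fin N), ENNReal.ofReal (‖η n x‖ ^ t)) < ⊤)
    (w : EuclideanSpace ℝ (Fin N) → EuclideanSpace ℝ (Fin K)) (hw : Measurable w)
    (hwint : (∫⁻ x : EuclideanSpace ℝ (Fin N), ENNReal.ofReal (‖w x‖ ^ t)) < ⊤) :
    Tendsto (fun n => ∫⁻ x : EuclideanSpace ℝ (Fin N),
        ENNReal.ofReal
          (‖(‖η n x + w x‖ ^ (t - 2)) • (η n x + w x)
              - (‖η n x‖ ^ (t - 2)) • (η n x)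
              - (‖w x‖ ^ (t - 2)) • (w x)‖ ^ (t / (t - 1)))) atTop (𝓝 0) :=
  stmt9_general N K t ht η hη hae hbdd w hw hwint
end

section
/- Let 1 < p < q be real numbers, let A > 0 and B ∈ ℝ, and let f : ℝ → ℝ be such that t ↦ f(t)/t^{q−1} is strictly increasing on (0, ∞). Let u : ℝ^N → ℝ be measurable with u(x) ≥ 0 for almost every x, such that the set {x : u(x) > 0} has positive Lebesgue measure, and such that x ↦ f(t·u(x))·u(x) is integrable on ℝ^N for every t > 0. Then there is at most one t > 0 satisfying t^{p−q} A + B = t^{1−q} ∫_{{u>0}} f(t·u(x))·u(x) dx. -/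
open Filter MeasureTheory
open scoped Topology

theorem stmt10 (N : ℕ) (p q A B : ℝ) (hp : 1 < p) (hpq : p < q) (hA : 0 < A)
    (f : ℝ → ℝ)
    (hmono : StrictMonoOn (fun t : ℝ => f t / t ^ (q - 1)) (Set.Ioi (0:ℝ)))
    (u : EuclideanSpace ℝ (Fin N) → ℝ) (hu : Measurable u)
    (hupos : ∀ᵐ x : EuclideanSpace ℝ (Fin N), 0 ≤ u x)
    (hposmeas : 0 < volume {x : EuclideanSpace ℝ (Fin N) | 0 < u x})
    (hint : ∀ t > (0:ℝ),
      Integrable (fun x : EuclideanSpace ℝ (Fin N) => f (t * u x) * u x))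
    (t₁ t₂ : ℝ) (ht₁ : 0 < t₁) (ht₂ : 0 < t₂)
    (he₁ : t₁ ^ (p - q) * A + B
      = t₁ ^ (1 - q) * ∫ x in {x : EuclideanSpace ℝ (Fin N) | 0 < u x}, f (t₁ * u x) * u x)
    (he₂ : t₂ ^ (p - q) * A + B
      = t₂ ^ (1 - q) * ∫ x in {x : EuclideanSpace ℝ (Fin N) | 0 < u x}, f (t₂ * u x) * u x) :
    t₁ = t₂ := by
  set s : Set (EuclideanSpace ℝ (Fin N)) := {x | 0 < u x} with hs_def
  have hsm : MeasurableSet s := measurableSet_lt measurable_const hu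
  have heq : ∀ t : ℝ, 0 < t → ∀ x ∈ s,
      t ^ ((1:ℝ) - q) * (f (t * u x) * u x)
        = f (t * u x) / (t * u x) ^ (q - 1) * (u x) ^ q := by
    intro t ht x hx
    have hv : (0:ℝ) < u x := hx
    have h1 : (t * u x) ^ (q - 1) = t ^ (q - 1) * (u x) ^ (q - 1) :=
      Real.mul_rpow ht.le hv.le
    have h2 : t ^ ((1:ℝ) - q) = (t ^ (q - 1))⁻¹ := by
      rw [show (1:ℝ) - q = -(q - 1) by ring, Real.rpow_neg ht.le]
    have h3 : (u x) ^ q = (u x) ^ (q - 1) * u x := by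
      have h3' := Real.rpow_add hv (q - 1) 1
      rw [Real.rpow_one, show q - 1 + 1 = q by ring] at h3'
      exact h3'
    have ht1 : t ^ (q - 1) ≠ 0 := (Real.rpow_pos_of_pos ht _).ne'
    have hv1 : (u x) ^ (q - 1) ≠ 0 := (Real.rpow_pos_of_pos hv _).ne'
    rw [h1, h2, h3]
    field_simp
  have key : ∀ a b : ℝ, 0 < a → a < b →
      a ^ ((1:ℝ) - q) * ∫ x in s, f (a * u x) * u x
        < b ^ ((1:ℝ) - q) * ∫ x in s, f (b * u x) * u x := by
    intro a b ha hab
    have hb : 0 < b := ha.trans hab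
    have hinta : IntegrableOn (fun x => f (a * u x) * u x) s volume :=
      (hint a ha).restrict
    have hintb : IntegrableOn (fun x => f (b * u x) * u x) s volume :=
      (hint b hb).restrict
    have e : ∀ t : ℝ, 0 < t → t ^ ((1:ℝ) - q) * ∫ x in s, f (t * u x) * u x
        = ∫ x in s, f (t * u x) / (t * u x) ^ (q - 1) * (u x) ^ q := by
      intro t ht
      rw [← integral_const_mul]
      exact setIntegral_congr_fun hsm (fun x hx => heq t ht x hx)
    rw [e a ha, e b hb]
    have ia : IntegrableOn (fun x => f (a * u x) / (a * u x) ^ (q - 1) * (u x) ^ q) s volume :=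
      IntegrableOn.congr_fun (hinta.const_mul (a ^ ((1:ℝ) - q))) (fun x hx => heq a ha x hx) hsm
    have ib : IntegrableOn (fun x => f (b * u x) / (b * u x) ^ (q - 1) * (u x) ^ q) s volume :=
      IntegrableOn.congr_fun (hintb.const_mul (b ^ ((1:ℝ) - q))) (fun x hx => heq b hb x hx) hsm
    have hpt : ∀ x ∈ s,
        f (a * u x) / (a * u x) ^ (q - 1) * (u x) ^ q
          < f (b * u x) / (b * u x) ^ (q - 1) * (u x) ^ q := by
      intro x hx
      have hv : (0:ℝ) < u x := hx
      have h1 : a * u x < b * u x := mul_lt_mul_of_pos_right hab hv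
      have h2 := hmono (Set.mem_Ioi.2 (mul_pos ha hv)) (Set.mem_Ioi.2 (mul_pos hb hv)) h1
      exact mul_lt_mul_of_pos_right h2 (Real.rpow_pos_of_pos hv q)
    have hsub : IntegrableOn
        (fun x => f (b * u x) / (b * u x) ^ (q - 1) * (u x) ^ q
          - f (a * u x) / (a * u x) ^ (q - 1) * (u x) ^ q) s volume := ib.sub ia
    have hpos : 0 < ∫ x in s,
        (f (b * u x) / (b * u x) ^ (q - 1) * (u x) ^ q
          - f (a * u x) / (a * u x) ^ (q - 1) * (u x) ^ q) := by
      rw [setIntegral_pos_iff_support_of_nonneg_ae ?_ hsub]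
      · refine hposmeas.trans_le (measure_mono ?_)
        intro x hx
        exact ⟨(sub_pos.2 (hpt x hx)).ne', hx⟩
      · filter_upwards [ae_restrict_mem hsm] with x hx
        exact (sub_pos.2 (hpt x hx)).le
    rw [integral_sub ib ia] at hpos
    linarith
  rcases lt_trichotomy t₁ t₂ with h | h | h
  · exfalso
    have h1 := key t₁ t₂ ht₁ h
    rw [← he₁, ← he₂] at h1
    have h2 : t₂ ^ (p - q) < t₁ ^ (p - q) :=
      Real.rpow_lt_rpow_of_neg ht₁ h (by linarith)
    nlinarith
  · exact h
  · exfalso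
    have h1 := key t₂ t₁ ht₂ h
    rw [← he₁, ← he₂] at h1
    have h2 : t₁ ^ (p - q) < t₂ ^ (p - q) :=
      Real.rpow_lt_rpow_of_neg ht₂ h (by linarith)
    nlinarith
end

section
/- For every real t > 1 and every ξ > 0 there exists a constant C_ξ > 0 such that for all a, b ∈ ℝ^N one has ‖ ‖a+b‖^{t−2}(a+b) − ‖a‖^{t−2} a ‖ ≤ ξ ‖a‖^{t−1} + C_ξ ‖b‖^{t−1}, where ‖z‖^{t−2} z is understood to be 0 when z = 0. -/
/-! The map `F x = ‖x‖^(t-2) x` is positively homogeneous of degree `t - 1`, so it suffices to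
compare `F (a + b)` with `F a` after rescaling `a` to the unit sphere. There `F` is the identity,
and `F (u + v) - u = (‖u + v‖^(t-2) - 1) (u + v) + v` is uniformly small for small `v`, by
continuity of `r ↦ r^(t-2)` at `1`. Hence `‖F (a + b) - F a‖ ≤ ξ ‖a‖^(t-1)` once
`‖b‖ ≤ δ ‖a‖`; otherwise `‖a‖` and `‖a + b‖` are both `O(‖b‖)`, and the crude bound
`‖F (a + b)‖ + ‖F a‖` suffices. No compactness is needed, so this holds in any real normed space. -/

open Real

section NormPowSMul

variable {E : Type*} [NormedAddCommGroup E] [NormedSpace ℝ E]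

noncomputable def normPowSMul (t : ℝ) (x : E) : E := ‖x‖ ^ (t - 2) • x

lemma norm_normPowSMul {t : ℝ} (ht : t ≠ 1) (x : E) : ‖normPowSMul t x‖ = ‖x‖ ^ (t - 1) := by
  rcases eq_or_ne x 0 with rfl | hx
  · simp [normPowSMul, zero_rpow (sub_ne_zero.mpr ht)]
  · have hx : 0 < ‖x‖ := norm_pos_iff.mpr hx
    rw [normPowSMul, norm_smul, norm_of_nonneg (rpow_nonneg hx.le _), ← rpow_add_one hx.ne']
    ring_nf

lemma normPowSMul_smul (t : ℝ) {c : ℝ} (hc : 0 < c) (x : E) :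
    normPowSMul t (c • x) = c ^ (t - 1) • normPowSMul t x := by
  rw [normPowSMul, normPowSMul, norm_smul, norm_of_nonneg hc.le, mul_rpow hc.le (norm_nonneg x),
    smul_smul, smul_smul, mul_right_comm, ← rpow_add_one hc.ne']
  ring_nf

lemma normPowSMul_of_norm_eq_one (t : ℝ) {u : E} (hu : ‖u‖ = 1) : normPowSMul t u = u := by
  rw [normPowSMul, hu, one_rpow, one_smul]

lemma exists_norm_normPowSMul_add_sub_le_of_norm_eq_one (t : ℝ) {ε : ℝ} (hε : 0 < ε) :
    ∃ δ > 0, ∀ u v : E, ‖u‖ = 1 → ‖v‖ ≤ δ →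
      ‖normPowSMul t (u + v) - normPowSMul t u‖ ≤ ε := by
  obtain ⟨η, hη, hcont⟩ := Metric.continuousAt_iff.mp
    (continuousAt_rpow_const 1 (t - 2) (Or.inl one_ne_zero)) (ε / 4) (by positivity)
  refine ⟨min (η / 2) (min 1 (ε / 2)), by positivity, fun u v hu hv => ?_⟩
  have hvη : ‖v‖ < η := (hv.trans (min_le_left _ _)).trans_lt (half_lt_self hη)
  have hv1 : ‖v‖ ≤ 1 := hv.trans ((min_le_right _ _).trans (min_le_left _ _))
  have hvε : ‖v‖ ≤ ε / 2 := hv.trans ((min_le_right _ _).trans (min_le_right _ _))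
  have hscalar : |‖u + v‖ ^ (t - 2) - 1| ≤ ε / 4 := by
    have hdist : dist ‖u + v‖ 1 < η := by
      rw [dist_eq, ← hu]
      exact (abs_norm_sub_norm_le _ _).trans_lt (by simpa using hvη)
    simpa [dist_eq] using (hcont hdist).le
  have hsum : ‖u + v‖ ≤ 2 := (norm_add_le u v).trans (by linarith)
  have hdecomp : normPowSMul t (u + v) - normPowSMul t u
      = (‖u + v‖ ^ (t - 2) - 1) • (u + v) + v := by
    rw [normPowSMul_of_norm_eq_one t hu, normPowSMul, sub_smul, one_smul]
    abel
  calc ‖normPowSMul t (u + v) - normPowSMul t u‖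
      ≤ |‖u + v‖ ^ (t - 2) - 1| * ‖u + v‖ + ‖v‖ := by
        rw [hdecomp, ← Real.norm_eq_abs, ← norm_smul]
        exact norm_add_le _ _
    _ ≤ ε / 4 * 2 + ε / 2 := by gcongr
    _ = ε := by ring

lemma exists_norm_normPowSMul_add_sub_le (t : ℝ) {ε : ℝ} (hε : 0 < ε) :
    ∃ δ > 0, ∀ a b : E, ‖b‖ ≤ δ * ‖a‖ →
      ‖normPowSMul t (a + b) - normPowSMul t a‖ ≤ ε * ‖a‖ ^ (t - 1) := by
  obtain ⟨δ, hδ, hunit⟩ := exists_norm_normPowSMul_add_sub_le_of_norm_eq_one (E := E) t hε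
  refine ⟨δ, hδ, fun a b hb => ?_⟩
  rcases eq_or_ne a 0 with rfl | ha
  · have hb0 : b = 0 := norm_le_zero_iff.mp (by simpa using hb)
    rw [hb0, add_zero, sub_self, norm_zero]
    positivity
  have hr : 0 < ‖a‖ := norm_pos_iff.mpr ha
  set u := ‖a‖⁻¹ • a
  set v := ‖a‖⁻¹ • b
  have hu : ‖u‖ = 1 := norm_smul_inv_norm ha
  have hv : ‖v‖ ≤ δ := by
    rw [norm_smul, norm_inv, norm_norm, inv_mul_le_iff₀ hr, mul_comm]
    exact hb
  have hab : a + b = ‖a‖ • (u + v) := by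
    rw [smul_add, smul_inv_smul₀ hr.ne', smul_inv_smul₀ hr.ne']
  have ha' : a = ‖a‖ • u := (smul_inv_smul₀ hr.ne' a).symm
  calc ‖normPowSMul t (a + b) - normPowSMul t a‖
      = ‖normPowSMul t (‖a‖ • (u + v)) - normPowSMul t (‖a‖ • u)‖ := by rw [← hab, ← ha']
    _ = ‖a‖ ^ (t - 1) * ‖normPowSMul t (u + v) - normPowSMul t u‖ := by
        rw [normPowSMul_smul t hr, normPowSMul_smul t hr, ← smul_sub, norm_smul,
          norm_of_nonneg (rpow_nonneg hr.le _)]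
    _ ≤ ‖a‖ ^ (t - 1) * ε := by gcongr; exact hunit u v hu hv
    _ = ε * ‖a‖ ^ (t - 1) := mul_comm _ _

lemma norm_normPowSMul_add_sub_le_of_norm_le {t : ℝ} (ht : 1 < t) {K : ℝ} (hK : 0 ≤ K)
    {a b : E} (hab : ‖a‖ ≤ K * ‖b‖) :
    ‖normPowSMul t (a + b) - normPowSMul t a‖ ≤ 2 * (K + 1) ^ (t - 1) * ‖b‖ ^ (t - 1) := by
  have hpow : ∀ x : E, ‖x‖ ≤ (K + 1) * ‖b‖ →
      ‖normPowSMul t x‖ ≤ (K + 1) ^ (t - 1) * ‖b‖ ^ (t - 1) := fun x hx => by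
    rw [norm_normPowSMul ht.ne', ← mul_rpow (by positivity) (norm_nonneg b)]
    exact rpow_le_rpow (norm_nonneg x) hx (by linarith)
  have ha : ‖a‖ ≤ (K + 1) * ‖b‖ := hab.trans (by nlinarith [norm_nonneg b])
  have hab' : ‖a + b‖ ≤ (K + 1) * ‖b‖ := (norm_add_le a b).trans (by linarith)
  calc ‖normPowSMul t (a + b) - normPowSMul t a‖
      ≤ ‖normPowSMul t (a + b)‖ + ‖normPowSMul t a‖ := norm_sub_le _ _
    _ ≤ (K + 1) ^ (t - 1) * ‖b‖ ^ (t - 1) + (K + 1) ^ (t - 1) * ‖b‖ ^ (t - 1) :=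
        add_le_add (hpow _ hab') (hpow _ ha)
    _ = 2 * (K + 1) ^ (t - 1) * ‖b‖ ^ (t - 1) := by ring

end NormPowSMul

theorem stmt12 (N : ℕ) (t : ℝ) (ht : 1 < t) :
    ∀ ξ > (0:ℝ), ∃ C > (0:ℝ), ∀ a b : EuclideanSpace ℝ (Fin N),
      ‖(‖a + b‖ ^ (t - 2)) • (a + b) - (‖a‖ ^ (t - 2)) • a‖
        ≤ ξ * ‖a‖ ^ (t - 1) + C * ‖b‖ ^ (t - 1) := by
  intro ξ hξ
  obtain ⟨δ, hδ, hnear⟩ :=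
    exists_norm_normPowSMul_add_sub_le (E := EuclideanSpace ℝ (Fin N)) t hξ
  refine ⟨2 * (δ⁻¹ + 1) ^ (t - 1), by positivity, fun a b => ?_⟩
  change ‖normPowSMul t (a + b) - normPowSMul t a‖ ≤ _
  have hξa : 0 ≤ ξ * ‖a‖ ^ (t - 1) := by positivity
  have hCb : 0 ≤ 2 * (δ⁻¹ + 1) ^ (t - 1) * ‖b‖ ^ (t - 1) := by positivity
  rcases le_or_gt ‖b‖ (δ * ‖a‖) with hb | hb
  · linarith [hnear a b hb]
  · have ha : ‖a‖ ≤ δ⁻¹ * ‖b‖ := by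
      rw [← div_eq_inv_mul, le_div_iff₀ hδ, mul_comm]
      exact hb.le
    linarith [norm_normPowSMul_add_sub_le_of_norm_le ht (inv_nonneg.mpr hδ.le) ha]
end

section
/- For every real t > 1 and all real numbers x, y one has |x − y|^{t−2} (x − y)(x⁻ − y⁻) ≥ |x⁻ − y⁻|^t, where s⁻ = min(s, 0) denotes the negative part and |0|^{t−2}·0 is understood to be 0. -/
lemma stmt13_aux (t : ℝ) (ht : 1 < t) (x y : ℝ) (hxy : y ≤ x) :
    |min x 0 - min y 0| ^ t ≤ |x - y| ^ (t - 2) * (x - y) * (min x 0 - min y 0) := by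
  set a := x - y with ha
  set b := min x 0 - min y 0 with hb
  have hb0 : 0 ≤ b := sub_nonneg.mpr (min_le_min hxy le_rfl)
  have hba : b ≤ a := by
    simp only [hb, ha]
    rcases le_total x 0 with hx | hx <;> rcases le_total y 0 with hy | hy <;>
      simp [min_eq_left, min_eq_right, *] <;> linarith
  have ha0 : 0 ≤ a := le_trans hb0 hba
  rcases eq_or_lt_of_le ha0 with h | h
  · have hb' : b = 0 := le_antisymm (h ▸ hba) hb0
    rw [hb', ← h]
    simp [Real.zero_rpow (by linarith : t ≠ 0)]
  · rw [abs_of_pos h, abs_of_nonneg hb0]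
    have key : a ^ (t - 2) * a * b = a ^ (t - 1) * b := by
      rw [show a ^ (t-2) * a = a ^ (t-2) * a ^ (1:ℝ) by rw [Real.rpow_one],
        ← Real.rpow_add h]
      ring_nf
    rw [key]
    rcases eq_or_lt_of_le hb0 with hb' | hb'
    · rw [← hb', Real.zero_rpow (by linarith : t ≠ 0), mul_zero]
    · have : b ^ t = b ^ (t - 1) * b := by
        rw [show b ^ (t-1) * b = b ^ (t-1) * b ^ (1:ℝ) by rw [Real.rpow_one],
          ← Real.rpow_add hb']
        ring_nf
      rw [this]
      exact mul_le_mul_of_nonneg_right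
        (Real.rpow_le_rpow hb0 hba (by linarith)) hb0

theorem stmt13 (t : ℝ) (ht : 1 < t) (x y : ℝ) :
    |min x 0 - min y 0| ^ t ≤ |x - y| ^ (t - 2) * (x - y) * (min x 0 - min y 0) := by
  rcases le_total y x with h | h
  · exact stmt13_aux t ht x y h
  · have := stmt13_aux t ht y x h
    rw [abs_sub_comm y x, abs_sub_comm (min y 0)] at this
    calc |min x 0 - min y 0| ^ t ≤ |x - y| ^ (t-2) * (y - x) * (min y 0 - min x 0) := this
      _ = |x - y| ^ (t-2) * (x - y) * (min x 0 - min y 0) := by ring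
end
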